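/- arXiv:2508.19125 — 9 statements merged into one kernel-verified Lean document; each statement's English description precedes it below -/
import Mathlib

section
/- If γ1 = |γ2| (i.e. γ2 = γ1 or γ2 = −γ1), then the function G(θ) = ∫_{θ0}^{θ} h(s)/g(s) ds is strictly increasing on ℝ; moreover G(θ) → +∞ as θ → +∞ and G(θ) → −∞ as θ → −∞, so G is a bijection from ℝ onto ℝ (in particular G is invertible). -/
open Real Set Filter MeasureTheory

/-- For shear flows of nematic liquid crystals in the critical case
`γ1 = |γ2|`, the function `G(θ) = ∫_{θ0}^{θ} h(s)/g(s) ds` is strictly increasing on ℝ,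
tends to `+∞` at `+∞` and to `-∞` at `-∞`, and is a bijection of ℝ onto ℝ. -/
theorem stmt_0
    (α1 α2 α3 α4 α5 α6 K1 K3 γ1 γ2 Cbar θ0 : ℝ)
    (hγ1 : γ1 = α3 - α2) (hγ2 : γ2 = α6 - α5) (hγ1pos : 0 < γ1)
    (hK1 : 0 < K1) (hK3 : 0 < K3) (hCbar : 0 < Cbar)
    (g h c G : ℝ → ℝ)
    (hg : ∀ θ : ℝ, g θ = α1 * Real.sin θ ^ 2 * Real.cos θ ^ 2
        + (α5 - α2) / 2 * Real.sin θ ^ 2 + (α3 + α6) / 2 * Real.cos θ ^ 2 + α4 / 2)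
    (hh : ∀ θ : ℝ, h θ = (γ1 + γ2 * Real.cos (2 * θ)) / 2)
    (hc : ∀ θ : ℝ, c θ = Real.sqrt (K1 * Real.cos θ ^ 2 + K3 * Real.sin θ ^ 2))
    (hdamp : ∀ θ : ℝ, Cbar ≤ g θ - h θ ^ 2 / γ1 ∧ g θ - h θ ^ 2 / γ1 ≤ g θ)
    (hθ0 : h θ0 ≠ 0)
    (hG : ∀ θ : ℝ, G θ = ∫ s in θ0..θ, h s / g s)
    (hcase : γ2 = γ1 ∨ γ2 = -γ1) :
    StrictMono G ∧ Tendsto G atTop atTop ∧ Tendsto G atBot atBot ∧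
      Function.Bijective G := by
  set f : ℝ → ℝ := fun s => h s / g s with hf
  -- positivity of g
  have hgpos : ∀ θ, 0 < g θ := by
    intro θ
    have := hdamp θ
    linarith [this.1, this.2]
  -- fun_prop
  have hge : g = fun θ => α1 * Real.sin θ ^ 2 * Real.cos θ ^ 2
      + (α5 - α2) / 2 * Real.sin θ ^ 2 + (α3 + α6) / 2 * Real.cos θ ^ 2 + α4 / 2 :=
    funext hg
  have hhe : h = fun θ => (γ1 + γ2 * Real.cos (2 * θ)) / 2 := funext hh
  have hgc : Continuous g := by rw [hge]; fun_prop
  have hhc : Continuous h := by rw [hhe]; fun_prop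
  have hfc : Continuous f := hhc.div hgc fun x => (hgpos x).ne'
  have h_int : ∀ a b : ℝ, IntervalIntegrable f volume a b :=
    fun a b => hfc.intervalIntegrable a b
  -- a trig function q with h = γ1 * q^2 and countable zero set
  obtain ⟨q, hq, hqz⟩ : ∃ q : ℝ → ℝ, (∀ s, h s = γ1 * q s ^ 2) ∧ {x : ℝ | q x = 0}.Countable := by
    rcases hcase with hcase | hcase
    · refine ⟨Real.cos, fun s => ?_, ?_⟩
      · rw [hh s, hcase, Real.cos_two_mul]; ring
      · refine Set.Countable.mono ?_ (Set.countable_range fun k : ℤ => ((2 * k + 1) * π / 2 : ℝ))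
        intro x hx
        rcases Real.cos_eq_zero_iff.mp hx with ⟨k, hk⟩
        exact ⟨k, hk.symm⟩
    · refine ⟨Real.sin, fun s => ?_, ?_⟩
      · rw [hh s, hcase, Real.cos_two_mul']
        linear_combination (-(γ1/2)) * Real.sin_sq_add_cos_sq s
      · refine Set.Countable.mono ?_ (Set.countable_range fun n : ℤ => ((n : ℝ) * π : ℝ))
        intro x hx
        rcases Real.sin_eq_zero_iff.mp hx with ⟨n, hn⟩
        exact ⟨n, hn⟩
  have hfnonneg : ∀ s, 0 ≤ f s := by
    intro s
    have : 0 ≤ h s := by rw [hq s]; positivity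
    exact div_nonneg this (hgpos s).le
  -- support of f contains points where q ≠ 0
  have hsupp : ∀ x, q x ≠ 0 → f x ≠ 0 := by
    intro x hx
    have hpos : 0 < h x := by
      rw [hq x]; positivity
    exact (div_pos hpos (hgpos x)).ne'
  -- strict positivity of integrals
  have key : ∀ a b : ℝ, a < b → 0 < ∫ s in a..b, f s := by
    intro a b hab
    rw [intervalIntegral.integral_pos_iff_support_of_nonneg_ae
      (Eventually.of_forall hfnonneg) (h_int a b)]
    refine ⟨hab, ?_⟩
    have hsub : Ioc a b \ {x : ℝ | q x = 0} ⊆ Function.support f ∩ Ioc a b := by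
      intro x hx
      exact ⟨hsupp x hx.2, hx.1⟩
    have hmeas : volume (Ioc a b \ {x : ℝ | q x = 0}) = volume (Ioc a b) :=
      measure_diff_null (hqz.measure_zero volume)
    calc (0 : ENNReal) < volume (Ioc a b) := by
            rw [Real.volume_Ioc]
            simp [ENNReal.ofReal_pos, sub_pos, hab]
      _ = volume (Ioc a b \ {x : ℝ | q x = 0}) := hmeas.symm
      _ ≤ volume (Function.support f ∩ Ioc a b) := measure_mono hsub
  -- strict monotonicity
  have hmono : StrictMono G := by
    intro a b hab
    have : G b - G a = ∫ s in a..b, f s := by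
      rw [hG a, hG b, intervalIntegral.integral_interval_sub_left (h_int θ0 b) (h_int θ0 a)]
    linarith [key a b hab, this]
  -- periodicity of f
  have hper : Function.Periodic f π := by
    intro s
    have hsin : Real.sin (s + π) = -Real.sin s := by
      rw [Real.sin_add]; simp
    have hcos : Real.cos (s + π) = -Real.cos s := by
      rw [Real.cos_add]; simp
    have hhp : h (s + π) = h s := by
      rw [hh, hh]
      have : Real.cos (2 * (s + π)) = Real.cos (2 * s) := by
        rw [show 2 * (s + π) = 2 * s + 2 * π by ring, Real.cos_add_two_pi]
      rw [this]
    have hgp : g (s + π) = g s := by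
      rw [hg, hg, hsin, hcos]; ring
    show h (s + π) / g (s + π) = h s / g s
    rw [hhp, hgp]
  have hIpos : 0 < ∫ s in (0:ℝ)..π, f s := key 0 π Real.pi_pos
  have hGrepr : ∀ θ, G θ = (∫ s in (0:ℝ)..θ, f s) + (-∫ s in (0:ℝ)..θ0, f s) := by
    intro θ
    rw [hG θ, ← intervalIntegral.integral_interval_sub_left (h_int 0 θ) (h_int 0 θ0)]
    ring
  have htop : Tendsto G atTop atTop := by
    rw [funext hGrepr]
    exact (hper.tendsto_atTop_intervalIntegral_of_pos hIpos Real.pi_pos).atTop_add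
      tendsto_const_nhds
  have hbot : Tendsto G atBot atBot := by
    rw [funext hGrepr]
    exact (hper.tendsto_atBot_intervalIntegral_of_pos hIpos Real.pi_pos).atBot_add
      tendsto_const_nhds
  have hGc : Continuous G := by
    rw [funext hG]
    exact intervalIntegral.continuous_primitive h_int θ0
  exact ⟨hmono, htop, hbot, hmono.injective, hGc.surjective htop hbot⟩
end

section
/- For every β > 0 such that β ≠ −G(e) for every zero e of h, one has D(β) > 0. -/
open Real Set Filter MeasureTheory

theorem aux_pos (g h G F : ℝ → ℝ) (β : ℝ) (hβpos : 0 < β)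
    (gcont : Continuous g) (hcont : Continuous h)
    (gpos : ∀ θ, 0 < g θ) (hnonneg : ∀ θ, 0 ≤ h θ)
    (hGderiv : ∀ θ, HasDerivAt G (h θ / g θ) θ)
    (hF : Function.LeftInverse F G) (hF' : Function.RightInverse F G)
    (hzero : {θ : ℝ | h θ = 0}.Countable)
    (hapos : 0 < h (F (-β)))
    (p : ℝ → ℝ) (pcont : Continuous p) (ppos : ∀ θ, 0 < p θ) :
    0 < ∫ t in (0:ℝ)..β, p (F (t - β)) / h (F (t - β)) / Real.sqrt t := by
  set a := F (-β) with ha_def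
  set b := F 0 with hb_def
  have hGa : G a = -β := hF' _
  have hGb : G b = 0 := hF' _
  have gne : ∀ θ, g θ ≠ 0 := fun θ => (gpos θ).ne'
  have hGdiff : Differentiable ℝ G := fun θ => (hGderiv θ).differentiableAt
  have hGcont : Continuous G := hGdiff.continuous
  have hGmono : Monotone G := by
    apply monotone_of_deriv_nonneg hGdiff
    intro θ
    rw [(hGderiv θ).deriv]
    exact div_nonneg (hnonneg θ) (gpos θ).le
  have hGsm : StrictMono G := hGmono.strictMono_of_injective hF.injective
  have hab : a < b := by
    by_contra hle
    push_neg at hle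
    have := hGmono hle
    rw [hGa, hGb] at this
    linarith
  set φ : ℝ → ℝ := fun θ => G θ + β with hφ_def
  have hφsm : StrictMono φ := fun x y hxy => by simpa [hφ_def] using hGsm hxy
  have hφsurj : Function.Surjective φ := fun y => ⟨F (y - β), by simp [hφ_def, hF' (y - β)]⟩
  have himage : φ '' Ioo a b = Ioo (0:ℝ) β := by
    have := (StrictMono.orderIsoOfSurjective φ hφsm hφsurj).image_Ioo a b
    rw [StrictMono.coe_orderIsoOfSurjective] at this
    simpa [hφ_def, hGa, hGb] using this
  set ρ : ℝ → ℝ := fun t => p (F (t - β)) / h (F (t - β)) / Real.sqrt t with hρ_def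
  set ν : ℝ → ℝ := fun θ => p θ / g θ / Real.sqrt (G θ + β) with hν_def
  -- change of variables
  have key : ∫ t in Ioo (0:ℝ) β, ρ t = ∫ θ in Ioo a b, |h θ / g θ| • ρ (φ θ) := by
    rw [← himage]
    exact integral_image_eq_integral_abs_deriv_smul measurableSet_Ioo
      (fun θ _ => ((hGderiv θ).add_const β).hasDerivWithinAt) hφsm.injective.injOn ρ
  -- a.e. congruence to ν
  have hnull : volume {θ : ℝ | h θ = 0} = 0 := hzero.measure_zero _
  have hae : ∀ᵐ θ : ℝ, h θ ≠ 0 := by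
    rw [ae_iff]
    simpa using hnull
  have key2 : ∫ θ in Ioo a b, |h θ / g θ| • ρ (φ θ) = ∫ θ in Ioo a b, ν θ := by
    apply setIntegral_congr_ae measurableSet_Ioo
    filter_upwards [hae] with θ hθne hθmem
    have hGθ : 0 < G θ + β := by
      have := hGsm hθmem.1
      rw [hGa] at this
      linarith
    have hsq : Real.sqrt (G θ + β) ≠ 0 := (Real.sqrt_pos.2 hGθ).ne'
    have hFGθ : F (G θ) = θ := hF θ
    simp only [hρ_def, hν_def, hφ_def, smul_eq_mul, add_sub_cancel_right, hFGθ,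
      abs_of_nonneg (div_nonneg (hnonneg θ) (gpos θ).le)]
    field_simp
  -- bounds on [a, b]
  obtain ⟨θM, hθMmem, hθM'⟩ := isCompact_Icc.exists_isMaxOn (nonempty_Icc.2 hab.le)
    gcont.continuousOn
  have hθM : ∀ s ∈ Icc a b, g s ≤ g θM := fun s hs => isMaxOn_iff.1 hθM' s hs
  obtain ⟨θP, hθPmem, hθP'⟩ := isCompact_Icc.exists_isMaxOn (nonempty_Icc.2 hab.le)
    pcont.continuousOn
  have hθP : ∀ s ∈ Icc a b, p s ≤ p θP := fun s hs => isMaxOn_iff.1 hθP' s hs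
  obtain ⟨θm, hθmmem, hθm'⟩ := isCompact_Icc.exists_isMinOn (nonempty_Icc.2 hab.le)
    gcont.continuousOn
  have hθm : ∀ s ∈ Icc a b, g θm ≤ g s := fun s hs => isMinOn_iff.1 hθm' s hs
  set M := g θM with hM_def
  set P := p θP with hP_def
  set m := g θm with hm_def
  have hMpos : 0 < M := gpos θM
  have hPpos : 0 < P := ppos θP
  have hmpos : 0 < m := gpos θm
  -- δ such that h ≥ h a / 2 near a
  obtain ⟨δ, δpos, hδ⟩ := Metric.continuousAt_iff.1 hcont.continuousAt (h a / 2)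
    (by linarith)
  have hha : ∀ s ∈ Icc a (a + δ / 2), h a / 2 ≤ h s := by
    intro s hs
    have hdist : dist s a < δ := by
      rw [Real.dist_eq, abs_of_nonneg (by linarith [hs.1])]
      linarith [hs.2]
    have := hδ hdist
    rw [Real.dist_eq, abs_lt] at this
    linarith [this.1]
  -- fundamental theorem
  have hGint : ∀ x y : ℝ, ∫ s in x..y, h s / g s = G y - G x := fun x y =>
    intervalIntegral.integral_eq_sub_of_hasDerivAt (fun θ _ => hGderiv θ)
      ((hcont.div gcont gne).intervalIntegrable x y)
  set cK : ℝ := h a / 2 / M * min 1 (δ / 2 / (b - a)) with hcK_def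
  have hcKpos : 0 < cK := by
    apply mul_pos (by positivity)
    apply lt_min one_pos
    apply div_pos (by positivity) (by linarith)
  -- key lower bound
  have hlow : ∀ θ ∈ Ioo a b, cK * (θ - a) ≤ G θ + β := by
    intro θ hθ
    set a' := min θ (a + δ / 2) with ha'_def
    have ha'1 : a ≤ a' := le_min hθ.1.le (by linarith)
    have ha'2 : a' ≤ θ := min_le_left _ _
    have ha'3 : a' ≤ a + δ / 2 := min_le_right _ _
    have hint1 : IntervalIntegrable (fun s => h s / g s) volume a a' :=
      (hcont.div gcont gne).intervalIntegrable _ _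
    have hint2 : IntervalIntegrable (fun s => h s / g s) volume a' θ :=
      (hcont.div gcont gne).intervalIntegrable _ _
    have hsplit : G θ + β = (∫ s in a..a', h s / g s) + ∫ s in a'..θ, h s / g s := by
      rw [intervalIntegral.integral_add_adjacent_intervals hint1 hint2, hGint, hGa]
      ring
    have hsecond : 0 ≤ ∫ s in a'..θ, h s / g s :=
      intervalIntegral.integral_nonneg ha'2
        (fun s _ => div_nonneg (hnonneg s) (gpos s).le)
    have hfirst : h a / 2 / M * (a' - a) ≤ ∫ s in a..a', h s / g s := by
      have hmono := intervalIntegral.integral_mono_on ha'1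
        (intervalIntegrable_const (c := h a / 2 / M)) hint1 ?_
      · rw [intervalIntegral.integral_const, smul_eq_mul] at hmono
        linarith [hmono]
      · intro s hs
        have hs1 : s ∈ Icc a (a + δ / 2) := ⟨hs.1, le_trans hs.2 ha'3⟩
        have hs2 : s ∈ Icc a b := ⟨hs.1, le_trans hs.2 (le_trans ha'2 hθ.2.le)⟩
        exact div_le_div₀ (hnonneg s) (hha s hs1) (gpos s) (hθM s hs2)
    have ha'low : min 1 (δ / 2 / (b - a)) * (θ - a) ≤ a' - a := by
      rcases le_total θ (a + δ / 2) with hc | hc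
      · have : a' = θ := min_eq_left hc
        rw [this]
        nlinarith [min_le_left (1:ℝ) (δ / 2 / (b - a)), hθ.1,
          (lt_min one_pos (div_pos (by positivity : (0:ℝ) < δ / 2) (by linarith : (0:ℝ) < b - a)) : (0:ℝ) < min 1 (δ / 2 / (b - a)))]
      · have : a' = a + δ / 2 := min_eq_right hc
        rw [this]
        have h1 : min 1 (δ / 2 / (b - a)) ≤ δ / 2 / (b - a) := min_le_right _ _
        have h2 : (0:ℝ) < b - a := by linarith
        have h3 : θ - a ≤ b - a := by linarith [hθ.2]
        have h4 : min 1 (δ / 2 / (b - a)) * (θ - a) ≤ δ / 2 / (b - a) * (b - a) := by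
          apply mul_le_mul h1 h3 (by linarith [hθ.1]) (by positivity)
        rw [div_mul_cancel₀] at h4
        · linarith
        · linarith
    calc cK * (θ - a) = h a / 2 / M * (min 1 (δ / 2 / (b - a)) * (θ - a)) := by
          rw [hcK_def]; ring
      _ ≤ h a / 2 / M * (a' - a) := by
          apply mul_le_mul_of_nonneg_left ha'low (by positivity)
      _ ≤ ∫ s in a..a', h s / g s := hfirst
      _ ≤ G θ + β := by rw [hsplit]; linarith
  -- integrability of ν on Ioo a b
  set C : ℝ := P / (m * Real.sqrt cK) with hC_def
  have hCpos : 0 < C := by positivity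
  have hBint : IntegrableOn (fun θ : ℝ => C * (θ - a) ^ (-(1/2) : ℝ)) (Ioo a b) := by
    have h1 : IntervalIntegrable (fun x : ℝ => x ^ (-(1/2) : ℝ)) volume 0 (b - a) :=
      intervalIntegral.intervalIntegrable_rpow' (by norm_num)
    have h2 := h1.comp_sub_right a
    have h3 : IntervalIntegrable (fun x : ℝ => (x - a) ^ (-(1/2) : ℝ)) volume a b := by
      convert h2 using 2 <;> ring
    have h4 : IntegrableOn (fun x : ℝ => (x - a) ^ (-(1/2) : ℝ)) (Ioo a b) := by
      have := (intervalIntegrable_iff_integrableOn_Ioo_of_le hab.le).1 h3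
      exact this
    exact h4.const_mul C
  have hνcont : ContinuousOn ν (Ioo a b) := by
    apply ContinuousOn.div
    · exact (pcont.continuousOn.div gcont.continuousOn (fun θ _ => gne θ))
    · exact ((hGcont.add continuous_const).sqrt).continuousOn
    · intro θ hθ
      have hGθ : 0 < G θ + β := by
        have := hGsm hθ.1
        rw [hGa] at this; linarith
      exact (Real.sqrt_pos.2 hGθ).ne'
  have hνint : IntegrableOn ν (Ioo a b) := by
    apply Integrable.mono' hBint (hνcont.aestronglyMeasurable measurableSet_Ioo)
    rw [ae_restrict_iff' measurableSet_Ioo]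
    apply ae_of_all
    intro θ hθ
    have hθa : 0 < θ - a := by linarith [hθ.1]
    have hGθ : 0 < G θ + β := by
      have := hGsm hθ.1
      rw [hGa] at this; linarith
    have hsqle : Real.sqrt (cK * (θ - a)) ≤ Real.sqrt (G θ + β) :=
      Real.sqrt_le_sqrt (hlow θ hθ)
    have hsqpos : 0 < Real.sqrt (cK * (θ - a)) := Real.sqrt_pos.2 (by positivity)
    have hθmem : θ ∈ Icc a b := ⟨hθ.1.le, hθ.2.le⟩
    have hnorm : ‖ν θ‖ = ν θ := by
      rw [Real.norm_eq_abs, abs_of_nonneg]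
      exact div_nonneg (div_nonneg (ppos θ).le (gpos θ).le) (Real.sqrt_nonneg _)
    rw [hnorm]
    have step1 : ν θ ≤ P / m / Real.sqrt (cK * (θ - a)) := by
      apply div_le_div₀ (by positivity) ?_ hsqpos hsqle
      exact div_le_div₀ hPpos.le (hθP θ hθmem) hmpos (hθm θ hθmem)
    have step2 : P / m / Real.sqrt (cK * (θ - a)) = C * (θ - a) ^ (-(1/2) : ℝ) := by
      rw [Real.sqrt_mul hcKpos.le, hC_def,
        Real.rpow_neg hθa.le, ← Real.sqrt_eq_rpow]
      field_simp
      try ring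
      try tauto
    linarith [step1, step2 ▸ step1]
  -- positivity
  have hνnonneg : 0 ≤ᵐ[volume.restrict (Ioo a b)] ν :=
    ae_of_all _ fun θ =>
      div_nonneg (div_nonneg (ppos θ).le (gpos θ).le) (Real.sqrt_nonneg _)
  have hpos : 0 < ∫ θ in Ioo a b, ν θ := by
    rw [setIntegral_pos_iff_support_of_nonneg_ae hνnonneg hνint]
    have hsub : Ioo a b ⊆ Function.support ν ∩ Ioo a b := by
      intro θ hθ
      refine ⟨?_, hθ⟩
      have hGθ : 0 < G θ + β := by
        have := hGsm hθ.1
        rw [hGa] at this; linarith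
      have : 0 < ν θ := by
        apply div_pos (div_pos (ppos θ) (gpos θ)) (Real.sqrt_pos.2 hGθ)
      exact this.ne'
    calc (0:ENNReal) < volume (Ioo a b) := by
          rw [Real.volume_Ioo]
          simp [ENNReal.ofReal_pos, hab]
      _ ≤ volume (Function.support ν ∩ Ioo a b) := measure_mono hsub
  -- assemble
  rw [intervalIntegral.integral_of_le hβpos.le, integral_Ioc_eq_integral_Ioo]
  calc (0:ℝ) < ∫ θ in Ioo a b, ν θ := hpos
    _ = ∫ θ in Ioo a b, |h θ / g θ| • ρ (φ θ) := key2.symm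
    _ = ∫ t in Ioo (0:ℝ) β, ρ t := key.symm

/-- For every `β > 0` with `β ≠ -G(e)` for every zero `e` of `h`,
one has `D(β) > 0`. -/
theorem stmt_1
    (α1 α2 α3 α4 α5 α6 K1 K3 γ1 γ2 Cbar θ0 : ℝ)
    (hγ1 : γ1 = α3 - α2) (hγ2 : γ2 = α6 - α5) (hγ1pos : 0 < γ1)
    (hK1 : 0 < K1) (hK3 : 0 < K3) (hCbar : 0 < Cbar)
    (g h c G : ℝ → ℝ)
    (hg : ∀ θ : ℝ, g θ = α1 * Real.sin θ ^ 2 * Real.cos θ ^ 2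
        + (α5 - α2) / 2 * Real.sin θ ^ 2 + (α3 + α6) / 2 * Real.cos θ ^ 2 + α4 / 2)
    (hh : ∀ θ : ℝ, h θ = (γ1 + γ2 * Real.cos (2 * θ)) / 2)
    (hc : ∀ θ : ℝ, c θ = Real.sqrt (K1 * Real.cos θ ^ 2 + K3 * Real.sin θ ^ 2))
    (hdamp : ∀ θ : ℝ, Cbar ≤ g θ - h θ ^ 2 / γ1 ∧ g θ - h θ ^ 2 / γ1 ≤ g θ)
    (hθ0 : h θ0 ≠ 0)
    (hG : ∀ θ : ℝ, G θ = ∫ s in θ0..θ, h s / g s)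
    (hcase : γ2 = γ1 ∨ γ2 = -γ1)
    (F D : ℝ → ℝ)
    (hF : Function.LeftInverse F G) (hF' : Function.RightInverse F G)
    (hD : ∀ β : ℝ, D β =
      (∫ t in (0:ℝ)..β, c (F (t - β)) * g (F (t - β)) / h (F (t - β)) / Real.sqrt t) *
      (∫ t in (0:ℝ)..β, c (F (t - β)) / h (F (t - β)) / Real.sqrt t))
    (β : ℝ) (hβpos : 0 < β) (hβ : ∀ e : ℝ, h e = 0 → β ≠ -G e) :
    0 < D β := by
  have gpos : ∀ θ, 0 < g θ := fun θ => by
    have := hdamp θ; linarith [this.1, this.2]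
  have hnonneg : ∀ θ, 0 ≤ h θ := fun θ => by
    rw [hh θ]
    rcases hcase with h1 | h1 <;> subst h1 <;>
      nlinarith [Real.neg_one_le_cos (2 * θ), Real.cos_le_one (2 * θ)]
  have gcont : Continuous g := by
    have : g = fun θ => α1 * Real.sin θ ^ 2 * Real.cos θ ^ 2
        + (α5 - α2) / 2 * Real.sin θ ^ 2 + (α3 + α6) / 2 * Real.cos θ ^ 2 + α4 / 2 :=
      funext hg
    rw [this]
    exact ((((continuous_const.mul (Real.continuous_sin.pow 2)).mul
      (Real.continuous_cos.pow 2)).add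
      (continuous_const.mul (Real.continuous_sin.pow 2))).add
      (continuous_const.mul (Real.continuous_cos.pow 2))).add continuous_const
  have hcont : Continuous h := by
    have : h = fun θ => (γ1 + γ2 * Real.cos (2 * θ)) / 2 := funext hh
    rw [this]
    exact (continuous_const.add (continuous_const.mul
      (Real.continuous_cos.comp (continuous_const.mul continuous_id)))).div_const 2
  have ccont : Continuous c := by
    have : c = fun θ => Real.sqrt (K1 * Real.cos θ ^ 2 + K3 * Real.sin θ ^ 2) := funext hc
    rw [this]
    exact (((continuous_const.mul (Real.continuous_cos.pow 2)).add
      (continuous_const.mul (Real.continuous_sin.pow 2)))).sqrt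
  have cpos : ∀ θ, 0 < c θ := fun θ => by
    rw [hc θ]
    apply Real.sqrt_pos.2
    rcases le_total K1 K3 with hle | hle <;>
      nlinarith [Real.sin_sq_add_cos_sq θ, sq_nonneg (Real.sin θ), sq_nonneg (Real.cos θ)]
  have gne : ∀ θ, g θ ≠ 0 := fun θ => (gpos θ).ne'
  have hGderiv : ∀ θ, HasDerivAt G (h θ / g θ) θ := by
    have hGeq : G = fun θ => ∫ s in θ0..θ, h s / g s := funext hG
    intro θ
    rw [hGeq]
    exact ((hcont.div gcont gne).integral_hasStrictDerivAt θ0 θ).hasDerivAt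
  have hzero : {θ : ℝ | h θ = 0}.Countable := by
    have hcosval : ∀ θ : ℝ, h θ = 0 → Real.sin (2 * θ) = 0 := by
      intro θ hθ
      rw [hh θ] at hθ
      have hcossq : Real.cos (2 * θ) ^ 2 = 1 := by
        rcases hcase with h1 | h1
        · have h2 : γ1 * (1 + Real.cos (2 * θ)) = 0 := by
            rw [h1] at hθ; linear_combination 2 * hθ
          have h3 := (mul_eq_zero.mp h2).resolve_left hγ1pos.ne'
          nlinarith
        · have h2 : γ1 * (1 - Real.cos (2 * θ)) = 0 := by
            rw [h1] at hθ; linear_combination 2 * hθ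
          have h3 := (mul_eq_zero.mp h2).resolve_left hγ1pos.ne'
          nlinarith
      have hsinsq : Real.sin (2 * θ) ^ 2 = 0 := by
        nlinarith [Real.sin_sq_add_cos_sq (2 * θ)]
      exact pow_eq_zero_iff (by norm_num : (2:ℕ) ≠ 0) |>.mp hsinsq
    have hsub : {θ : ℝ | h θ = 0} ⊆ (fun θ : ℝ => 2 * θ) ⁻¹' {x | Real.sin x = 0} := by
      intro θ hθ
      exact hcosval θ hθ
    apply Set.Countable.mono hsub
    apply Set.Countable.preimage
    · have : {x : ℝ | Real.sin x = 0} = Set.range (fun n : ℤ => (n : ℝ) * Real.pi) := by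
        ext x
        simp only [mem_setOf_eq, Set.mem_range, Real.sin_eq_zero_iff]
      rw [this]
      exact Set.countable_range _
    · intro x y hxy
      have : (2:ℝ) * x = 2 * y := hxy
      linarith
  have hapos : 0 < h (F (-β)) := by
    rcases eq_or_lt_of_le (hnonneg (F (-β))) with h0 | h0
    · exfalso
      exact hβ (F (-β)) h0.symm (by rw [hF' (-β)]; ring)
    · exact h0
  rw [hD β]
  apply mul_pos
  · exact aux_pos g h G F β hβpos gcont hcont gpos hnonneg hGderiv hF hF' hzero hapos
      (fun θ => c θ * g θ) (ccont.mul gcont) (fun θ => mul_pos (cpos θ) (gpos θ))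
  · exact aux_pos g h G F β hβpos gcont hcont gpos hnonneg hGderiv hF hF' hzero hapos
      c ccont cpos
end

section
/- D(β) → 0 as β → 0 from the right, i.e. the limit of D along the filter of neighborhoods of 0 within (0, ∞) is 0. -/
open Real Set Filter MeasureTheory

/-- Auxiliary: bound an interval integral of `φ t / √t` by `2 M √β` when `|φ| ≤ M` on `(0,β]`. -/
lemma aux_sqrt_bound (β M : ℝ) (hβ : 0 < β) (hM : 0 ≤ M) (φ : ℝ → ℝ)
    (hφ : ∀ t ∈ Set.Ioc (0:ℝ) β, |φ t| ≤ M) :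
    ‖∫ t in (0:ℝ)..β, φ t / Real.sqrt t‖ ≤ 2 * M * Real.sqrt β := by
  have hbound : IntervalIntegrable (fun t : ℝ => M * t ^ (-(1/2) : ℝ)) volume 0 β :=
    (intervalIntegral.intervalIntegrable_rpow' (by norm_num)).const_mul M
  have hae : ∀ᵐ t ∂(volume.restrict (Set.uIoc (0:ℝ) β)),
      ‖φ t / Real.sqrt t‖ ≤ M * t ^ (-(1/2) : ℝ) := by
    rw [Set.uIoc_of_le hβ.le]
    refine (ae_restrict_iff' measurableSet_Ioc).2 (Filter.Eventually.of_forall ?_)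
    intro t ht
    have ht0 : 0 < t := ht.1
    have hsqrt : Real.sqrt t = t ^ ((1/2) : ℝ) := Real.sqrt_eq_rpow t
    have hrpos : 0 < t ^ ((1/2) : ℝ) := Real.rpow_pos_of_pos ht0 _
    rw [Real.norm_eq_abs, abs_div, hsqrt, abs_of_pos hrpos, div_eq_mul_inv,
      ← Real.rpow_neg ht0.le]
    exact mul_le_mul_of_nonneg_right (hφ t ht) (Real.rpow_nonneg ht0.le _)
  have h1 : ‖∫ t in (0:ℝ)..β, φ t / Real.sqrt t‖
      ≤ |∫ t in (0:ℝ)..β, M * t ^ (-(1/2) : ℝ)| :=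
    intervalIntegral.norm_integral_le_abs_of_norm_le hae hbound
  have h2 : (∫ t in (0:ℝ)..β, M * t ^ (-(1/2) : ℝ)) = 2 * M * Real.sqrt β := by
    rw [intervalIntegral.integral_const_mul, integral_rpow (Or.inl (by norm_num))]
    have : (-(1/2) : ℝ) + 1 = 1/2 := by norm_num
    rw [this, Real.zero_rpow (by norm_num), Real.sqrt_eq_rpow]
    ring
  rw [h2] at h1
  have : |2 * M * Real.sqrt β| = 2 * M * Real.sqrt β := by
    exact abs_of_nonneg (by positivity)
  rwa [this] at h1

/-- `D(β) → 0` as `β → 0⁺`. -/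
theorem stmt_2
    (α1 α2 α3 α4 α5 α6 K1 K3 γ1 γ2 Cbar θ0 : ℝ)
    (hγ1 : γ1 = α3 - α2) (hγ2 : γ2 = α6 - α5) (hγ1pos : 0 < γ1)
    (hK1 : 0 < K1) (hK3 : 0 < K3) (hCbar : 0 < Cbar)
    (g h c G : ℝ → ℝ)
    (hg : ∀ θ : ℝ, g θ = α1 * Real.sin θ ^ 2 * Real.cos θ ^ 2
        + (α5 - α2) / 2 * Real.sin θ ^ 2 + (α3 + α6) / 2 * Real.cos θ ^ 2 + α4 / 2)
    (hh : ∀ θ : ℝ, h θ = (γ1 + γ2 * Real.cos (2 * θ)) / 2)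
    (hc : ∀ θ : ℝ, c θ = Real.sqrt (K1 * Real.cos θ ^ 2 + K3 * Real.sin θ ^ 2))
    (hdamp : ∀ θ : ℝ, Cbar ≤ g θ - h θ ^ 2 / γ1 ∧ g θ - h θ ^ 2 / γ1 ≤ g θ)
    (hθ0 : h θ0 ≠ 0)
    (hG : ∀ θ : ℝ, G θ = ∫ s in θ0..θ, h s / g s)
    (hcase : γ2 = γ1 ∨ γ2 = -γ1)
    (F D : ℝ → ℝ)
    (hF : Function.LeftInverse F G) (hF' : Function.RightInverse F G)
    (hD : ∀ β : ℝ, D β =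
      (∫ t in (0:ℝ)..β, c (F (t - β)) * g (F (t - β)) / h (F (t - β)) / Real.sqrt t) *
      (∫ t in (0:ℝ)..β, c (F (t - β)) / h (F (t - β)) / Real.sqrt t))
    :
    Tendsto D (nhdsWithin 0 (Set.Ioi (0:ℝ))) (nhds 0) := by
  -- basic positivity facts
  have hgC : ∀ θ, Cbar ≤ g θ := fun θ => (hdamp θ).1.trans (hdamp θ).2
  have hgpos : ∀ θ, 0 < g θ := fun θ => hCbar.trans_le (hgC θ)
  have hhnn : ∀ θ, 0 ≤ h θ := by
    intro θ
    rw [hh]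
    rcases hcase with rfl | rfl
    · nlinarith [Real.neg_one_le_cos (2 * θ), Real.cos_le_one (2 * θ)]
    · nlinarith [Real.neg_one_le_cos (2 * θ), Real.cos_le_one (2 * θ)]
  -- continuity of the basic functions
  have hgcont : Continuous g := by
    have : g = fun θ : ℝ => α1 * Real.sin θ ^ 2 * Real.cos θ ^ 2
        + (α5 - α2) / 2 * Real.sin θ ^ 2 + (α3 + α6) / 2 * Real.cos θ ^ 2 + α4 / 2 :=
      funext hg
    rw [this]; fun_prop
  have hhcont : Continuous h := by
    have : h = fun θ : ℝ => (γ1 + γ2 * Real.cos (2 * θ)) / 2 := funext hh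
    rw [this]; fun_prop
  have hccont : Continuous c := by
    have : c = fun θ : ℝ => Real.sqrt (K1 * Real.cos θ ^ 2 + K3 * Real.sin θ ^ 2) :=
      funext hc
    rw [this]; fun_prop
  have hqcont : Continuous fun s => h s / g s :=
    hhcont.div hgcont fun s => (hgpos s).ne'
  have hint : ∀ a b : ℝ, IntervalIntegrable (fun s => h s / g s) volume a b :=
    fun a b => hqcont.intervalIntegrable a b
  -- G is monotone, hence (being injective and surjective) a continuous order iso
  have hGmono : Monotone G := by
    intro a b hab
    have hnn : 0 ≤ ∫ s in a..b, h s / g s :=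
      intervalIntegral.integral_nonneg hab fun s _ => div_nonneg (hhnn s) (hgpos s).le
    have hsplit := intervalIntegral.integral_add_adjacent_intervals
      (hint θ0 a) (hint a b)
    rw [hG a, hG b, ← hsplit]
    linarith
  have hGsm : StrictMono G := hGmono.strictMono_of_injective hF.injective
  have hGsurj : Function.Surjective G := hF'.surjective
  set e := StrictMono.orderIsoOfSurjective G hGsm hGsurj with he
  have hFe : F = ⇑e.symm := by
    funext y
    have h1 : G (F y) = y := hF' y
    have h2 : G (e.symm y) = y := StrictMono.orderIsoOfSurjective_self_symm_apply G hGsm hGsurj y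
    exact hGsm.injective (h1.trans h2.symm)
  have hFcont : Continuous F := by rw [hFe]; exact OrderIso.continuous e.symm
  -- F 0 = θ0 and h θ0 > 0
  have hGθ0 : G θ0 = 0 := by rw [hG, intervalIntegral.integral_same]
  have hF0 : F 0 = θ0 := by rw [← hGθ0]; exact hF θ0
  have hhθ0pos : 0 < h θ0 := (hhnn θ0).lt_of_ne (Ne.symm hθ0)
  set m := h θ0 / 2 with hm
  have hmpos : 0 < m := by positivity
  -- find δ such that h (F u) > m for |u| < δ
  have hhF : Continuous fun u => h (F u) := hhcont.comp hFcont
  obtain ⟨δ, hδpos, hδ⟩ : ∃ δ > 0, ∀ u : ℝ, |u| < δ → m < h (F u) := by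
    have hval : m < h (F 0) := by rw [hF0, hm]; linarith
    have hev : ∀ᶠ u in nhds (0:ℝ), m < h (F u) :=
      (hhF.tendsto 0).eventually (eventually_gt_nhds hval)
    rw [Metric.eventually_nhds_iff] at hev
    obtain ⟨ε, hε, hball⟩ := hev
    exact ⟨ε, hε, fun u hu => hball (by simpa [Real.dist_eq] using hu)⟩
  -- global bounds for c and g
  set Mc := Real.sqrt (K1 + K3) with hMc
  have hcb : ∀ θ, 0 ≤ c θ ∧ c θ ≤ Mc := by
    intro θ
    rw [hc, hMc]
    constructor
    · exact Real.sqrt_nonneg _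
    · apply Real.sqrt_le_sqrt
      nlinarith [Real.sin_sq_le_one θ, Real.cos_sq_le_one θ, Real.sin_sq_add_cos_sq θ]
  set Mg := |α1| + |α5 - α2| / 2 + |α3 + α6| / 2 + |α4| / 2 with hMg
  have hgb : ∀ θ, g θ ≤ Mg := by
    intro θ
    have hsc : Real.sin θ ^ 2 * Real.cos θ ^ 2 ≤ 1 := by
      nlinarith [Real.sin_sq_le_one θ, Real.cos_sq_le_one θ, sq_nonneg (Real.sin θ),
        sq_nonneg (Real.cos θ)]
    have hscnn : 0 ≤ Real.sin θ ^ 2 * Real.cos θ ^ 2 :=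
      mul_nonneg (sq_nonneg _) (sq_nonneg _)
    rw [hg, hMg]
    nlinarith [le_abs_self α1, neg_abs_le α1, le_abs_self (α5 - α2), neg_abs_le (α5 - α2),
      le_abs_self (α3 + α6), neg_abs_le (α3 + α6), le_abs_self α4, neg_abs_le α4,
      Real.sin_sq_le_one θ, Real.cos_sq_le_one θ, sq_nonneg (Real.sin θ), sq_nonneg (Real.cos θ),
      abs_nonneg α1]
  have hMcnn : 0 ≤ Mc := Real.sqrt_nonneg _
  have hMgpos : 0 < Mg := lt_of_lt_of_le (hgpos 0) (hgb 0)
  set M1 := Mc * Mg / m with hM1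
  set M2 := Mc / m with hM2
  have hM1nn : 0 ≤ M1 := by positivity
  have hM2nn : 0 ≤ M2 := by positivity
  -- the squeezing function
  have key : ∀ᶠ β in nhdsWithin 0 (Set.Ioi (0:ℝ)),
      ‖D β‖ ≤ (2 * M1 * Real.sqrt β) * (2 * M2 * Real.sqrt β) := by
    filter_upwards [Ioo_mem_nhdsGT_of_mem (⟨le_refl (0:ℝ), hδpos⟩ : (0:ℝ) ∈ Set.Ico 0 δ)]
      with β hβ
    obtain ⟨hβ0, hβδ⟩ := hβ
    -- pointwise bounds on the integrands
    have hmem : ∀ t ∈ Set.Ioc (0:ℝ) β, m < h (F (t - β)) := by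
      intro t ht
      apply hδ
      rw [abs_sub_lt_iff]
      constructor <;> linarith [ht.1, ht.2]
    have hb1 : ∀ t ∈ Set.Ioc (0:ℝ) β,
        |c (F (t - β)) * g (F (t - β)) / h (F (t - β))| ≤ M1 := by
      intro t ht
      have hh' := hmem t ht
      have hnum : c (F (t - β)) * g (F (t - β)) ≤ Mc * Mg :=
        mul_le_mul (hcb _).2 (hgb _) (hgpos _).le hMcnn
      have hnumnn : 0 ≤ c (F (t - β)) * g (F (t - β)) :=
        mul_nonneg (hcb _).1 (hgpos _).le
      rw [abs_of_nonneg (div_nonneg hnumnn (hmpos.trans hh').le), hM1]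
      exact div_le_div₀ (by positivity) hnum hmpos hh'.le
    have hb2 : ∀ t ∈ Set.Ioc (0:ℝ) β, |c (F (t - β)) / h (F (t - β))| ≤ M2 := by
      intro t ht
      have hh' := hmem t ht
      rw [abs_of_nonneg (div_nonneg (hcb _).1 (hmpos.trans hh').le), hM2]
      exact div_le_div₀ hMcnn (hcb _).2 hmpos hh'.le
    have hI1 := aux_sqrt_bound β M1 hβ0 hM1nn
      (fun t => c (F (t - β)) * g (F (t - β)) / h (F (t - β))) hb1
    have hI2 := aux_sqrt_bound β M2 hβ0 hM2nn
      (fun t => c (F (t - β)) / h (F (t - β))) hb2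
    rw [hD β, norm_mul]
    exact mul_le_mul hI1 hI2 (norm_nonneg _) (by positivity)
  -- the squeezing function tends to 0
  have htend : Tendsto (fun β : ℝ => (2 * M1 * Real.sqrt β) * (2 * M2 * Real.sqrt β))
      (nhdsWithin 0 (Set.Ioi (0:ℝ))) (nhds 0) := by
    have hcont : Continuous fun β : ℝ => (2 * M1 * Real.sqrt β) * (2 * M2 * Real.sqrt β) := by
      fun_prop
    have h0 : (2 * M1 * Real.sqrt 0) * (2 * M2 * Real.sqrt 0) = 0 := by
      simp
    have := hcont.tendsto 0
    rw [h0] at this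
    exact this.mono_left nhdsWithin_le_nhds
  exact squeeze_zero_norm' key htend
end

section
/- Let e be a zero of h with e < θ0. Then ∫_a^{θ0} c(z)/√(G(z) − G(a)) dz → +∞ as a → e within (e, θ0), and likewise ∫_a^{θ0} c(z)/(g(z)√(G(z) − G(a))) dz → +∞ as a → e within (e, θ0). -/
open Real Set Filter MeasureTheory

lemma key_div (e e₁ θ0 C : ℝ) (he₁ : e < e₁) (h₁ : e₁ ≤ θ0) (hC : 0 < C)
    (f : ℝ → ℝ → ℝ)
    (hint : ∀ a ∈ Set.Ioo e e₁, IntervalIntegrable (f a) volume a θ0)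
    (hlow : ∀ a ∈ Set.Ioo e e₁, ∀ z ∈ Set.Ioc a θ0, C * (z - e) ^ (-(3/2) : ℝ) ≤ f a z) :
    Tendsto (fun a => ∫ z in a..θ0, f a z) (nhdsWithin e (Set.Ioo e θ0)) atTop := by
  have heθ0 : e < θ0 := lt_of_lt_of_le he₁ h₁
  set φ : ℝ → ℝ := fun a => (C * 2) * ((a - e) ^ (-(1/2) : ℝ) + (-((θ0 - e) ^ (-(1/2) : ℝ))))
    with hφ
  have hA : Tendsto φ (nhdsWithin e (Set.Ioo e θ0)) atTop := by
    have h0 : Tendsto (fun a : ℝ => Real.sqrt (a - e)) (nhdsWithin e (Set.Ioo e θ0))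
        (nhdsWithin 0 (Set.Ioi 0)) := by
      apply tendsto_nhdsWithin_of_tendsto_nhds_of_eventually_within
      · have hcont : Continuous fun a : ℝ => Real.sqrt (a - e) :=
          (continuous_id.sub continuous_const).sqrt
        have := (hcont.tendsto e).mono_left
          (nhdsWithin_le_nhds (s := Set.Ioo e θ0))
        simpa using this
      · filter_upwards [self_mem_nhdsWithin] with a ha
        exact Real.sqrt_pos.mpr (by linarith [ha.1])
    have h1 : Tendsto (fun a : ℝ => (Real.sqrt (a - e))⁻¹) (nhdsWithin e (Set.Ioo e θ0)) atTop :=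
      h0.inv_tendsto_nhdsGT_zero
    have h2 : Tendsto (fun a : ℝ => (a - e) ^ (-(1/2) : ℝ)) (nhdsWithin e (Set.Ioo e θ0)) atTop := by
      apply h1.congr'
      filter_upwards [self_mem_nhdsWithin] with a ha
      have hae : (0:ℝ) ≤ a - e := by linarith [ha.1]
      rw [Real.rpow_neg hae, ← Real.sqrt_eq_rpow]
    exact ((tendsto_atTop_add_const_right _ (-((θ0 - e) ^ (-(1/2) : ℝ))) h2).const_mul_atTop
      (by positivity))
  apply tendsto_atTop_mono' _ _ hA
  have hmem : ∀ᶠ a in nhdsWithin e (Set.Ioo e θ0), a ∈ Set.Ioo e e₁ := by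
    filter_upwards [self_mem_nhdsWithin,
      (eventually_lt_nhds he₁).filter_mono nhdsWithin_le_nhds] with a ha hlt
    exact ⟨ha.1, hlt⟩
  filter_upwards [hmem] with a ha
  have hea : e < a := ha.1
  have haθ0 : a ≤ θ0 := le_trans ha.2.le h₁
  have model_int : IntervalIntegrable (fun z => C * (z - e) ^ (-(3/2) : ℝ)) volume a θ0 := by
    apply ContinuousOn.intervalIntegrable
    apply ContinuousOn.mul continuousOn_const
    apply ContinuousOn.rpow_const ((continuous_id.sub continuous_const).continuousOn)
    intro x hx
    rw [Set.uIcc_of_le haθ0] at hx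
    left
    have : e < x := lt_of_lt_of_le hea hx.1
    exact sub_ne_zero.mpr (ne_of_gt this)
  have hae : ∀ᵐ z ∂(volume.restrict (Set.Icc a θ0)),
      C * (z - e) ^ (-(3/2) : ℝ) ≤ f a z := by
    have h1 : ∀ᵐ z ∂(volume.restrict (Set.Icc a θ0)), z ∈ Set.Icc a θ0 :=
      ae_restrict_mem measurableSet_Icc
    have h2 : ∀ᵐ z ∂(volume.restrict (Set.Icc a θ0)), z ≠ a := by
      refine ae_restrict_of_ae ?_
      rw [ae_iff]
      have hset : {x : ℝ | ¬ x ≠ a} = {a} := by ext x; simp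
      rw [hset]
      exact measure_singleton a
    filter_upwards [h1, h2] with z hz hza
    exact hlow a ha z ⟨lt_of_le_of_ne hz.1 (Ne.symm hza), hz.2⟩
  have hmono := intervalIntegral.integral_mono_ae_restrict haθ0 model_int (hint a ha) hae
  refine le_trans (le_of_eq ?_) hmono
  rw [intervalIntegral.integral_const_mul]
  have hcomp : (∫ z in a..θ0, (z - e) ^ (-(3/2) : ℝ))
      = ∫ x in (a - e)..(θ0 - e), x ^ (-(3/2) : ℝ) :=
    intervalIntegral.integral_comp_sub_right (fun x => x ^ (-(3/2) : ℝ)) e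
  have hnotmem : (0:ℝ) ∉ Set.uIcc (a - e) (θ0 - e) := by
    rw [Set.mem_uIcc]
    push_neg
    constructor <;> intro h' <;> [linarith; linarith]
  rw [hcomp, integral_rpow (Or.inr ⟨by norm_num, hnotmem⟩)]
  have he1 : (-(3/2) : ℝ) + 1 = -(1/2) := by norm_num
  rw [he1, hφ]
  have ha2 : (0:ℝ) < a - e := by linarith
  have ht2 : (0:ℝ) < θ0 - e := by linarith
  field_simp
  ring

lemma aux_bound (x t : ℝ) (h0 : 0 ≤ t) (h1 : t ≤ 1) : x * t ≤ |x| := by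
  nlinarith [le_abs_self x, neg_abs_le x, abs_nonneg x]

set_option maxHeartbeats 1000000 in
/-- If `e` is a zero of `h` with `e < θ0`, then both integrals
`∫_a^{θ0} c(z)/√(G(z) − G(a)) dz` and `∫_a^{θ0} c(z)/(g(z)√(G(z) − G(a))) dz`
tend to `+∞` as `a → e` within `(e, θ0)`. -/
theorem stmt_3
    (α1 α2 α3 α4 α5 α6 K1 K3 γ1 γ2 Cbar θ0 : ℝ)
    (hγ1 : γ1 = α3 - α2) (hγ2 : γ2 = α6 - α5) (hγ1pos : 0 < γ1)
    (hK1 : 0 < K1) (hK3 : 0 < K3) (hCbar : 0 < Cbar)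
    (g h c G : ℝ → ℝ)
    (hg : ∀ θ : ℝ, g θ = α1 * Real.sin θ ^ 2 * Real.cos θ ^ 2
        + (α5 - α2) / 2 * Real.sin θ ^ 2 + (α3 + α6) / 2 * Real.cos θ ^ 2 + α4 / 2)
    (hh : ∀ θ : ℝ, h θ = (γ1 + γ2 * Real.cos (2 * θ)) / 2)
    (hc : ∀ θ : ℝ, c θ = Real.sqrt (K1 * Real.cos θ ^ 2 + K3 * Real.sin θ ^ 2))
    (hdamp : ∀ θ : ℝ, Cbar ≤ g θ - h θ ^ 2 / γ1 ∧ g θ - h θ ^ 2 / γ1 ≤ g θ)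
    (hθ0 : h θ0 ≠ 0)
    (hG : ∀ θ : ℝ, G θ = ∫ s in θ0..θ, h s / g s)
    (hcase : γ2 = γ1 ∨ γ2 = -γ1)
    (e : ℝ) (he : h e = 0) (heθ0 : e < θ0) :
    Tendsto (fun a => ∫ z in a..θ0, c z / Real.sqrt (G z - G a))
        (nhdsWithin e (Set.Ioo e θ0)) atTop ∧
    Tendsto (fun a => ∫ z in a..θ0, c z / (g z * Real.sqrt (G z - G a)))
        (nhdsWithin e (Set.Ioo e θ0)) atTop := by
  -- positivity of g
  have hgC : ∀ θ, Cbar ≤ g θ := fun θ => le_trans (hdamp θ).1 (hdamp θ).2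
  have hgpos : ∀ θ, 0 < g θ := fun θ => lt_of_lt_of_le hCbar (hgC θ)
  -- the sine formula for h
  have hsin : ∀ θ, h θ = γ1 * Real.sin (θ - e) ^ 2 := by
    have he' : γ1 + γ2 * Real.cos (2 * e) = 0 := by
      have h0 := he; rw [hh] at h0; linarith
    intro θ
    rw [hh, Real.sin_sub]
    have c2e := Real.cos_two_mul e
    have c2θ := Real.cos_two_mul θ
    have pe := Real.sin_sq_add_cos_sq e
    have pθ := Real.sin_sq_add_cos_sq θ
    rcases hcase with h2 | h2 <;> rw [h2] at he' ⊢
    · -- γ2 = γ1 : cos e = 0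
      have hce : γ1 * Real.cos e ^ 2 = 0 := by linear_combination (1/2) * he' + (-(γ1/2)) * c2e
      have hce2 : Real.cos e ^ 2 = 0 := by
        rcases mul_eq_zero.mp hce with h' | h'
        · exact absurd h' (ne_of_gt hγ1pos)
        · exact h'
      have hce0 : Real.cos e = 0 := (pow_eq_zero_iff two_ne_zero).mp hce2
      have hse1 : Real.sin e ^ 2 = 1 := by linear_combination pe - hce2
      have hsq : (Real.sin θ * Real.cos e - Real.cos θ * Real.sin e) ^ 2 = Real.cos θ ^ 2 := by
        rw [hce0]
        rw [show (Real.sin θ * 0 - Real.cos θ * Real.sin e) ^ 2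
            = Real.cos θ ^ 2 * Real.sin e ^ 2 from by ring, hse1, mul_one]
      rw [hsq]
      linear_combination (1/2) * c2θ * γ1
    · -- γ2 = -γ1 : sin e = 0
      have hse : γ1 * Real.sin e ^ 2 = 0 := by
        linear_combination (1/2) * he' + (γ1/2) * c2e + γ1 * pe
      have hse2 : Real.sin e ^ 2 = 0 := by
        rcases mul_eq_zero.mp hse with h' | h'
        · exact absurd h' (ne_of_gt hγ1pos)
        · exact h'
      have hse0 : Real.sin e = 0 := (pow_eq_zero_iff two_ne_zero).mp hse2
      have hce1 : Real.cos e ^ 2 = 1 := by linear_combination pe - hse2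
      have hsq : (Real.sin θ * Real.cos e - Real.cos θ * Real.sin e) ^ 2 = Real.sin θ ^ 2 := by
        rw [hse0]
        rw [show (Real.sin θ * Real.cos e - Real.cos θ * 0) ^ 2
            = Real.sin θ ^ 2 * Real.cos e ^ 2 from by ring, hce1, mul_one]
      rw [hsq]
      linear_combination (-(γ1/2)) * c2θ + (-γ1) * pθ
  have hh0 : ∀ θ, 0 ≤ h θ := by intro θ; rw [hsin θ]; positivity
  have hhub : ∀ θ, h θ ≤ γ1 * (θ - e) ^ 2 := by
    intro θ; rw [hsin θ]
    have := Real.sin_sq_le_sq (x := θ - e)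
    nlinarith
  -- continuity
  have hgcont : Continuous g := by
    have : g = fun θ => α1 * Real.sin θ ^ 2 * Real.cos θ ^ 2
        + (α5 - α2) / 2 * Real.sin θ ^ 2 + (α3 + α6) / 2 * Real.cos θ ^ 2 + α4 / 2 := funext hg
    rw [this]; fun_prop
  have hhcont : Continuous h := by
    have : h = fun θ => (γ1 + γ2 * Real.cos (2 * θ)) / 2 := funext hh
    rw [this]; fun_prop
  have hccont : Continuous c := by
    have : c = fun θ => Real.sqrt (K1 * Real.cos θ ^ 2 + K3 * Real.sin θ ^ 2) := funext hc
    rw [this]; fun_prop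
  have hq : Continuous (fun s => h s / g s) := hhcont.div hgcont fun s => (hgpos s).ne'
  have hGcont : Continuous G := by
    have : G = fun θ => ∫ s in θ0..θ, h s / g s := funext hG
    rw [this]
    exact intervalIntegral.continuous_primitive (μ := volume)
      (fun a b => hq.intervalIntegrable a b) θ0
  have hGsub : ∀ a z : ℝ, G z - G a = ∫ s in a..z, h s / g s := by
    intro a z
    have := intervalIntegral.integral_add_adjacent_intervals
      (hq.intervalIntegrable (μ := volume) θ0 a) (hq.intervalIntegrable a z)
    rw [hG z, hG a]; linarith
  have hGmono : ∀ a z : ℝ, a ≤ z → 0 ≤ G z - G a := by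
    intro a z haz; rw [hGsub]
    exact intervalIntegral.integral_nonneg haz (fun s _ => div_nonneg (hh0 s) (hgpos s).le)
  -- upper bound constant
  set Kc : ℝ := γ1 / Cbar / 3 with hKcdef
  have hKc : 0 < Kc := by positivity
  have hGub : ∀ a z : ℝ, e ≤ a → a ≤ z → G z - G a ≤ Kc * (z - e) ^ 3 := by
    intro a z hea haz
    rw [hGsub]
    have hb : IntervalIntegrable (fun s => γ1 / Cbar * (s - e) ^ 2) volume a z := by
      apply Continuous.intervalIntegrable; fun_prop
    have hstep : (∫ s in a..z, h s / g s) ≤ ∫ s in a..z, γ1 / Cbar * (s - e) ^ 2 := by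
      apply intervalIntegral.integral_mono_on haz (hq.intervalIntegrable a z) hb
      intro s _
      calc h s / g s ≤ (γ1 * (s - e) ^ 2) / Cbar :=
            div_le_div₀ (by positivity) (hhub s) hCbar (hgC s)
        _ = γ1 / Cbar * (s - e) ^ 2 := by ring
    have hcalc : (∫ s in a..z, γ1 / Cbar * (s - e) ^ 2)
        = γ1 / Cbar * (((z - e) ^ 3 - (a - e) ^ 3) / 3) := by
      rw [intervalIntegral.integral_const_mul,
        intervalIntegral.integral_comp_sub_right (fun x => x ^ 2) e, integral_pow]
      norm_num
    have hae3 : (0:ℝ) ≤ (a - e) ^ 3 := by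
      have : (0:ℝ) ≤ a - e := by linarith
      positivity
    have hfin : γ1 / Cbar * (((z - e) ^ 3 - (a - e) ^ 3) / 3) ≤ Kc * (z - e) ^ 3 := by
      rw [hKcdef]
      nlinarith [div_nonneg hγ1pos.le hCbar.le, hae3]
    rw [hcalc] at hstep
    linarith
  -- the left endpoint window
  set e₁ : ℝ := min θ0 (e + 1) with he₁def
  have he₁ : e < e₁ := lt_min heθ0 (by linarith)
  have h₁θ0 : e₁ ≤ θ0 := min_le_left _ _
  have he₁e : e₁ - e ≤ 1 := by
    have := min_le_right θ0 (e + 1); simp only [he₁def]; linarith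
  have hπ : (3:ℝ) < Real.pi := Real.pi_gt_three
  -- bounds for g from above
  set M : ℝ := |α1| + |α5 - α2| / 2 + |α3 + α6| / 2 + |α4| / 2 with hMdef
  have hgM : ∀ θ, g θ ≤ M := by
    intro θ
    rw [hg θ, hMdef]
    have s2 : Real.sin θ ^ 2 ≤ 1 := Real.sin_sq_le_one θ
    have s3 : Real.cos θ ^ 2 ≤ 1 := Real.cos_sq_le_one θ
    have s4 := sq_nonneg (Real.sin θ)
    have s5 := sq_nonneg (Real.cos θ)
    have s6 : Real.sin θ ^ 2 * Real.cos θ ^ 2 ≤ 1 := by nlinarith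
    have t1 : α1 * Real.sin θ ^ 2 * Real.cos θ ^ 2 ≤ |α1| := by
      have := aux_bound α1 (Real.sin θ ^ 2 * Real.cos θ ^ 2) (mul_nonneg s4 s5) s6
      nlinarith [this]
    have t2 : (α5 - α2) / 2 * Real.sin θ ^ 2 ≤ |α5 - α2| / 2 := by
      have := aux_bound ((α5 - α2) / 2) (Real.sin θ ^ 2) s4 s2
      rwa [abs_div, abs_two] at this
    have t3 : (α3 + α6) / 2 * Real.cos θ ^ 2 ≤ |α3 + α6| / 2 := by
      have := aux_bound ((α3 + α6) / 2) (Real.cos θ ^ 2) s5 s3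
      rwa [abs_div, abs_two] at this
    have t4 : α4 / 2 ≤ |α4| / 2 := by
      have := le_abs_self α4; linarith
    linarith
  have hMpos : 0 < M := lt_of_lt_of_le hCbar (le_trans (hgC 0) (hgM 0))
  -- quantitative lower bound for G near the left endpoint
  have hGlb1 : ∀ a ∈ Set.Ioo e e₁, ∀ z ∈ Set.Icc a e₁,
      γ1 * Real.sin (a - e) ^ 2 / M * (z - a) ≤ G z - G a := by
    intro a ha z hz
    rw [hGsub]
    have hconst : IntervalIntegrable (fun _ : ℝ => γ1 * Real.sin (a - e) ^ 2 / M) volume a z :=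
      intervalIntegrable_const
    have hmono := intervalIntegral.integral_mono_on hz.1 hconst (hq.intervalIntegrable a z) ?_
    · rw [intervalIntegral.integral_const] at hmono
      calc γ1 * Real.sin (a - e) ^ 2 / M * (z - a)
          = (z - a) • (γ1 * Real.sin (a - e) ^ 2 / M) := by rw [smul_eq_mul]; ring
        _ ≤ _ := hmono
    · intro s hs
      have hmem1 : a - e ∈ Set.Icc (-(Real.pi/2)) (Real.pi/2) := by
        constructor <;> [linarith [ha.1, hπ]; linarith [ha.2, he₁e, hπ]]
      have hmem2 : s - e ∈ Set.Icc (-(Real.pi/2)) (Real.pi/2) := by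
        constructor <;> [linarith [ha.1, hs.1, hπ]; linarith [hs.2, hz.2, he₁e, hπ]]
      have hsle : Real.sin (a - e) ≤ Real.sin (s - e) :=
        Real.strictMonoOn_sin.monotoneOn hmem1 hmem2 (by linarith [hs.1])
      have hsnn : 0 ≤ Real.sin (a - e) :=
        Real.sin_nonneg_of_nonneg_of_le_pi (by linarith [ha.1]) (by linarith [ha.2, he₁e, hπ])
      have h2 : γ1 * Real.sin (a - e) ^ 2 ≤ h s := by
        rw [hsin s]
        exact mul_le_mul_of_nonneg_left (pow_le_pow_left₀ hsnn hsle 2) hγ1pos.le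
      calc γ1 * Real.sin (a - e) ^ 2 / M ≤ h s / M := (div_le_div_iff_of_pos_right hMpos).mpr h2
        _ ≤ h s / g s := div_le_div₀ (hh0 s) le_rfl (hgpos s) (hgM s)
  have hκpos : ∀ a ∈ Set.Ioo e e₁, 0 < γ1 * Real.sin (a - e) ^ 2 / M := by
    intro a ha
    have hsa : 0 < Real.sin (a - e) :=
      Real.sin_pos_of_pos_of_lt_pi (by linarith [ha.1]) (by linarith [ha.2, he₁e, hπ])
    positivity
  have hGlbpos : ∀ a ∈ Set.Ioo e e₁, ∀ z ∈ Set.Ioc a θ0, 0 < G z - G a := by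
    intro a ha z hz
    have hκ := hκpos a ha
    rcases le_or_gt z e₁ with hze | hze
    · have h1 := hGlb1 a ha z ⟨hz.1.le, hze⟩
      have h2 : 0 < γ1 * Real.sin (a - e) ^ 2 / M * (z - a) :=
        mul_pos hκ (by linarith [hz.1])
      linarith
    · have h1 := hGlb1 a ha e₁ ⟨ha.2.le, le_rfl⟩
      have h2 := hGmono e₁ z hze.le
      have h3 : 0 < γ1 * Real.sin (a - e) ^ 2 / M * (e₁ - a) :=
        mul_pos hκ (by linarith [ha.2])
      linarith
  -- bounds for c
  set mK : ℝ := Real.sqrt (min K1 K3) with hmKdef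
  have hmK : 0 < mK := Real.sqrt_pos.mpr (lt_min hK1 hK3)
  set cM : ℝ := Real.sqrt (K1 + K3) with hcMdef
  have hcM : 0 ≤ cM := Real.sqrt_nonneg _
  have hclb : ∀ z, mK ≤ c z := by
    intro z
    rw [hc z, hmKdef]
    apply Real.sqrt_le_sqrt
    have hmin : min K1 K3 * Real.sin z ^ 2 + min K1 K3 * Real.cos z ^ 2 = min K1 K3 := by
      linear_combination (min K1 K3) * (Real.sin_sq_add_cos_sq z)
    linarith [mul_le_mul_of_nonneg_right (min_le_left K1 K3) (sq_nonneg (Real.cos z)),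
      mul_le_mul_of_nonneg_right (min_le_right K1 K3) (sq_nonneg (Real.sin z)), hmin]
  have hcub : ∀ z, c z ≤ cM := by
    intro z
    rw [hc z, hcMdef]
    apply Real.sqrt_le_sqrt
    linarith [mul_le_mul_of_nonneg_left (Real.cos_sq_le_one z) hK1.le,
      mul_le_mul_of_nonneg_left (Real.sin_sq_le_one z) hK3.le,
      mul_nonneg hK1.le (sq_nonneg (Real.cos z)), mul_nonneg hK3.le (sq_nonneg (Real.sin z))]
  have hc0 : ∀ z, 0 ≤ c z := by intro z; rw [hc z]; exact Real.sqrt_nonneg _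
  -- main abstract statement
  have main : ∀ (u : ℝ → ℝ) (m U : ℝ), Continuous u → 0 < m → (∀ z, m ≤ u z) →
      (∀ z, u z ≤ U) →
      Tendsto (fun a => ∫ z in a..θ0, u z / Real.sqrt (G z - G a))
        (nhdsWithin e (Set.Ioo e θ0)) atTop := by
    intro u m U hu hm hml hmu
    have hU : 0 < U := lt_of_lt_of_le hm (le_trans (hml 0) (hmu 0))
    apply key_div e e₁ θ0 (m / Real.sqrt Kc) he₁ h₁θ0 (by positivity)
    · -- integrability
      intro a ha
      have hκ := hκpos a ha
      have meas : Measurable fun z => u z / Real.sqrt (G z - G a) :=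
        hu.measurable.div ((Real.continuous_sqrt.comp (hGcont.sub continuous_const)).measurable)
      have p1 : IntervalIntegrable (fun z => u z / Real.sqrt (G z - G a)) volume a e₁ := by
        have base : IntervalIntegrable (fun x : ℝ => x ^ (-(1/2) : ℝ)) volume 0 (e₁ - a) :=
          intervalIntegral.intervalIntegrable_rpow' (by norm_num)
        have sh := base.comp_sub_right a
        have sh' : IntervalIntegrable (fun x : ℝ => (x - a) ^ (-(1/2) : ℝ)) volume a e₁ := by
          simpa using sh
        have bint := sh'.const_mul (U / Real.sqrt (γ1 * Real.sin (a - e) ^ 2 / M))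
        apply bint.mono_fun meas.aestronglyMeasurable.restrict
        have hmem : ∀ᵐ z ∂(volume.restrict (Set.uIoc a e₁)), z ∈ Set.uIoc a e₁ :=
          ae_restrict_mem measurableSet_uIoc
        filter_upwards [hmem] with z hz
        rw [Set.uIoc_of_le ha.2.le] at hz
        have hz1 : γ1 * Real.sin (a - e) ^ 2 / M * (z - a) ≤ G z - G a :=
          hGlb1 a ha z ⟨hz.1.le, hz.2⟩
        have hzpos : 0 < z - a := sub_pos.mpr hz.1
        have hGpos : 0 < G z - G a := lt_of_lt_of_le (mul_pos hκ hzpos) hz1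
        have hden : 0 < Real.sqrt (G z - G a) := Real.sqrt_pos.mpr hGpos
        have hnn1 : 0 ≤ u z / Real.sqrt (G z - G a) :=
          div_nonneg (le_trans hm.le (hml z)) hden.le
        have key1 : u z / Real.sqrt (G z - G a)
            ≤ U / Real.sqrt (γ1 * Real.sin (a - e) ^ 2 / M * (z - a)) :=
          div_le_div₀ hU.le (hmu z) (Real.sqrt_pos.mpr (mul_pos hκ hzpos))
            (Real.sqrt_le_sqrt hz1)
        have key2 : U / Real.sqrt (γ1 * Real.sin (a - e) ^ 2 / M * (z - a))
            = U / Real.sqrt (γ1 * Real.sin (a - e) ^ 2 / M) * (z - a) ^ (-(1/2) : ℝ) := by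
          rw [show (-(1/2) : ℝ) = -((1/2) : ℝ) from by norm_num, Real.rpow_neg hzpos.le,
            Real.sqrt_mul hκ.le, ← Real.sqrt_eq_rpow]
          ring
        have hnn2 : 0 ≤ U / Real.sqrt (γ1 * Real.sin (a - e) ^ 2 / M) * (z - a) ^ (-(1/2) : ℝ) := by
          positivity
        rw [Real.norm_eq_abs, Real.norm_eq_abs, abs_of_nonneg hnn1, abs_of_nonneg hnn2]
        rw [← key2]
        exact key1
      have p2 : IntervalIntegrable (fun z => u z / Real.sqrt (G z - G a)) volume e₁ θ0 := by
        apply ContinuousOn.intervalIntegrable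
        apply ContinuousOn.div hu.continuousOn
          ((Real.continuous_sqrt.comp (hGcont.sub continuous_const)).continuousOn)
        intro z hz
        rw [Set.uIcc_of_le h₁θ0] at hz
        have h1 := hGlb1 a ha e₁ ⟨ha.2.le, le_rfl⟩
        have h2 := hGmono e₁ z hz.1
        have h3 : 0 < γ1 * Real.sin (a - e) ^ 2 / M * (e₁ - a) :=
          mul_pos hκ (by linarith [ha.2])
        have : 0 < G z - G a := by linarith
        exact (Real.sqrt_pos.mpr this).ne'
      exact p1.trans p2
    · -- lower bound
      intro a ha z hz
      have hea : e < a := ha.1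
      have hez : 0 < z - e := by linarith [hz.1]
      have hub := hGub a z hea.le hz.1.le
      have hpos := hGlbpos a ha z hz
      have hden : 0 < Real.sqrt (G z - G a) := Real.sqrt_pos.mpr hpos
      have hsq : Real.sqrt (G z - G a) ≤ Real.sqrt Kc * (z - e) ^ ((3/2) : ℝ) := by
        calc Real.sqrt (G z - G a) ≤ Real.sqrt (Kc * (z - e) ^ 3) :=
              Real.sqrt_le_sqrt (by linarith)
          _ = Real.sqrt Kc * (z - e) ^ ((3/2) : ℝ) := by
            rw [Real.sqrt_mul hKc.le]
            congr 1
            rw [Real.sqrt_eq_rpow, ← Real.rpow_natCast (z - e) 3, ← Real.rpow_mul hez.le]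
            norm_num
      have hXpos : 0 < (z - e) ^ ((3/2) : ℝ) := Real.rpow_pos_of_pos hez _
      have hrhs : (m / Real.sqrt Kc) * (z - e) ^ (-(3/2) : ℝ)
          = m / (Real.sqrt Kc * (z - e) ^ ((3/2) : ℝ)) := by
        rw [show (-(3/2) : ℝ) = -((3/2) : ℝ) from by norm_num, Real.rpow_neg hez.le]
        ring
      rw [hrhs]
      exact div_le_div₀ (le_trans hm.le (hml z)) (hml z) hden hsq
  constructor
  · exact main c mK cM hccont hmK hclb hcub
  · have h2 := main (fun z => c z / g z) (mK / M) (cM / Cbar)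
      (hccont.div hgcont fun s => (hgpos s).ne') (by positivity)
      (fun z => div_le_div₀ (hc0 z) (hclb z) (hgpos z) (hgM z))
      (fun z => div_le_div₀ hcM (hcub z) hCbar (hgC z))
    simpa only [div_div] using h2
end

section
/- Let θ̃ < θ0 with h(θ̃) ≠ 0 and set β := −G(θ̃), so β > 0. Then the change of variables s = −G(z) yields ∫_{θ̃}^{θ0} c(z)/√(G(z) − G(θ̃)) dz = ∫_0^β (c·g/h)(F(t − β)) t^{−1/2} dt and ∫_{θ̃}^{θ0} c(z)/(g(z)√(G(z) − G(θ̃))) dz = ∫_0^β (c/h)(F(t − β)) t^{−1/2} dt. -/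
open Real Set Filter MeasureTheory

/-- For `θ̃ < θ0` with `h(θ̃) ≠ 0` and `β := −G(θ̃)` (so `β > 0`),
the change of variables `s = −G(z)` gives
`∫_{θ̃}^{θ0} c/√(G − G(θ̃)) = ∫_0^β (c·g/h)(F(t − β)) t^{−1/2} dt` and
`∫_{θ̃}^{θ0} c/(g√(G − G(θ̃))) = ∫_0^β (c/h)(F(t − β)) t^{−1/2} dt`. -/
theorem stmt_5
    (α1 α2 α3 α4 α5 α6 K1 K3 γ1 γ2 Cbar θ0 : ℝ)
    (hγ1 : γ1 = α3 - α2) (hγ2 : γ2 = α6 - α5) (hγ1pos : 0 < γ1)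
    (hK1 : 0 < K1) (hK3 : 0 < K3) (hCbar : 0 < Cbar)
    (g h c G : ℝ → ℝ)
    (hg : ∀ θ : ℝ, g θ = α1 * Real.sin θ ^ 2 * Real.cos θ ^ 2
        + (α5 - α2) / 2 * Real.sin θ ^ 2 + (α3 + α6) / 2 * Real.cos θ ^ 2 + α4 / 2)
    (hh : ∀ θ : ℝ, h θ = (γ1 + γ2 * Real.cos (2 * θ)) / 2)
    (hc : ∀ θ : ℝ, c θ = Real.sqrt (K1 * Real.cos θ ^ 2 + K3 * Real.sin θ ^ 2))
    (hdamp : ∀ θ : ℝ, Cbar ≤ g θ - h θ ^ 2 / γ1 ∧ g θ - h θ ^ 2 / γ1 ≤ g θ)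
    (hθ0 : h θ0 ≠ 0)
    (hG : ∀ θ : ℝ, G θ = ∫ s in θ0..θ, h s / g s)
    (hcase : γ2 = γ1 ∨ γ2 = -γ1)
    (F : ℝ → ℝ)
    (hF : Function.LeftInverse F G) (hF' : Function.RightInverse F G)
    (θt : ℝ) (hθt : θt < θ0) (hhθt : h θt ≠ 0) :
    0 < -G θt ∧
    (∫ z in θt..θ0, c z / Real.sqrt (G z - G θt)) =
      (∫ t in (0:ℝ)..(-G θt),
        c (F (t - -G θt)) * g (F (t - -G θt)) / h (F (t - -G θt)) / Real.sqrt t) ∧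
    (∫ z in θt..θ0, c z / (g z * Real.sqrt (G z - G θt))) =
      (∫ t in (0:ℝ)..(-G θt),
        c (F (t - -G θt)) / h (F (t - -G θt)) / Real.sqrt t) := by
  have hgpos : ∀ θ : ℝ, 0 < g θ := fun θ =>
    lt_of_lt_of_le hCbar ((hdamp θ).1.trans (hdamp θ).2)
  have hcontg : Continuous g := by
    have hgf : g = fun θ => α1 * Real.sin θ ^ 2 * Real.cos θ ^ 2
        + (α5 - α2) / 2 * Real.sin θ ^ 2 + (α3 + α6) / 2 * Real.cos θ ^ 2 + α4 / 2 := funext hg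
    rw [hgf]; fun_prop
  have hconth : Continuous h := by
    have hhf : h = fun θ => (γ1 + γ2 * Real.cos (2 * θ)) / 2 := funext hh
    rw [hhf]; fun_prop
  have hcontφ : Continuous (fun z => h z / g z) := hconth.div hcontg (fun z => (hgpos z).ne')
  have hhnonneg : ∀ θ : ℝ, 0 ≤ h θ := by
    intro θ; rw [hh]
    rcases hcase with hc2 | hc2 <;> rw [hc2] <;>
      nlinarith [Real.neg_one_le_cos (2*θ), Real.cos_le_one (2*θ)]
  set S : Set ℝ := Set.range (fun n : ℤ => (n : ℝ) * π / 2) with hSdef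
  have hSnull : volume S = 0 := (Set.countable_range _).measure_zero _
  have hSmem : ∀ z : ℝ, h z = 0 → z ∈ S := by
    intro z hz
    rw [hh] at hz
    have hsin : Real.sin (2 * z) = 0 := by
      have hpyth := Real.sin_sq_add_cos_sq (2 * z)
      have hsq : Real.sin (2 * z) ^ 2 = 0 := by
        rcases hcase with hc2 | hc2 <;> rw [hc2] at hz
        · have h1 : γ1 * (1 + Real.cos (2 * z)) = 0 := by linarith
          rcases mul_eq_zero.1 h1 with h2 | h2
          · exact absurd h2 hγ1pos.ne'
          · have hcos : Real.cos (2 * z) = -1 := by linarith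
            nlinarith
        · have h1 : γ1 * (1 - Real.cos (2 * z)) = 0 := by linarith
          rcases mul_eq_zero.1 h1 with h2 | h2
          · exact absurd h2 hγ1pos.ne'
          · have hcos : Real.cos (2 * z) = 1 := by linarith
            nlinarith
      exact pow_eq_zero_iff (by norm_num) |>.1 hsq
    rcases Real.sin_eq_zero_iff.1 hsin with ⟨n, hn⟩
    exact ⟨n, by linarith⟩
  have hInt : ∀ x y : ℝ, IntervalIntegrable (fun z => h z / g z) volume x y :=
    fun x y => hcontφ.intervalIntegrable x y
  have hGsub : ∀ x y : ℝ, G y - G x = ∫ z in x..y, h z / g z := by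
    intro x y
    rw [hG, hG]
    exact intervalIntegral.integral_interval_sub_left (hInt θ0 y) (hInt θ0 x)
  have hGmono : StrictMono G := by
    intro x y hxy
    have h0 : 0 < ∫ z in x..y, h z / g z := by
      rw [intervalIntegral.integral_pos_iff_support_of_nonneg_ae
        (Filter.Eventually.of_forall fun z => div_nonneg (hhnonneg z) (hgpos z).le) (hInt x y)]
      refine ⟨hxy, ?_⟩
      have hsub : Ioc x y \ S ⊆ Function.support (fun z => h z / g z) ∩ Ioc x y := by
        intro z hz
        refine ⟨?_, hz.1⟩
        have hne : h z ≠ 0 := fun h0 => hz.2 (hSmem z h0)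
        exact div_ne_zero hne (hgpos z).ne'
      have h1 : volume (Ioc x y \ S) = volume (Ioc x y) := measure_diff_null hSnull
      have h2 : (0:ENNReal) < volume (Ioc x y) := by
        rw [Real.volume_Ioc]; exact ENNReal.ofReal_pos.2 (by linarith)
      calc (0:ENNReal) < volume (Ioc x y \ S) := h1 ▸ h2
        _ ≤ volume (Function.support (fun z => h z / g z) ∩ Ioc x y) := measure_mono hsub
    have := hGsub x y
    linarith
  have hGderiv : ∀ z : ℝ, HasDerivAt G (h z / g z) z := by
    intro z
    have hGfun : G = fun u => ∫ s in θ0..u, h s / g s := funext hG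
    rw [hGfun]
    exact intervalIntegral.integral_hasDerivAt_right (hInt θ0 z)
      (hcontφ.stronglyMeasurableAtFilter _ _) hcontφ.continuousAt
  have hGcont : Continuous G :=
    continuous_iff_continuousAt.2 fun z => (hGderiv z).continuousAt
  have hGθ0 : G θ0 = 0 := by rw [hG]; simp
  have hβ : 0 < -G θt := by
    have := hGmono hθt
    rw [hGθ0] at this
    linarith
  have hφderiv : ∀ z ∈ Ioo θt θ0,
      HasDerivWithinAt (fun u => G u - G θt) (h z / g z) (Ioo θt θ0) z :=
    fun z _ => ((hGderiv z).sub_const _).hasDerivWithinAt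
  have hφinj : InjOn (fun u => G u - G θt) (Ioo θt θ0) := by
    intro a _ b _ hab
    exact hGmono.injective (by dsimp at hab; linarith)
  have himg : (fun u => G u - G θt) '' Ioo θt θ0 = Ioo 0 (-G θt) := by
    apply Subset.antisymm
    · rintro t ⟨z, hz, rfl⟩
      refine ⟨?_, ?_⟩
      · have := hGmono hz.1; simpa using this
      · have := hGmono hz.2; rw [hGθ0] at this; simp; linarith
    · have hsub := intermediate_value_Ioo (α := ℝ) (δ := ℝ) (a := θt) (b := θ0)
        (f := fun u => G u - G θt) (le_of_lt hθt)
        (Continuous.continuousOn (by fun_prop))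
      simpa [hGθ0] using hsub
  have hae : ∀ᵐ z : ℝ, z ∉ S := by
    rw [ae_iff]
    simpa using hSnull
  refine ⟨hβ, ?_, ?_⟩
  · rw [intervalIntegral.integral_of_le hθt.le, intervalIntegral.integral_of_le hβ.le,
        MeasureTheory.integral_Ioc_eq_integral_Ioo, MeasureTheory.integral_Ioc_eq_integral_Ioo,
        ← himg,
        integral_image_eq_integral_abs_deriv_smul measurableSet_Ioo hφderiv hφinj]
    apply MeasureTheory.setIntegral_congr_ae measurableSet_Ioo
    filter_upwards [hae] with z hzS hz
    have hne : h z ≠ 0 := fun h0 => hzS (hSmem z h0)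
    have hgz : g z ≠ 0 := (hgpos z).ne'
    have hGz : 0 < G z - G θt := by have := hGmono hz.1; linarith
    have hr : Real.sqrt (G z - G θt) ≠ 0 := (Real.sqrt_pos.2 hGz).ne'
    have harg : G z - G θt - -G θt = G z := by ring
    have habs : |h z / g z| = h z / g z :=
      abs_of_nonneg (div_nonneg (hhnonneg z) (hgpos z).le)
    simp only [harg, hF z, habs, smul_eq_mul]
    field_simp
  · rw [intervalIntegral.integral_of_le hθt.le, intervalIntegral.integral_of_le hβ.le,
        MeasureTheory.integral_Ioc_eq_integral_Ioo, MeasureTheory.integral_Ioc_eq_integral_Ioo,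
        ← himg,
        integral_image_eq_integral_abs_deriv_smul measurableSet_Ioo hφderiv hφinj]
    apply MeasureTheory.setIntegral_congr_ae measurableSet_Ioo
    filter_upwards [hae] with z hzS hz
    have hne : h z ≠ 0 := fun h0 => hzS (hSmem z h0)
    have hgz : g z ≠ 0 := (hgpos z).ne'
    have hGz : 0 < G z - G θt := by have := hGmono hz.1; linarith
    have hr : Real.sqrt (G z - G θt) ≠ 0 := (Real.sqrt_pos.2 hGz).ne'
    have harg : G z - G θt - -G θt = G z := by ring
    have habs : |h z / g z| = h z / g z :=
      abs_of_nonneg (div_nonneg (hhnonneg z) (hgpos z).le)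
    simp only [harg, hF z, habs, smul_eq_mul]
    field_simp
end

section
/- Let M > 0 and let θ, η : [1/2, 1] → ℝ be C¹ functions satisfying θ′(x) = η(x)/c(θ(x))² and η′(x) = (c′(θ(x))/c(θ(x))³)η(x)² + (h(θ(x))/g(θ(x)))M² on [1/2, 1], with θ(1/2) = θ̃, η(1/2) = 0, θ(1) = θ0, and η(x) > 0 for all x ∈ (1/2, 1]. Then G(z) > G(θ̃) for all z ∈ (θ̃, θ0], and M = √2 · ∫_{θ̃}^{θ0} c(z)/√(G(z) − G(θ̃)) dz. -/
set_option maxHeartbeats 1000000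

open Real Set Filter MeasureTheory Topology

-- Gronwall-type uniqueness with a conditional bound (valid only while w ≤ 1)
lemma aux_gronwall {a b K : ℝ} {w w' : ℝ → ℝ} (hab : a ≤ b) (hK : 0 ≤ K)
    (hd : ∀ x ∈ Set.Icc a b, HasDerivAt w (w' x) x) (h0 : w a = 0)
    (hw'nn : ∀ x ∈ Set.Icc a b, 0 ≤ w' x)
    (hwnn : ∀ x ∈ Set.Icc a b, 0 ≤ w x)
    (hbd : ∀ x ∈ Set.Icc a b, w x ≤ 1 → w' x ≤ K * w x) :
    ∀ x ∈ Set.Icc a b, w x = 0 := by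
  have hcont : ContinuousOn w (Set.Icc a b) :=
    fun x hx => (hd x hx).continuousAt.continuousWithinAt
  have key : ∀ m ∈ Set.Icc a b, (∀ y ∈ Set.Ico a m, w y ≤ 1) → w m = 0 := by
    intro m hm hle
    have h1 : ∀ x ∈ Set.Icc a m, ‖w x‖ ≤ gronwallBound 0 K 0 (x - a) := by
      apply norm_le_gronwallBound_of_norm_deriv_right_le (f' := w')
      · exact hcont.mono (Set.Icc_subset_Icc le_rfl hm.2)
      · intro x hx
        exact (hd x ⟨hx.1, hx.2.le.trans hm.2⟩).hasDerivWithinAt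
      · simp [h0]
      · intro x hx
        have hx' : x ∈ Set.Icc a b := ⟨hx.1, hx.2.le.trans hm.2⟩
        rw [Real.norm_eq_abs, Real.norm_eq_abs, abs_of_nonneg (hw'nn x hx'),
          abs_of_nonneg (hwnn x hx'), add_zero]
        exact hbd x hx' (hle x hx)
    have h2 := h1 m ⟨hm.1, le_rfl⟩
    rw [gronwallBound_ε0_δ0] at h2
    exact norm_le_zero_iff.1 h2
  have hS : ∀ x ∈ Set.Icc a b, w x < 1 := by
    by_contra hcon
    push_neg at hcon
    obtain ⟨x0, hx0, hx0ge⟩ := hcon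
    set S := {x ∈ Set.Icc a b | 1 ≤ w x} with hSdef
    have hSne : S.Nonempty := ⟨x0, hx0, hx0ge⟩
    have hSbdd : BddBelow S := ⟨a, fun y hy => hy.1.1⟩
    have hSclosed : IsClosed S := by
      have h3 := hcont.preimage_isClosed_of_isClosed isClosed_Icc
        (isClosed_Ici (a := (1:ℝ)))
      have : S = Set.Icc a b ∩ w ⁻¹' Set.Ici 1 := by
        ext y; simp [hSdef, Set.mem_Ici, and_comm]
      rw [this]
      exact h3
    have hmS : sInf S ∈ S := hSclosed.csInf_mem hSne hSbdd
    set m := sInf S with hmdef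
    have hmIcc : m ∈ Set.Icc a b := hmS.1
    have hm1 : 1 ≤ w m := hmS.2
    have hlt : ∀ y ∈ Set.Ico a m, w y ≤ 1 := by
      intro y hy
      by_contra hgt
      push_neg at hgt
      have hyb : y ∈ Set.Icc a b := ⟨hy.1, hy.2.le.trans hmIcc.2⟩
      have hsub := intermediate_value_Icc hy.1
        (hcont.mono (Set.Icc_subset_Icc le_rfl hyb.2))
      have h1mem : (1:ℝ) ∈ Set.Icc (w a) (w y) := ⟨by rw [h0]; norm_num, hgt.le⟩
      obtain ⟨x1, hx1, hx1w⟩ := hsub h1mem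
      have hx1b : x1 ∈ Set.Icc a b := ⟨hx1.1, hx1.2.trans hyb.2⟩
      have hmx1 : m ≤ x1 := csInf_le hSbdd ⟨hx1b, hx1w.ge⟩
      linarith [hx1.2, hy.2]
    have := key m hmIcc hlt
    linarith
  intro x hx
  exact key x hx (fun y hy => (hS y ⟨hy.1, hy.2.le.trans hx.2⟩).le)

/-- If `(θ, η)` solves the stationary Hamiltonian system on `[1/2, 1]`
with `θ(1/2) = θ̃`, `η(1/2) = 0`, `θ(1) = θ0` and `η > 0` on `(1/2, 1]`, then
`G(z) > G(θ̃)` on `(θ̃, θ0]` and `M = √2 ∫_{θ̃}^{θ0} c(z)/√(G(z) − G(θ̃)) dz`. -/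
theorem stmt_6
    (α1 α2 α3 α4 α5 α6 K1 K3 γ1 γ2 Cbar θ0 : ℝ)
    (hγ1 : γ1 = α3 - α2) (hγ2 : γ2 = α6 - α5) (hγ1pos : 0 < γ1)
    (hK1 : 0 < K1) (hK3 : 0 < K3) (hCbar : 0 < Cbar)
    (g h c G : ℝ → ℝ)
    (hg : ∀ θ : ℝ, g θ = α1 * Real.sin θ ^ 2 * Real.cos θ ^ 2
        + (α5 - α2) / 2 * Real.sin θ ^ 2 + (α3 + α6) / 2 * Real.cos θ ^ 2 + α4 / 2)
    (hh : ∀ θ : ℝ, h θ = (γ1 + γ2 * Real.cos (2 * θ)) / 2)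
    (hc : ∀ θ : ℝ, c θ = Real.sqrt (K1 * Real.cos θ ^ 2 + K3 * Real.sin θ ^ 2))
    (hdamp : ∀ θ : ℝ, Cbar ≤ g θ - h θ ^ 2 / γ1 ∧ g θ - h θ ^ 2 / γ1 ≤ g θ)
    (hθ0 : h θ0 ≠ 0)
    (hG : ∀ θ : ℝ, G θ = ∫ s in θ0..θ, h s / g s)
    (hcase : γ2 = γ1 ∨ γ2 = -γ1)
    (M θt : ℝ) (hM : 0 < M) (θf η : ℝ → ℝ)
    (hode : ∀ x ∈ Set.Icc (1/2:ℝ) 1,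
      HasDerivAt θf (η x / c (θf x) ^ 2) x ∧
      HasDerivAt η (deriv c (θf x) / c (θf x) ^ 3 * η x ^ 2
        + h (θf x) / g (θf x) * M ^ 2) x)
    (hmid : θf (1/2) = θt) (hηmid : η (1/2) = 0) (hend : θf 1 = θ0)
    (hηpos : ∀ x ∈ Set.Ioc (1/2:ℝ) 1, 0 < η x) :
    (∀ z ∈ Set.Ioc θt θ0, G θt < G z) ∧
    M = Real.sqrt 2 * ∫ z in θt..θ0, c z / Real.sqrt (G z - G θt) := by
  -- basic positivity
  have gpos : ∀ t, 0 < g t := fun t => lt_of_lt_of_le hCbar ((hdamp t).1.trans (hdamp t).2)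
  have gCbar : ∀ t, Cbar ≤ g t := fun t => ((hdamp t).1.trans (hdamp t).2)
  have qpos : ∀ t, 0 < K1 * Real.cos t ^ 2 + K3 * Real.sin t ^ 2 := by
    intro t
    nlinarith [sin_sq_add_cos_sq t, sq_nonneg (Real.sin t), sq_nonneg (Real.cos t),
      mul_pos hK1 hK3, mul_nonneg hK1.le (sq_nonneg (Real.cos t)),
      mul_nonneg hK3.le (sq_nonneg (Real.sin t))]
  have cpos : ∀ t, 0 < c t := by
    intro t; rw [hc]; exact Real.sqrt_pos.2 (qpos t)
  have hnn : ∀ t, 0 ≤ h t := by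
    intro t
    have h1 := Real.neg_one_le_cos (2*t)
    rw [hh]
    rcases hcase with h2 | h2 <;>
      nlinarith [Real.neg_one_le_cos (2*t), Real.cos_le_one (2*t)]
  have hgnn : ∀ t, 0 ≤ h t / g t := fun t => div_nonneg (hnn t) (gpos t).le
  -- c bounds
  have cmin : ∀ t, Real.sqrt (min K1 K3) ≤ c t := by
    intro t; rw [hc]
    apply Real.sqrt_le_sqrt
    have hs := sin_sq_add_cos_sq t
    have h1 : min K1 K3 * (Real.sin t ^ 2 + Real.cos t ^ 2)
        ≤ K1 * Real.cos t ^ 2 + K3 * Real.sin t ^ 2 := by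
      nlinarith [mul_nonneg (sub_nonneg.2 (min_le_left K1 K3)) (sq_nonneg (Real.cos t)),
        mul_nonneg (sub_nonneg.2 (min_le_right K1 K3)) (sq_nonneg (Real.sin t))]
    rw [hs, mul_one] at h1
    exact h1
  have cmax : ∀ t, c t ≤ Real.sqrt (K1 + K3) := by
    intro t; rw [hc]
    apply Real.sqrt_le_sqrt
    nlinarith [sin_sq_add_cos_sq t, mul_nonneg hK1.le (sq_nonneg (Real.sin t)),
      mul_nonneg hK3.le (sq_nonneg (Real.cos t))]
  have cmpos : 0 < Real.sqrt (min K1 K3) := Real.sqrt_pos.2 (lt_min hK1 hK3)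
  -- differentiability of c
  have cfun : c = fun s => Real.sqrt (K1 * Real.cos s ^ 2 + K3 * Real.sin s ^ 2) := funext hc
  have hdc : ∀ t, HasDerivAt c (deriv c t) t := by
    intro t
    have : DifferentiableAt ℝ c t := by
      rw [cfun]
      exact DifferentiableAt.sqrt (by fun_prop) (ne_of_gt (qpos t))
    exact this.hasDerivAt
  -- continuity of basic functions
  have hcont : Continuous c := by
    rw [cfun]; exact Real.continuous_sqrt.comp (by fun_prop)
  have gcont : Continuous g := by
    rw [funext hg]; fun_prop
  have hhcont : Continuous h := by
    rw [funext hh]; fun_prop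
  have hgcont : Continuous (fun s => h s / g s) :=
    hhcont.div gcont (fun t => (gpos t).ne')
  -- G is differentiable with derivative h/g
  have hdG : ∀ t, HasDerivAt G (h t / g t) t := by
    intro t
    have := intervalIntegral.integral_hasDerivAt_right
      (hgcont.intervalIntegrable θ0 t)
      (hgcont.stronglyMeasurableAtFilter volume (nhds t))
      hgcont.continuousAt
    rw [funext hG]
    exact this
  have Gcont : Continuous G := by
    have : Differentiable ℝ G := fun t => (hdG t).differentiableAt
    exact this.continuous
  have Gmono : Monotone G := by
    apply monotone_of_deriv_nonneg (fun t => (hdG t).differentiableAt)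
    intro t; rw [(hdG t).deriv]; exact hgnn t
  -- continuity of θf and η
  have θcont : ContinuousOn θf (Set.Icc (1/2:ℝ) 1) :=
    fun x hx => ((hode x hx).1.continuousAt.continuousWithinAt)
  have ηcont : ContinuousOn η (Set.Icc (1/2:ℝ) 1) :=
    fun x hx => ((hode x hx).2.continuousAt.continuousWithinAt)
  -- energy identity
  have energy : ∀ x ∈ Set.Icc (1/2:ℝ) 1,
      η x ^ 2 = 2 * M^2 * c (θf x) ^ 2 * (G (θf x) - G θt) := by
    set E : ℝ → ℝ := fun x => η x ^ 2 / c (θf x) ^ 2 - 2*M^2*(G (θf x) - G θt) with hE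
    have hdE : ∀ x ∈ Set.Icc (1/2:ℝ) 1, HasDerivAt E 0 x := by
      intro x hx
      obtain ⟨hθ', hη'⟩ := hode x hx
      have hcθ : HasDerivAt (fun y => c (θf y)) (deriv c (θf x) * (η x / c (θf x)^2)) x :=
        (hdc (θf x)).comp x hθ'
      have hGθ : HasDerivAt (fun y => G (θf y)) (h (θf x) / g (θf x) * (η x / c (θf x)^2)) x :=
        (hdG (θf x)).comp x hθ'
      have h1 : HasDerivAt (fun y => η y ^ 2)
          (2 * η x * (deriv c (θf x) / c (θf x) ^ 3 * η x ^ 2 + h (θf x) / g (θf x) * M ^ 2)) x := by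
        simpa [mul_comm, mul_assoc] using hη'.fun_pow 2
      have h2 : HasDerivAt (fun y => c (θf y) ^ 2)
          (2 * c (θf x) * (deriv c (θf x) * (η x / c (θf x)^2))) x := by
        simpa [mul_comm, mul_assoc] using hcθ.fun_pow 2
      have h3 := h1.fun_div h2 (pow_ne_zero 2 (cpos _).ne')
      have h4 : HasDerivAt (fun y => 2*M^2*(G (θf y) - G θt))
          (2*M^2 * (h (θf x) / g (θf x) * (η x / c (θf x)^2))) x :=
        (hGθ.sub_const (G θt)).const_mul (2*M^2)
      have h5 := h3.fun_sub h4
      rw [hE]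
      refine h5.congr_deriv ?_
      have hcne : c (θf x) ≠ 0 := (cpos _).ne'
      have hgne : g (θf x) ≠ 0 := (gpos _).ne'
      field_simp
      ring
    have hEc : ∀ x ∈ Set.Icc (1/2:ℝ) 1, E x = E (1/2) :=
      constant_of_has_deriv_right_zero
        (fun x hx => (hdE x hx).continuousAt.continuousWithinAt)
        (fun x hx => (hdE x (Set.Ico_subset_Icc_self hx)).hasDerivWithinAt)
    have hE0 : E (1/2) = 0 := by
      simp only [hE]
      rw [hηmid, hmid]
      simp
    intro x hx
    have hx0 := hEc x hx
    rw [hE0, hE] at hx0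
    simp only [] at hx0
    have hcne : c (θf x) ≠ 0 := (cpos _).ne'
    field_simp at hx0
    linarith
  -- θf is strictly monotone
  have θmono : StrictMonoOn θf (Set.Icc (1/2:ℝ) 1) := by
    apply strictMonoOn_of_hasDerivWithinAt_pos (convex_Icc _ _) θcont
      (f' := fun x => η x / c (θf x) ^ 2)
    · intro x hx
      rw [interior_Icc] at hx
      exact ((hode x (Set.Ioo_subset_Icc_self hx)).1).hasDerivWithinAt
    · intro x hx
      rw [interior_Icc] at hx
      exact div_pos (hηpos x ⟨hx.1, hx.2.le⟩) (pow_pos (cpos _) 2)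
  have θtlt : θt < θ0 := by
    rw [← hmid, ← hend]
    exact θmono ⟨le_refl _, by norm_num⟩ ⟨by norm_num, le_refl _⟩ (by norm_num)
  have θfmem : ∀ x ∈ Set.Icc (1/2:ℝ) 1, θf x ∈ Set.Icc θt θ0 := by
    intro x hx
    constructor
    · rw [← hmid]
      exact θmono.monotoneOn ⟨le_refl _, by norm_num⟩ hx hx.1
    · rw [← hend]
      exact θmono.monotoneOn hx ⟨by norm_num, le_refl _⟩ hx.2
  have θfgt : ∀ x ∈ Set.Ioc (1/2:ℝ) 1, θt < θf x := by
    intro x hx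
    rw [← hmid]
    exact θmono ⟨le_refl _, by norm_num⟩ ⟨hx.1.le, hx.2⟩ hx.1
  have ηnn : ∀ x ∈ Set.Icc (1/2:ℝ) 1, 0 ≤ η x := by
    intro x hx
    rcases eq_or_lt_of_le hx.1 with heq | hlt
    · rw [← heq, hηmid]
    · exact (hηpos x ⟨hlt, hx.2⟩).le
  -- part 1
  have part1 : ∀ z ∈ Set.Ioc θt θ0, G θt < G z := by
    intro z hz
    have hsub : Set.Icc θt θ0 ⊆ θf '' Set.Icc (1/2:ℝ) 1 := by
      have h4 := intermediate_value_Icc (by norm_num : (1/2:ℝ) ≤ 1) θcont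
      rw [hmid, hend] at h4
      exact h4
    obtain ⟨x, hx, hfx⟩ := hsub (Set.Ioc_subset_Icc_self hz)
    have hxne : x ≠ 1/2 := by
      rintro rfl
      rw [hmid] at hfx
      exact lt_irrefl θt (hfx ▸ hz.1)
    have hxIoc : x ∈ Set.Ioc (1/2:ℝ) 1 := ⟨lt_of_le_of_ne hx.1 (Ne.symm hxne), hx.2⟩
    have hη := hηpos x hxIoc
    have hen := energy x hx
    rw [hfx] at hen
    have h1 : 0 < η x ^ 2 := pow_pos hη 2
    have h2 : 0 < 2 * M^2 * c z ^ 2 := mul_pos (mul_pos two_pos (pow_pos hM 2)) (pow_pos (cpos z) 2)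
    nlinarith [h1, h2]
  refine ⟨part1, ?_⟩
  -- h θt > 0
  have hθtpos : 0 < h θt := by
    rcases (hnn θt).lt_or_eq with hpos | heq
    · exact hpos
    exfalso
    have hθt0 : h θt = 0 := heq.symm
    have e0 : γ1 + γ2 * Real.cos (2*θt) = 0 := by
      have h5 := hh θt
      rw [hθt0] at h5
      linarith
    have hc2 : γ2 * Real.cos (2*θt) = -γ1 := by linarith
    have hcsq : Real.cos (2*θt) ^ 2 = 1 := by
      rcases hcase with h2 | h2 <;> rw [h2] at hc2
      · have h8 : Real.cos (2*θt) = -1 :=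
          mul_left_cancel₀ hγ1pos.ne' (by linarith : γ1 * Real.cos (2*θt) = γ1 * (-1))
        rw [h8]; norm_num
      · have h8 : Real.cos (2*θt) = 1 :=
          mul_left_cancel₀ hγ1pos.ne' (by nlinarith : γ1 * Real.cos (2*θt) = γ1 * 1)
        rw [h8]; norm_num
    have hsin2 : Real.sin (2*θt) = 0 := by
      have h6 := sin_sq_add_cos_sq (2*θt)
      have h7 : Real.sin (2*θt) ^ 2 = 0 := by linarith
      exact pow_eq_zero_iff two_ne_zero |>.1 h7
    have htrig : ∀ s, h s = γ1 * Real.sin (s - θt) ^ 2 := by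
      intro s
      have hexp : Real.cos (2*s) = Real.cos (2*(s-θt)) * Real.cos (2*θt)
          - Real.sin (2*(s-θt)) * Real.sin (2*θt) := by
        rw [← Real.cos_add]
        congr 1
        ring
      rw [hsin2, mul_zero, sub_zero] at hexp
      rw [hh]
      have h1 := Real.cos_sq (s-θt)
      have h2 := sin_sq_add_cos_sq (s-θt)
      linear_combination (γ2/2) * hexp + (Real.cos (2*(s-θt))/2) * hc2 - γ1 * h2 + γ1 * h1
    have Gcubic : ∀ z, θt ≤ z → G z - G θt ≤ γ1/(3*Cbar) * (z - θt)^3 := by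
      intro z hz
      have hGz : G z - G θt = ∫ s in θt..z, h s / g s := by
        rw [hG z, hG θt]
        exact intervalIntegral.integral_interval_sub_left
          (hgcont.intervalIntegrable _ _) (hgcont.intervalIntegrable _ _)
      have hbound : ∀ s ∈ Set.Icc θt z, h s / g s ≤ γ1/Cbar * (s - θt)^2 := by
        intro s hs
        have h1 : h s ≤ γ1 * (s - θt)^2 := by
          rw [htrig s]
          exact mul_le_mul_of_nonneg_left Real.sin_sq_le_sq hγ1pos.le
        calc h s / g s ≤ (γ1 * (s - θt)^2) / Cbar :=
              div_le_div₀ (by positivity) h1 hCbar (gCbar s)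
          _ = γ1/Cbar * (s - θt)^2 := by ring
      have hInt2 : IntervalIntegrable (fun s => γ1/Cbar * (s - θt)^2) volume θt z :=
        (Continuous.intervalIntegrable (by fun_prop) _ _)
      have hle := intervalIntegral.integral_mono_on hz
        (hgcont.intervalIntegrable _ _) hInt2 hbound
      rw [hGz]
      refine hle.trans ?_
      rw [intervalIntegral.integral_const_mul]
      have h7 : (∫ s in θt..z, (s - θt)^2) = ∫ s in θt - θt..z - θt, s^2 :=
        intervalIntegral.integral_comp_sub_right (fun s => s^2) θt
      rw [h7, sub_self]
      rw [integral_pow]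
      apply le_of_eq
      push_cast
      rw [mul_comm (3:ℝ) Cbar, ← div_div]
      ring
    -- Gronwall
    have hS2nn : (0:ℝ) ≤ 2*M^2*γ1/(3*Cbar) := by positivity
    set k := Real.sqrt (2*M^2*γ1/(3*Cbar)) with hk
    set m0 := Real.sqrt (min K1 K3) with hm0
    set K0 := k / m0 with hK0def
    have hK0 : 0 ≤ K0 := div_nonneg (Real.sqrt_nonneg _) (Real.sqrt_nonneg _)
    have hknn : 0 ≤ k := Real.sqrt_nonneg _
    have hbd : ∀ x ∈ Set.Icc (1/2:ℝ) 1, θf x - θt ≤ 1 →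
        η x / c (θf x)^2 ≤ K0 * (θf x - θt) := by
      intro x hx hw1
      have hw0 : 0 ≤ θf x - θt := sub_nonneg.2 (θfmem x hx).1
      set w := θf x - θt with hwdef
      have hΔ : G (θf x) - G θt ≤ γ1/(3*Cbar) * w^3 := Gcubic (θf x) (θfmem x hx).1
      have hw3 : w^3 ≤ w^2 := by nlinarith
      have hen := energy x hx
      have hη2 : η x^2 ≤ (2*M^2*γ1/(3*Cbar)) * (c (θf x) * w)^2 := by
        have hpos1 : (0:ℝ) ≤ 2*M^2*c (θf x)^2 := by positivity
        have e1 : 2*M^2*c (θf x)^2 * (G (θf x) - G θt)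
            ≤ 2*M^2*c (θf x)^2 * (γ1/(3*Cbar) * w^3) := mul_le_mul_of_nonneg_left hΔ hpos1
        have hpos2 : (0:ℝ) ≤ 2*M^2*c (θf x)^2 * (γ1/(3*Cbar)) := by positivity
        calc η x^2 = 2*M^2*c (θf x)^2 * (G (θf x) - G θt) := hen
          _ ≤ 2*M^2*c (θf x)^2 * (γ1/(3*Cbar) * w^3) := e1
          _ ≤ 2*M^2*c (θf x)^2 * (γ1/(3*Cbar) * w^2) := by
              have h9 := mul_le_mul_of_nonneg_left hw3 hpos2
              linarith
          _ = (2*M^2*γ1/(3*Cbar)) * (c (θf x) * w)^2 := by ring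
      have hηle : η x ≤ k * (c (θf x) * w) := by
        have h6 : η x = Real.sqrt (η x^2) := (Real.sqrt_sq (ηnn x hx)).symm
        rw [h6, hk]
        have h7 : Real.sqrt (2*M^2*γ1/(3*Cbar)) * (c (θf x) * w)
            = Real.sqrt ((2*M^2*γ1/(3*Cbar)) * (c (θf x) * w)^2) := by
          rw [Real.sqrt_mul hS2nn, Real.sqrt_sq (mul_nonneg (cpos _).le hw0)]
        rw [h7]
        exact Real.sqrt_le_sqrt hη2
      rw [div_le_iff₀ (pow_pos (cpos _) 2)]
      have hm0c : m0 ≤ c (θf x) := cmin _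
      have e3 : k * (c (θf x) * w) ≤ K0 * w * c (θf x)^2 := by
        rw [hK0def, div_mul_eq_mul_div, div_mul_eq_mul_div, le_div_iff₀ cmpos]
        nlinarith [mul_nonneg (mul_nonneg (mul_nonneg hknn hw0) (cpos (θf x)).le)
          (sub_nonneg.2 hm0c)]
      exact hηle.trans e3
    have hzero := aux_gronwall (a := (1/2:ℝ)) (b := 1) (K := K0)
      (w := fun x => θf x - θt) (w' := fun x => η x / c (θf x)^2)
      (by norm_num) hK0
      (fun x hx => ((hode x hx).1.sub_const θt))
      (by show θf (1/2) - θt = 0; rw [hmid, sub_self])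
      (fun x hx => div_nonneg (ηnn x hx) (pow_pos (cpos _) 2).le)
      (fun x hx => sub_nonneg.2 (θfmem x hx).1)
      hbd
    have hfin : θf 1 - θt = 0 := hzero 1 ⟨by norm_num, le_rfl⟩
    rw [hend] at hfin
    linarith
  -- linear lower bound for G near θt
  obtain ⟨K, hKpos, hKlin⟩ : ∃ K > 0, ∀ z ∈ Set.Ioc θt θ0, K * (z - θt) ≤ G z - G θt := by
    have hcg : ContinuousAt (fun s => h s / g s) θt := hgcont.continuousAt
    have hval : 0 < h θt / g θt := div_pos hθtpos (gpos θt)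
    set m := h θt / g θt / 2 with hm
    have hmpos : 0 < m := half_pos hval
    have hev : ∀ᶠ s in 𝓝 θt, m < h s / g s :=
      hcg.eventually (eventually_gt_nhds (by linarith))
    obtain ⟨δ0, hδ0pos, hδ0⟩ := Metric.eventually_nhds_iff.1 hev
    set δ := min (δ0/2) (θ0 - θt) with hδ
    have hδpos : 0 < δ := lt_min (by linarith) (by linarith [θtlt])
    have hδle : δ ≤ θ0 - θt := min_le_right _ _
    have hmineq : ∀ s ∈ Set.Icc θt (θt+δ), m ≤ h s / g s := by
      intro s hs
      have h9 : dist s θt < δ0 := by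
        rw [Real.dist_eq, abs_lt]
        have h5 := min_le_left (δ0/2) (θ0 - θt)
        constructor
        · linarith [hs.1]
        · linarith [hs.2]
      exact (hδ0 h9).le
    have hlow : ∀ z, θt ≤ z → z ≤ θt + δ → m * (z - θt) ≤ G z - G θt := by
      intro z hz1 hz2
      have hGz : G z - G θt = ∫ s in θt..z, h s / g s := by
        rw [hG z, hG θt]
        exact intervalIntegral.integral_interval_sub_left
          (hgcont.intervalIntegrable _ _) (hgcont.intervalIntegrable _ _)
      rw [hGz]
      have h5 := intervalIntegral.integral_mono_on hz1 (intervalIntegrable_const (μ := volume) (c := m))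
        (hgcont.intervalIntegrable _ _) (fun s hs => hmineq s ⟨hs.1, hs.2.trans hz2⟩)
      rw [intervalIntegral.integral_const] at h5
      rw [smul_eq_mul] at h5
      linarith [h5]
    refine ⟨m * δ / (θ0 - θt), div_pos (mul_pos hmpos hδpos) (sub_pos.2 θtlt), ?_⟩
    intro z hz
    rcases le_or_gt z (θt + δ) with hle | hgt
    · have h1 := hlow z hz.1.le hle
      have h2 : m*δ/(θ0-θt) ≤ m := by
        rw [div_le_iff₀ (sub_pos.2 θtlt)]
        nlinarith [mul_le_mul_of_nonneg_left hδle hmpos.le]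
      nlinarith [mul_nonneg (sub_nonneg.2 h2) (sub_pos.2 hz.1).le]
    · have h1 := hlow (θt+δ) (by linarith) le_rfl
      have h2 : G (θt+δ) ≤ G z := Gmono (by linarith)
      have h3 : m*δ/(θ0-θt) * (z-θt) ≤ m*δ := by
        rw [div_mul_eq_mul_div, div_le_iff₀ (sub_pos.2 θtlt)]
        have h10 : z - θt ≤ θ0 - θt := by linarith [hz.2]
        nlinarith [mul_le_mul_of_nonneg_left h10 (mul_pos hmpos hδpos).le]
      linarith
  -- the singular integrand
  set f : ℝ → ℝ := fun z => c z / Real.sqrt (G z - G θt) with hf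
  have sqc : Continuous (fun z => Real.sqrt (G z - G θt)) :=
    Real.continuous_sqrt.comp (Gcont.sub continuous_const)
  have fcont : ContinuousOn f (Set.Ioc θt θ0) := by
    intro z hz
    have hΔpos : 0 < G z - G θt := sub_pos.2 (part1 z hz)
    exact (hcont.continuousAt.div sqc.continuousAt (Real.sqrt_pos.2 hΔpos).ne').continuousWithinAt
  have fInt : IntervalIntegrable f volume θt θ0 := by
    have meas : AEStronglyMeasurable f (volume.restrict (Set.Ioc θt θ0)) :=
      fcont.aestronglyMeasurable measurableSet_Ioc
    set B := Real.sqrt (K1+K3) / Real.sqrt K with hB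
    have domInt : IntervalIntegrable (fun z => B * (z - θt) ^ (-(1/2):ℝ)) volume θt θ0 := by
      have h1 : IntervalIntegrable (fun z => z ^ (-(1/2):ℝ)) volume 0 (θ0 - θt) :=
        intervalIntegral.intervalIntegrable_rpow' (by norm_num)
      have h2 := (h1.comp_sub_right θt).const_mul B
      rw [zero_add, sub_add_cancel] at h2
      exact h2
    have bound : ∀ z ∈ Set.Ioc θt θ0, ‖f z‖ ≤ B * (z - θt) ^ (-(1/2):ℝ) := by
      intro z hz
      have hzpos : 0 < z - θt := sub_pos.2 hz.1
      have hΔk : K * (z - θt) ≤ G z - G θt := hKlin z hz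
      have hfnn : 0 ≤ f z := div_nonneg (cpos z).le (Real.sqrt_nonneg _)
      rw [Real.norm_eq_abs, abs_of_nonneg hfnn]
      have e5 : (z - θt) ^ (-(1/2):ℝ) = (Real.sqrt (z - θt))⁻¹ := by
        rw [Real.rpow_neg hzpos.le, Real.sqrt_eq_rpow]
      rw [e5]
      have e6 : B * (Real.sqrt (z - θt))⁻¹ = Real.sqrt (K1+K3) / Real.sqrt (K*(z-θt)) := by
        rw [Real.sqrt_mul hKpos.le, hB]
        field_simp
      rw [e6]
      exact div_le_div₀ (Real.sqrt_nonneg _) (cmax z)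
        (Real.sqrt_pos.2 (mul_pos hKpos hzpos)) (Real.sqrt_le_sqrt hΔk)
    constructor
    · apply MeasureTheory.Integrable.mono domInt.1 meas
      rw [ae_restrict_iff' measurableSet_Ioc]
      exact ae_of_all _ (fun z hz => (bound z hz).trans
        ((le_abs_self _).trans (Real.norm_eq_abs _).symm.le))
    · rw [Set.Ioc_eq_empty (not_lt.2 θtlt.le)]
      exact integrableOn_empty
  -- sqrt form of energy
  have ηf : ∀ x ∈ Set.Icc (1/2:ℝ) 1,
      η x = Real.sqrt 2 * M * c (θf x) * Real.sqrt (G (θf x) - G θt) := by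
    intro x hx
    have hen := energy x hx
    have h6 : η x = Real.sqrt (η x^2) := (Real.sqrt_sq (ηnn x hx)).symm
    have hnn2 : 0 ≤ Real.sqrt 2 * M * c (θf x) :=
      mul_nonneg (mul_nonneg (Real.sqrt_nonneg 2) hM.le) (cpos _).le
    have h7 : 2*M^2*c (θf x)^2*(G (θf x) - G θt)
        = (Real.sqrt 2 * M * c (θf x))^2 * (G (θf x) - G θt) := by
      have e := Real.sq_sqrt (by norm_num : (0:ℝ) ≤ 2)
      linear_combination (-(M^2) * c (θf x)^2 * (G (θf x) - G θt)) * e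
    rw [h6, hen, h7, Real.sqrt_mul (sq_nonneg _), Real.sqrt_sq hnn2]
  -- substitution
  have subst : ∀ x ∈ Set.Ioc (1/2:ℝ) 1,
      (∫ z in θf x..θ0, f z) = (1 - x) * (Real.sqrt 2 * M) := by
    intro x hx
    have hx1 : x ≤ 1 := hx.2
    have huIcc : Set.uIcc x 1 = Set.Icc x 1 := Set.uIcc_of_le hx1
    have hsubI : Set.Icc x 1 ⊆ Set.Icc (1/2:ℝ) 1 := Set.Icc_subset_Icc hx.1.le le_rfl
    have himg : θf '' (Set.uIcc x 1) ⊆ Set.Ioc θt θ0 := by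
      rw [huIcc]
      rintro _ ⟨y, hy, rfl⟩
      have hyI : y ∈ Set.Icc (1/2:ℝ) 1 := hsubI hy
      exact ⟨θfgt y ⟨hx.1.trans_le hy.1, hy.2⟩, (θfmem y hyI).2⟩
    have hsub := intervalIntegral.integral_comp_smul_deriv'' (a := x) (b := 1)
      (f := θf) (f' := fun y => η y / c (θf y)^2) (g := f)
      (θcont.mono (huIcc ▸ hsubI))
      (by
        intro y hy
        rw [min_eq_left hx1, max_eq_right hx1] at hy
        exact ((hode y (hsubI (Set.Ioo_subset_Icc_self hy))).1).hasDerivWithinAt)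
      (by
        apply ContinuousOn.div ((ηcont.mono (huIcc ▸ hsubI)))
        · exact ((hcont.comp_continuousOn (θcont.mono (huIcc ▸ hsubI))).pow 2)
        · exact fun y hy => (pow_pos (cpos _) 2).ne')
      (fcont.mono himg)
    rw [hend] at hsub
    rw [← hsub]
    rw [intervalIntegral.integral_congr (g := fun y => Real.sqrt 2 * M) ?_]
    · rw [intervalIntegral.integral_const, smul_eq_mul]
    · intro y hy
      rw [huIcc] at hy
      have hyI : y ∈ Set.Icc (1/2:ℝ) 1 := hsubI hy
      have hyIoc : y ∈ Set.Ioc (1/2:ℝ) 1 := ⟨hx.1.trans_le hy.1, hy.2⟩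
      have hΔpos : 0 < G (θf y) - G θt :=
        sub_pos.2 (part1 (θf y) ⟨θfgt y hyIoc, (θfmem y hyI).2⟩)
      have hcne : c (θf y) ≠ 0 := (cpos _).ne'
      have hsne : Real.sqrt (G (θf y) - G θt) ≠ 0 := (Real.sqrt_pos.2 hΔpos).ne'
      show (η y / c (θf y)^2) • f (θf y) = Real.sqrt 2 * M
      rw [smul_eq_mul, hf, ηf y hyI]
      field_simp
  -- additivity
  set I : ℝ := ∫ z in θt..θ0, f z with hI
  have addi : ∀ x ∈ Set.Ioc (1/2:ℝ) 1,
      (∫ z in θt..θf x, f z) = I - (1 - x) * (Real.sqrt 2 * M) := by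
    intro x hx
    have hxI : x ∈ Set.Icc (1/2:ℝ) 1 := ⟨hx.1.le, hx.2⟩
    have hmem := θfmem x hxI
    have h1 : IntervalIntegrable f volume θt (θf x) := by
      apply fInt.mono_set
      rw [Set.uIcc_of_le θtlt.le, Set.uIcc_of_le hmem.1]
      exact Set.Icc_subset_Icc le_rfl hmem.2
    have h2 : IntervalIntegrable f volume (θf x) θ0 := by
      apply fInt.mono_set
      rw [Set.uIcc_of_le θtlt.le, Set.uIcc_of_le hmem.2]
      exact Set.Icc_subset_Icc hmem.1 le_rfl
    have h3 := intervalIntegral.integral_add_adjacent_intervals h1 h2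
    have h4 := subst x hx
    rw [← hI] at h3
    linarith [h3, h4]
  -- limit
  have limI : I = Real.sqrt 2 * M / 2 := by
    have hIntIcc : IntegrableOn f (Set.uIcc θt θ0) volume := by
      rw [Set.uIcc_of_le θtlt.le]
      exact (integrableOn_Icc_iff_integrableOn_Ioc).2 fInt.1
    have hPc := intervalIntegral.continuousOn_primitive_interval (a := θt) (b := θ0)
      (μ := volume) (f := f) hIntIcc
    have hPθt : ContinuousWithinAt (fun a => ∫ z in θt..a, f z) (Set.uIcc θt θ0) θt :=
      hPc θt (by rw [Set.uIcc_of_le θtlt.le]; exact Set.left_mem_Icc.2 θtlt.le)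
    have hNeBot : (𝓝[Set.Ioc (1/2:ℝ) 1] (1/2)).NeBot := by
      rw [← mem_closure_iff_nhdsWithin_neBot, closure_Ioc (by norm_num : (1/2:ℝ) ≠ 1)]
      exact Set.left_mem_Icc.2 (by norm_num)
    have hθtend : Tendsto θf (𝓝[Set.Ioc (1/2:ℝ) 1] (1/2)) (𝓝[Set.uIcc θt θ0] θt) := by
      rw [tendsto_nhdsWithin_iff]
      constructor
      · have hca : ContinuousAt θf (1/2) :=
          (hode (1/2) ⟨le_rfl, by norm_num⟩).1.continuousAt
        have h5 := hca.tendsto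
        rw [hmid] at h5
        exact h5.mono_left nhdsWithin_le_nhds
      · refine eventually_mem_nhdsWithin.mono (fun y hy => ?_)
        rw [Set.uIcc_of_le θtlt.le]
        exact θfmem y ⟨hy.1.le, hy.2⟩
    have hA : Tendsto (fun x => ∫ z in θt..θf x, f z)
        (𝓝[Set.Ioc (1/2:ℝ) 1] (1/2)) (𝓝 0) := by
      have h6 := hPθt.tendsto.comp hθtend
      rwa [intervalIntegral.integral_same] at h6
    have hB2 : Tendsto (fun x : ℝ => I - (1-x) * (Real.sqrt 2 * M))
        (𝓝[Set.Ioc (1/2:ℝ) 1] (1/2)) (𝓝 (I - (1 - 1/2) * (Real.sqrt 2 * M))) := by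
      apply Tendsto.mono_left ?_ nhdsWithin_le_nhds
      exact (Continuous.tendsto (by fun_prop) _)
    have hA2 : Tendsto (fun x => ∫ z in θt..θf x, f z)
        (𝓝[Set.Ioc (1/2:ℝ) 1] (1/2)) (𝓝 (I - (1 - 1/2) * (Real.sqrt 2 * M))) :=
      hB2.congr' (eventually_mem_nhdsWithin.mono (fun x hx => (addi x hx).symm))
    have h7 := tendsto_nhds_unique hA hA2
    norm_num at h7
    linarith [h7]
  -- conclusion
  show M = Real.sqrt 2 * I
  rw [limI]
  rw [← mul_div_assoc, ← mul_assoc, Real.mul_self_sqrt (by norm_num : (0:ℝ) ≤ 2)]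
  ring
end

section
/- Let ū > 0 and let (u, θ) be a stationary solution such that θ′(1/2) = 0 and θ′(x) > 0 for all x ∈ (1/2, 1]. Set θ̃ := θ(1/2). Then G(θ̃) < 0 and ū = 2 · (∫_{θ̃}^{θ0} c(z)/√(G(z) − G(θ̃)) dz) · (∫_{θ̃}^{θ0} c(z)/(g(z)√(G(z) − G(θ̃))) dz). -/
open Real Set Filter MeasureTheory
open Topology

set_option maxHeartbeats 1000000

private lemma aux_int {c G F : ℝ → ℝ} {θt θ1 m A : ℝ} (hlt : θt < θ1) (hm : 0 < m) (hA : 0 < A)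
    (hc : Continuous c) (hG : Continuous G) (hF : Continuous F)
    (hlow : ∀ z ∈ Set.Icc θt θ1, m * (z - θt) ≤ G z - G θt) :
    IntervalIntegrable (fun z => F z * c z / Real.sqrt (2*A*(G z - G θt))) volume θt θ1 := by
  set Ψ := fun z => F z * c z / Real.sqrt (2*A*(G z - G θt)) with hΨ
  -- positivity of the denominator on Ioc
  have hden : ∀ z ∈ Set.Ioc θt θ1, 0 < Real.sqrt (2*A*(G z - G θt)) := by
    intro z hz
    apply Real.sqrt_pos.2
    have h1 : m * (z - θt) ≤ G z - G θt := hlow z ⟨hz.1.le, hz.2⟩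
    have h2 : 0 < m * (z - θt) := mul_pos hm (by linarith [hz.1])
    nlinarith
  -- bound for the numerator
  obtain ⟨C, hC⟩ := isCompact_Icc.exists_bound_of_continuousOn
    (s := Set.Icc θt θ1) ((hF.mul hc).continuousOn)
  set B := max C 0 with hB
  have hBnn : 0 ≤ B := le_max_right _ _
  have hCB : ∀ z ∈ Set.Icc θt θ1, ‖F z * c z‖ ≤ B := fun z hz => (hC z hz).trans (le_max_left _ _)
  -- the dominating function
  set D := fun z : ℝ => B / Real.sqrt (2*A*m) * (z - θt) ^ (-(1/2) : ℝ) with hD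
  have hDint : IntervalIntegrable D volume θt θ1 := by
    have h0 : IntervalIntegrable (fun x : ℝ => x ^ (-(1/2) : ℝ)) volume 0 (θ1 - θt) :=
      intervalIntegral.intervalIntegrable_rpow' (by norm_num)
    have h1 := h0.comp_sub_right θt
    rw [zero_add, sub_add_cancel] at h1
    exact h1.const_mul _
  have hDon : IntegrableOn D (Set.Ioc θt θ1) := by
    rwa [intervalIntegrable_iff_integrableOn_Ioc_of_le hlt.le] at hDint
  have hmeas : AEStronglyMeasurable Ψ (volume.restrict (Set.Ioc θt θ1)) := by
    apply ContinuousOn.aestronglyMeasurable _ measurableSet_Ioc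
    apply ContinuousOn.div ((hF.mul hc).continuousOn)
    · exact (Real.continuous_sqrt.comp (by fun_prop)).continuousOn
    · exact fun z hz => (hden z hz).ne'
  have hbound : ∀ z ∈ Set.Ioc θt θ1, ‖Ψ z‖ ≤ D z := by
    intro z hz
    have hz0 : (0:ℝ) < z - θt := by linarith [hz.1]
    have hsq : Real.sqrt (2*A*m) * Real.sqrt (z - θt) ≤ Real.sqrt (2*A*(G z - G θt)) := by
      rw [← Real.sqrt_mul (by positivity)]
      apply Real.sqrt_le_sqrt
      have := hlow z ⟨hz.1.le, hz.2⟩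
      nlinarith
    have hpos2 : (0:ℝ) < Real.sqrt (2*A*m) * Real.sqrt (z - θt) := by positivity
    have h1 : ‖Ψ z‖ = ‖F z * c z‖ / Real.sqrt (2*A*(G z - G θt)) := by
      rw [hΨ, norm_div, Real.norm_eq_abs (Real.sqrt _), abs_of_nonneg (Real.sqrt_nonneg _)]
    rw [h1, hD]
    have h2 : ‖F z * c z‖ / Real.sqrt (2*A*(G z - G θt)) ≤
        B / (Real.sqrt (2*A*m) * Real.sqrt (z - θt)) :=
      div_le_div₀ (hBnn) (hCB z ⟨hz.1.le, hz.2⟩) hpos2 hsq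
    refine h2.trans (le_of_eq ?_)
    show B / (Real.sqrt (2*A*m) * Real.sqrt (z - θt))
        = B / Real.sqrt (2*A*m) * (z - θt) ^ (-(1/2) : ℝ)
    rw [Real.rpow_neg hz0.le, ← Real.sqrt_eq_rpow]
    simp only [div_eq_mul_inv, mul_inv]
    ring
  have : IntegrableOn Ψ (Set.Ioc θt θ1) := by
    apply Integrable.mono' hDon hmeas
    exact (ae_restrict_iff' measurableSet_Ioc).2 (ae_of_all _ hbound)
  rwa [intervalIntegrable_iff_integrableOn_Ioc_of_le hlt.le]


private lemma aux_key {c G F : ℝ → ℝ} {θt θ1 A : ℝ} (hlt : θt < θ1) (hA : 0 < A)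
    (hc : Continuous c) (hG : Continuous G) (hF : Continuous F)
    (hGpos : ∀ z, θt < z → z ≤ θ1 → G θt < G z)
    (f : ℝ → ℝ) (hfd : Differentiable ℝ f) (hfd' : Continuous (deriv f))
    (hf12 : f (1/2) = θt) (hf1 : f 1 = θ1)
    (hfm : MonotoneOn f (Set.Icc (1/2 : ℝ) 1))
    (hfs : ∀ x, 1/2 < x → x ≤ 1 → θt < f x)
    (henergy : ∀ x ∈ Set.Icc (1/2:ℝ) 1,
      c (f x) * deriv f x = Real.sqrt (2*A*(G (f x) - G θt)))
    (hInt : IntervalIntegrable (fun z => F z * c z / Real.sqrt (2*A*(G z - G θt))) volume θt θ1) :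
    (∫ z in θt..θ1, F z * c z / Real.sqrt (2*A*(G z - G θt))) = ∫ x in (1/2 : ℝ)..1, F (f x) := by
  set Ψ := fun z => F z * c z / Real.sqrt (2*A*(G z - G θt)) with hΨ
  -- denominator is positive on (θt, θ1]
  have hden : ∀ z, θt < z → z ≤ θ1 → 0 < Real.sqrt (2*A*(G z - G θt)) := by
    intro z h1 h2
    have := hGpos z h1 h2
    apply Real.sqrt_pos.2
    nlinarith
  -- continuity of Ψ away from θt
  have hΨcont : ∀ s, θt < s → ContinuousOn Ψ (Set.Icc s θ1) := by
    intro s hs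
    apply ContinuousOn.div ((hF.mul hc).continuousOn)
    · exact (Real.continuous_sqrt.comp (by fun_prop)).continuousOn
    · exact fun z hz => (hden z (lt_of_lt_of_le hs hz.1) hz.2).ne'
  -- substitution identity on [t, 1] for 1/2 < t ≤ 1
  have subst : ∀ t, 1/2 < t → t ≤ 1 → (∫ z in f t..θ1, Ψ z) = ∫ x in t..1, F (f x) := by
    intro t ht ht1
    have himg : f '' (Set.uIcc t 1) ⊆ Set.Icc (f t) θ1 := by
      rw [Set.uIcc_of_le ht1]
      rintro z ⟨x, hx, rfl⟩
      have hx' : x ∈ Set.Icc (1/2 : ℝ) 1 := ⟨ht.le.trans hx.1, hx.2⟩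
      constructor
      · exact hfm ⟨ht.le, ht1⟩ hx' hx.1
      · rw [← hf1]; exact hfm hx' ⟨by linarith [hx.1], le_refl 1⟩ hx.2
    have key := intervalIntegral.integral_comp_smul_deriv'' (f := f) (f' := deriv f) (g := Ψ)
      (a := t) (b := 1) (hfd.continuous.continuousOn)
      (fun x _ => (hfd x).hasDerivAt.hasDerivWithinAt) (hfd'.continuousOn)
      ((hΨcont (f t) (hfs t ht ht1)).mono himg)
    rw [hf1] at key
    rw [← key]
    apply intervalIntegral.integral_congr
    intro x hx
    rw [Set.uIcc_of_le ht1] at hx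
    have hx' : x ∈ Set.Icc (1/2 : ℝ) 1 := ⟨ht.le.trans hx.1, hx.2⟩
    have hfx1 : θt < f x := hfs x (lt_of_lt_of_le ht hx.1) hx.2
    have hfx2 : f x ≤ θ1 := by
      rw [← hf1]; exact hfm hx' ⟨by linarith [hx.1], le_refl 1⟩ hx.2
    have hd := hden (f x) hfx1 hfx2
    have he := henergy x hx'
    show deriv f x • Ψ (f x) = F (f x)
    rw [hΨ, smul_eq_mul]
    show deriv f x * (F (f x) * c (f x) / Real.sqrt (2*A*(G (f x) - G θt))) = F (f x)
    rw [← mul_div_assoc, div_eq_iff hd.ne', ← he]; ring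
  -- the primitive of Ψ is continuous on [θt, θ1]
  have hIntOn : IntegrableOn Ψ (Set.uIcc θt θ1) := by
    rw [Set.uIcc_of_le hlt.le, integrableOn_Icc_iff_integrableOn_Ioc]
    rwa [intervalIntegrable_iff_integrableOn_Ioc_of_le hlt.le] at hInt
  have hPcont : ContinuousOn (fun s => ∫ z in s..θ1, Ψ z) (Set.Icc θt θ1) := by
    have := intervalIntegral.continuousOn_primitive_interval_left (f := Ψ) (μ := volume)
      (a := θt) (b := θ1) hIntOn
    rwa [Set.uIcc_of_le hlt.le] at this
  -- limits as t → (1/2)+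
  have hne : (𝓝[>] (1/2 : ℝ)).NeBot := nhdsGT_neBot _
  have hmem : Set.Ioc (1/2:ℝ) 1 ∈ 𝓝[>] (1/2 : ℝ) :=
    Ioc_mem_nhdsGT_of_mem ⟨le_refl _, by norm_num⟩
  -- LHS tendsto
  have hfto : Tendsto (fun t => f t) (𝓝[>] (1/2:ℝ)) (𝓝[Set.Icc θt θ1] θt) := by
    apply tendsto_nhdsWithin_of_tendsto_nhds_of_eventually_within
    · have : Tendsto f (𝓝 (1/2:ℝ)) (𝓝 (f (1/2))) := (hfd.continuous.tendsto _)
      rw [hf12] at this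
      exact this.mono_left nhdsWithin_le_nhds
    · filter_upwards [hmem] with t ht
      refine ⟨(hfs t ht.1 ht.2).le, ?_⟩
      rw [← hf1]; exact hfm ⟨ht.1.le, ht.2⟩ ⟨by linarith [ht.1], le_refl 1⟩ ht.2
  have hL : Tendsto (fun t => ∫ z in f t..θ1, Ψ z) (𝓝[>] (1/2:ℝ))
      (𝓝 (∫ z in θt..θ1, Ψ z)) := by
    have := (hPcont θt ⟨le_refl _, hlt.le⟩).tendsto.comp hfto
    exact this
  -- RHS tendsto
  have hR : Tendsto (fun t => ∫ x in t..1, F (f x)) (𝓝[>] (1/2:ℝ))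
      (𝓝 (∫ x in (1/2:ℝ)..1, F (f x))) := by
    have hcont : Continuous fun t => ∫ x in t..1, F (f x) := by
      have h1 : Continuous fun t => ∫ x in (1:ℝ)..t, F (f x) :=
        intervalIntegral.continuous_primitive
          (fun a b => ((hF.comp hfd.continuous).intervalIntegrable a b)) 1
      have : (fun t => ∫ x in t..1, F (f x)) = fun t => -∫ x in (1:ℝ)..t, F (f x) := by
        funext t; rw [intervalIntegral.integral_symm]
      rw [this]; exact h1.neg
    exact (hcont.tendsto _).mono_left nhdsWithin_le_nhds
  have heq : (fun t => ∫ z in f t..θ1, Ψ z) =ᶠ[𝓝[>] (1/2:ℝ)]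
      (fun t => ∫ x in t..1, F (f x)) := by
    filter_upwards [hmem] with t ht
    exact subst t ht.1 ht.2
  exact tendsto_nhds_unique (hL.congr' heq) hR



/-- For a stationary solution with `θ′(1/2) = 0` and `θ′ > 0` on
`(1/2, 1]`, setting `θ̃ := θ(1/2)` one has `G(θ̃) < 0` and
`ū = 2 (∫_{θ̃}^{θ0} c/√(G − G(θ̃))) (∫_{θ̃}^{θ0} c/(g √(G − G(θ̃))))`. -/
theorem stmt_7
    (α1 α2 α3 α4 α5 α6 K1 K3 γ1 γ2 Cbar θ0 : ℝ)
    (hγ1 : γ1 = α3 - α2) (hγ2 : γ2 = α6 - α5) (hγ1pos : 0 < γ1)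
    (hK1 : 0 < K1) (hK3 : 0 < K3) (hCbar : 0 < Cbar)
    (g h c G : ℝ → ℝ)
    (hg : ∀ θ : ℝ, g θ = α1 * Real.sin θ ^ 2 * Real.cos θ ^ 2
        + (α5 - α2) / 2 * Real.sin θ ^ 2 + (α3 + α6) / 2 * Real.cos θ ^ 2 + α4 / 2)
    (hh : ∀ θ : ℝ, h θ = (γ1 + γ2 * Real.cos (2 * θ)) / 2)
    (hc : ∀ θ : ℝ, c θ = Real.sqrt (K1 * Real.cos θ ^ 2 + K3 * Real.sin θ ^ 2))
    (hdamp : ∀ θ : ℝ, Cbar ≤ g θ - h θ ^ 2 / γ1 ∧ g θ - h θ ^ 2 / γ1 ≤ g θ)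
    (hθ0 : h θ0 ≠ 0)
    (hG : ∀ θ : ℝ, G θ = ∫ s in θ0..θ, h s / g s)
    (hcase : γ2 = γ1 ∨ γ2 = -γ1)
    (ub : ℝ) (hub : 0 < ub) (u th : ℝ → ℝ)
    (hu : ContDiff ℝ 2 u) (hth : ContDiff ℝ 2 th)
    (hode1 : ∀ x ∈ Set.Icc (0:ℝ) 1, deriv (fun y => g (th y) * deriv u y) x = 0)
    (hode2 : ∀ x ∈ Set.Icc (0:ℝ) 1,
      c (th x) * deriv (fun y => c (th y) * deriv th y) x - h (th x) * deriv u x = 0)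
    (hu0 : u 0 = 0) (hu1 : u 1 = ub) (hth0 : th 0 = θ0) (hth1 : th 1 = θ0)
    (hmid : deriv th (1/2) = 0) (hpos : ∀ x ∈ Set.Ioc (1/2:ℝ) 1, 0 < deriv th x) :
    G (th (1/2)) < 0 ∧
    ub = 2 * (∫ z in th (1/2)..θ0, c z / Real.sqrt (G z - G (th (1/2)))) *
      (∫ z in th (1/2)..θ0, c z / (g z * Real.sqrt (G z - G (th (1/2))))) := by
  -- continuity of the coefficient functions
  have hgE : g = fun θ : ℝ => α1 * Real.sin θ ^ 2 * Real.cos θ ^ 2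
      + (α5 - α2) / 2 * Real.sin θ ^ 2 + (α3 + α6) / 2 * Real.cos θ ^ 2 + α4 / 2 := funext hg
  have hgcont : Continuous g := by rw [hgE]; fun_prop
  have hgdiff : Differentiable ℝ g := by rw [hgE]; fun_prop
  have hhcont : Continuous h := by rw [funext hh]; fun_prop
  have hccont : Continuous c := by
    rw [funext hc]; exact Real.continuous_sqrt.comp (by fun_prop)
  -- positivity
  have hgCb : ∀ s, Cbar ≤ g s := fun s => (hdamp s).1.trans (hdamp s).2
  have hgpos : ∀ s, 0 < g s := fun s => lt_of_lt_of_le hCbar (hgCb s)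
  set cm := Real.sqrt (min K1 K3) with hcmdef
  have hcm : 0 < cm := Real.sqrt_pos.2 (lt_min hK1 hK3)
  have hcge : ∀ s, cm ≤ c s := by
    intro s; rw [hc s]
    apply Real.sqrt_le_sqrt
    nlinarith [Real.sin_sq_add_cos_sq s, min_le_left K1 K3, min_le_right K1 K3,
      sq_nonneg (Real.sin s), sq_nonneg (Real.cos s)]
  have hcpos : ∀ s, 0 < c s := fun s => lt_of_lt_of_le hcm (hcge s)
  have hh0 : ∀ s, 0 ≤ h s := by
    intro s; rw [hh s]
    rcases hcase with h' | h' <;> rw [h'] <;>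
      nlinarith [Real.neg_one_le_cos (2*s), Real.cos_le_one (2*s)]
  have hhθ0 : 0 < h θ0 := (hh0 θ0).lt_of_ne (Ne.symm hθ0)
  -- h vanishes only at isolated points: facts about zeros
  have hzero : ∀ s, h s = 0 → Real.sin (2*s) = 0 ∧ ∀ z, h z ≤ γ1 * (z - s)^2 := by
    intro s hs
    rw [hh s] at hs
    have hsin2 : Real.sin (2*s) = 0 ∧ γ2 * Real.cos (2*s) = -γ1 := by
      have h1 : γ2 * Real.cos (2*s) = -γ1 := by linarith
      refine ⟨?_, h1⟩
      have hcsq : Real.cos (2*s) ^ 2 = 1 := by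
        rcases hcase with h' | h' <;> rw [h'] at h1
        · have h2 : γ1 * (Real.cos (2*s) + 1) = 0 := by linarith
          rcases mul_eq_zero.1 h2 with h3 | h3
          · exact absurd h3 hγ1pos.ne'
          · have : Real.cos (2*s) = -1 := by linarith
            rw [this]; norm_num
        · have h2 : γ1 * (Real.cos (2*s) - 1) = 0 := by linarith
          rcases mul_eq_zero.1 h2 with h3 | h3
          · exact absurd h3 hγ1pos.ne'
          · have : Real.cos (2*s) = 1 := by linarith
            rw [this]; norm_num
      have := Real.sin_sq_add_cos_sq (2*s)
      have : Real.sin (2*s) ^ 2 = 0 := by nlinarith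
      exact pow_eq_zero_iff (n := 2) (by norm_num) |>.1 this
    obtain ⟨hsin, hcoseq⟩ := hsin2
    refine ⟨hsin, fun z => ?_⟩
    rw [hh z]
    have hexp : Real.cos (2*z) = Real.cos (2*s) * Real.cos (2*(z-s)) := by
      have : (2*z) = 2*s + 2*(z-s) := by ring
      rw [this, Real.cos_add, hsin]; ring
    have hγ2cos : γ2 * Real.cos (2*z) = -γ1 * Real.cos (2*(z-s)) := by
      rw [hexp, ← mul_assoc, hcoseq]
    rw [hγ2cos]
    have hcb := Real.one_sub_sq_div_two_le_cos (x := 2*(z-s))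
    nlinarith [sq_nonneg (z - s)]
  have hnotid : ∀ x y : ℝ, x < y → ∃ s, x < s ∧ s < y ∧ 0 < h s := by
    intro x y hxy
    by_contra hcon
    push_neg at hcon
    have hz : ∀ s, x < s → s < y → h s = 0 :=
      fun s h1 h2 => le_antisymm (hcon s h1 h2) (hh0 s)
    set s1 := (x+y)/2 with hs1def
    set d := min 1 ((y-x)/4) with hddef
    have hd0 : 0 < d := lt_min one_pos (by linarith)
    have hd1 : d ≤ 1 := min_le_left _ _
    have hd2 : d ≤ (y-x)/4 := min_le_right _ _
    have hm1 : x < s1 ∧ s1 < y := ⟨by linarith, by linarith⟩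
    have hm2 : x < s1 + d ∧ s1 + d < y := ⟨by linarith, by linarith⟩
    obtain ⟨n1, hn1⟩ := Real.sin_eq_zero_iff.1 ((hzero s1 (hz s1 hm1.1 hm1.2)).1)
    obtain ⟨n2, hn2⟩ := Real.sin_eq_zero_iff.1 ((hzero (s1+d) (hz _ hm2.1 hm2.2)).1)
    have hkey : ((n2 - n1 : ℤ) : ℝ) * Real.pi = 2*d := by push_cast; nlinarith
    have hπ := Real.pi_gt_three
    have hpos' : (0:ℝ) < ((n2 - n1 : ℤ) : ℝ) := by nlinarith [Real.pi_pos]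
    have hk0 : (0:ℤ) < n2 - n1 := by exact_mod_cast hpos'
    have hge1 : (1:ℝ) ≤ ((n2 - n1 : ℤ) : ℝ) := by exact_mod_cast hk0
    nlinarith
  -- G is strictly monotone
  have hhg : Continuous (fun s => h s / g s) := hhcont.div hgcont fun s => (hgpos s).ne'
  have hgint : ∀ a b : ℝ, IntervalIntegrable (fun s => h s / g s) volume a b :=
    fun a b => hhg.intervalIntegrable a b
  have hGE : G = fun y => ∫ s in θ0..y, h s / g s := funext hG
  have hGd : ∀ y, HasDerivAt G (h y / g y) y := by
    intro y; rw [hGE]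
    exact intervalIntegral.integral_hasDerivAt_right (hgint θ0 y)
      (hhg.stronglyMeasurableAtFilter _ _) hhg.continuousAt
  have hGdiff : Differentiable ℝ G := fun y => (hGd y).differentiableAt
  have hGcont : Continuous G := hGdiff.continuous
  have hGsub : ∀ a b : ℝ, G b - G a = ∫ s in a..b, h s / g s := by
    intro a b; rw [hG a, hG b]
    exact intervalIntegral.integral_interval_sub_left (hgint θ0 b) (hgint θ0 a)
  have hGθ0 : G θ0 = 0 := by rw [hG θ0, intervalIntegral.integral_same]
  have hGlt : ∀ x y : ℝ, x < y → G x < G y := by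
    intro x y hxy
    obtain ⟨s, hs1, hs2, hs3⟩ := hnotid x y hxy
    have hev : ∀ᶠ z in 𝓝 s, h s / 2 < h z ∧ z ∈ Set.Ioo x y := by
      refine Filter.Eventually.and ?_ ?_
      · exact (hhcont.tendsto s).eventually (eventually_gt_nhds (by linarith))
      · exact eventually_of_mem (isOpen_Ioo.mem_nhds ⟨hs1, hs2⟩) fun z hz => hz
    obtain ⟨δ, hδ0, hδ⟩ := Metric.eventually_nhds_iff.1 hev
    have hmema : h s / 2 < h (s - δ/2) ∧ (s - δ/2) ∈ Set.Ioo x y := by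
      apply hδ; rw [Real.dist_eq, abs_of_nonpos (by linarith)]; linarith
    have hmemb : h s / 2 < h (s + δ/2) ∧ (s + δ/2) ∈ Set.Ioo x y := by
      apply hδ; rw [Real.dist_eq, abs_of_nonneg (by linarith)]; linarith
    have hmid' : 0 < ∫ z in (s - δ/2)..(s + δ/2), h z / g z := by
      apply intervalIntegral.intervalIntegral_pos_of_pos_on (hgint _ _) _ (by linarith)
      intro z hz
      have hzmem : h s / 2 < h z ∧ z ∈ Set.Ioo x y := by
        apply hδ; rw [Real.dist_eq, abs_lt]
        exact ⟨by linarith [hz.1], by linarith [hz.2]⟩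
      exact div_pos (by linarith [hzmem.1, hh0 s, hs3]) (hgpos z)
    have houter1 : 0 ≤ ∫ z in x..(s - δ/2), h z / g z :=
      intervalIntegral.integral_nonneg (by linarith [hmema.2.1])
        (fun z _ => div_nonneg (hh0 z) (hgpos z).le)
    have houter2 : 0 ≤ ∫ z in (s + δ/2)..y, h z / g z :=
      intervalIntegral.integral_nonneg (by linarith [hmemb.2.2])
        (fun z _ => div_nonneg (hh0 z) (hgpos z).le)
    have hsplit : G y - G x = (∫ z in x..(s - δ/2), h z / g z)
        + (∫ z in (s - δ/2)..(s + δ/2), h z / g z)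
        + ∫ z in (s + δ/2)..y, h z / g z := by
      have e1 := intervalIntegral.integral_add_adjacent_intervals (hgint x (s - δ/2))
        ((hgint (s - δ/2) (s + δ/2)).trans (hgint (s + δ/2) y))
      have e2 := intervalIntegral.integral_add_adjacent_intervals
        (hgint (s - δ/2) (s + δ/2)) (hgint (s + δ/2) y)
      rw [hGsub]
      linarith [e1, e2]
    linarith
  have hGsm : StrictMono G := fun a b hab => hGlt a b hab
  -- derivatives of u and th
  have h2eq : (2 : WithTop ℕ∞) = 1 + 1 := by norm_num
  have hthd : Differentiable ℝ th := hth.differentiable two_ne_zero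
  have hth1d : ContDiff ℝ 1 (deriv th) := by
    rw [h2eq] at hth; exact (contDiff_succ_iff_deriv.mp hth).2.2
  have hth'c : Continuous (deriv th) := hth1d.continuous
  have hth'd : Differentiable ℝ (deriv th) := hth1d.differentiable one_ne_zero
  have hud : Differentiable ℝ u := hu.differentiable two_ne_zero
  have hu1d : ContDiff ℝ 1 (deriv u) := by
    rw [h2eq] at hu; exact (contDiff_succ_iff_deriv.mp hu).2.2
  have hu'c : Continuous (deriv u) := hu1d.continuous
  -- the first integral of the first ODE
  set A := g (th 0) * deriv u 0 with hAdef
  have hqconst : ∀ x ∈ Set.Icc (0:ℝ) 1, g (th x) * deriv u x = A := by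
    have := constant_of_has_deriv_right_zero
      (f := fun y => g (th y) * deriv u y) (a := 0) (b := 1)
      (((hgdiff.comp hthd).mul (hu1d.differentiable one_ne_zero)).continuous.continuousOn)
      (fun x hx => by
        have hd : HasDerivAt (fun y => g (th y) * deriv u y)
            (deriv (fun y => g (th y) * deriv u y) x) x :=
          (((hgdiff.comp hthd).mul (hu1d.differentiable one_ne_zero)) x).hasDerivAt
        rw [hode1 x ⟨hx.1, hx.2.le⟩] at hd
        exact hd.hasDerivWithinAt)
    exact fun x hx => this x hx
  have hu'e : ∀ x ∈ Set.Icc (0:ℝ) 1, deriv u x = A / g (th x) := by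
    intro x hx
    rw [eq_div_iff (hgpos (th x)).ne']
    rw [mul_comm]; exact hqconst x hx
  -- FTC for u
  have hubint : ub = ∫ x in (0:ℝ)..1, A / g (th x) := by
    have h1 : ∫ y in (0:ℝ)..1, deriv u y = u 1 - u 0 :=
      intervalIntegral.integral_deriv_eq_sub (fun x _ => hud x) (hu'c.intervalIntegrable 0 1)
    rw [hu0, hu1, sub_zero] at h1
    rw [← h1]
    apply intervalIntegral.integral_congr
    intro x hx
    rw [Set.uIcc_of_le zero_le_one] at hx
    exact hu'e x hx
  have hgthint : ∀ a b : ℝ, IntervalIntegrable (fun x => A / g (th x)) volume a b :=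
    fun a b => (Continuous.intervalIntegrable (by fun_prop (disch := exact fun x => (hgpos (th x)).ne')) a b)
  have hApos : 0 < A := by
    by_contra hA
    push_neg at hA
    have : ub ≤ 0 := by
      rw [hubint]
      have := intervalIntegral.integral_nonneg (μ := volume) (f := fun x => -(A / g (th x)))
        (zero_le_one) (fun x _ => by
          have h1 : A / g (th x) ≤ 0 :=
            div_nonpos_iff.mpr (Or.inr ⟨hA, (hgpos (th x)).le⟩)
          linarith)
      have heq : (∫ x in (0:ℝ)..1, -(A / g (th x))) = -∫ x in (0:ℝ)..1, A / g (th x) :=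
        intervalIntegral.integral_neg
      rw [heq] at this
      linarith
    linarith
  -- differentiability of c ∘ th
  have hcth : Differentiable ℝ (fun y => c (th y)) := by
    have hceq : (fun y => c (th y))
        = fun y => Real.sqrt (K1 * Real.cos (th y) ^ 2 + K3 * Real.sin (th y) ^ 2) :=
      funext fun y => hc (th y)
    rw [hceq]
    intro y
    apply DifferentiableAt.sqrt (by fun_prop)
    have hposin : 0 < K1 * Real.cos (th y) ^ 2 + K3 * Real.sin (th y) ^ 2 := by
      rcases le_or_gt (Real.cos (th y) ^ 2) (1/2) with hcc | hcc
      · nlinarith [Real.sin_sq_add_cos_sq (th y), mul_nonneg hK1.le (sq_nonneg (Real.cos (th y)))]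
      · nlinarith [Real.sin_sq_add_cos_sq (th y), mul_nonneg hK3.le (sq_nonneg (Real.sin (th y)))]
    exact hposin.ne'
  set p := fun y => c (th y) * deriv th y with hpdef
  have hpd : Differentiable ℝ p := hcth.mul hth'd
  have hode2' : ∀ x ∈ Set.Icc (0:ℝ) 1, c (th x) * deriv p x = h (th x) * (A / g (th x)) := by
    intro x hx
    have h1 := hode2 x hx
    rw [hu'e x hx] at h1
    linarith
  have hGth : ∀ x : ℝ, HasDerivAt (fun y => G (th y)) (h (th x) / g (th x) * deriv th x) x :=
    fun x => (hGd (th x)).comp x (hthd x).hasDerivAt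
  have hEconst : ∀ x ∈ Set.Icc (0:ℝ) 1,
      p x * p x / 2 - A * G (th x) = p 0 * p 0 / 2 - A * G (th 0) := by
    apply constant_of_has_deriv_right_zero
      ((((hpd.continuous.mul hpd.continuous).div_const 2).sub
        (continuous_const.mul (hGdiff.comp hthd).continuous)).continuousOn)
    intro x hx
    have hx' : x ∈ Set.Icc (0:ℝ) 1 := ⟨hx.1, hx.2.le⟩
    have hd : HasDerivAt (fun y => p y * p y / 2 - A * G (th y))
        ((deriv p x * p x + p x * deriv p x)/2 - A * (h (th x) / g (th x) * deriv th x)) x :=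
      ((((hpd x).hasDerivAt.mul (hpd x).hasDerivAt).div_const 2).sub ((hGth x).const_mul A))
    have hpx : p x = c (th x) * deriv th x := by rw [hpdef]
    have e1 : p x * deriv p x = deriv th x * (h (th x) * (A / g (th x))) := by
      rw [hpx, ← hode2' x hx']; ring
    have hz : (deriv p x * p x + p x * deriv p x)/2
        - A * (h (th x) / g (th x) * deriv th x) = 0 := by
      have e2 : deriv p x * p x = p x * deriv p x := mul_comm _ _
      rw [e2]
      rw [show (p x * deriv p x + p x * deriv p x)/2 = p x * deriv p x by ring, e1]
      ring
    rw [hz] at hd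
    exact hd.hasDerivWithinAt
  have hp12 : p (1/2) = 0 := by
    show c (th (1/2)) * deriv th (1/2) = 0
    rw [hmid, mul_zero]
  have henergyIcc : ∀ x ∈ Set.Icc (0:ℝ) 1,
      p x * p x = 2*A*(G (th x) - G (th (1/2))) := by
    intro x hx
    have h1 := hEconst x hx
    have h2 := hEconst (1/2) (by norm_num)
    rw [hp12] at h2
    norm_num at h2
    linear_combination 2*h1 - 2*h2
  -- monotonicity of th on [1/2,1]
  have hthm : StrictMonoOn th (Set.Icc (1/2:ℝ) 1) := by
    apply strictMonoOn_of_deriv_pos (convex_Icc _ _) hthd.continuous.continuousOn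
    intro x hx; rw [interior_Icc] at hx; exact hpos x ⟨hx.1, hx.2.le⟩
  have hθtlt : th (1/2) < θ0 := by
    have := hthm (left_mem_Icc.2 (by norm_num)) (right_mem_Icc.2 (by norm_num)) (by norm_num)
    rwa [hth1] at this
  have hthub : ∀ x ∈ Set.Icc (1/2:ℝ) 1, th x ≤ θ0 := by
    intro x hx
    rcases eq_or_lt_of_le hx.2 with he | hlt'
    · rw [he, hth1]
    · have := hthm hx (right_mem_Icc.2 (by norm_num)) hlt'
      rw [hth1] at this; exact this.le
  have hthle : ∀ x ∈ Set.Icc (0:ℝ) 1, th (1/2) ≤ th x := by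
    intro x hx
    by_contra hlt'
    push_neg at hlt'
    have hG1 := hGlt _ _ hlt'
    have h2 := henergyIcc x hx
    nlinarith [mul_self_nonneg (p x)]
  have hth'z : ∀ x ∈ Set.Icc (0:ℝ) 1, deriv th x = 0 → th x = th (1/2) := by
    intro x hx hz
    have h2 := henergyIcc x hx
    have hpx : p x = 0 := by
      show c (th x) * deriv th x = 0
      rw [hz, mul_zero]
    rw [hpx] at h2
    have : G (th x) = G (th (1/2)) := by nlinarith
    exact hGsm.injective this
  -- h is positive at th (1/2) (Gronwall argument)
  have hhθt : 0 < h (th (1/2)) := by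
    rcases (hh0 (th (1/2))).lt_or_eq with hlt' | heq
    · exact hlt'
    exfalso
    have hbd := (hzero _ heq.symm).2
    have hw0 : (0:ℝ) < θ0 - th (1/2) := by linarith
    set B2 := 2*A*(γ1*(θ0 - th (1/2))/(3*Cbar)) with hB2def
    have hB2pos : 0 < B2 := by rw [hB2def]; positivity
    have hGcub : ∀ x ∈ Set.Icc (1/2:ℝ) 1,
        2*A*(G (th x) - G (th (1/2))) ≤ B2 * (th x - th (1/2))^2 := by
      intro x hx
      have hx0 : x ∈ Set.Icc (0:ℝ) 1 := ⟨by linarith [hx.1], hx.2⟩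
      have hwnn : 0 ≤ th x - th (1/2) := by linarith [hthle x hx0]
      have hub' : th x ≤ θ0 := hthub x hx
      have hval : (∫ s in th (1/2)..th x, γ1/Cbar * (s - th (1/2))^2)
          = γ1/Cbar * ((th x - th (1/2))^3/3) := by
        rw [intervalIntegral.integral_const_mul]
        congr 1
        rw [intervalIntegral.integral_comp_sub_right (fun s => s^2) (th (1/2)), sub_self,
          integral_pow]
        norm_num
      have hint1 : G (th x) - G (th (1/2)) ≤ γ1/Cbar * ((th x - th (1/2))^3/3) := by
        rw [hGsub, ← hval]
        apply intervalIntegral.integral_mono_on (by linarith) (hgint _ _)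
          (Continuous.intervalIntegrable (by fun_prop) _ _)
        intro s _
        have h1 : h s / g s ≤ h s / Cbar := div_le_div_of_nonneg_left (hh0 s) hCbar (hgCb s)
        have h2 : h s / Cbar ≤ (γ1 * (s - th (1/2))^2) / Cbar :=
          (div_le_div_iff_of_pos_right hCbar).2 (hbd s)
        calc h s / g s ≤ h s / Cbar := h1
          _ ≤ (γ1 * (s - th (1/2))^2) / Cbar := h2
          _ = γ1/Cbar * (s - th (1/2))^2 := by ring
      have h3 : (th x - th (1/2))^3 ≤ (θ0 - th (1/2)) * (th x - th (1/2))^2 := by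
        nlinarith [mul_nonneg (sub_nonneg.2 hub') (sq_nonneg (th x - th (1/2)))]
      have h4 : 2*A*(G (th x) - G (th (1/2))) ≤ 2*A*(γ1/Cbar * ((th x - th (1/2))^3/3)) :=
        mul_le_mul_of_nonneg_left hint1 (by positivity)
      have hmul := mul_le_mul_of_nonneg_left h3 (show (0:ℝ) ≤ 2*A*γ1/(3*Cbar) by positivity)
      have e : 2*A*(γ1/Cbar * ((th x - th (1/2))^3/3))
          = 2*A*γ1/(3*Cbar) * (th x - th (1/2))^3 := by ring
      have e2 : 2*A*γ1/(3*Cbar) * ((θ0 - th (1/2)) * (th x - th (1/2))^2)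
          = 2*A*(γ1*(θ0 - th (1/2))/(3*Cbar)) * (th x - th (1/2))^2 := by ring
      rw [hB2def]
      linarith [h4, hmul, e, e2]
    have hgron := norm_le_gronwallBound_of_norm_deriv_right_le
      (f := fun x => th x - th (1/2)) (f' := deriv th) (δ := 0) (K := Real.sqrt B2 / cm)
      (ε := 0) (a := (1/2:ℝ)) (b := 1)
      ((hthd.continuous.sub continuous_const).continuousOn)
      (fun x _ => ((hthd x).hasDerivAt.sub_const _).hasDerivWithinAt)
      (by simp)
      (by
        intro x hx
        have hx' : x ∈ Set.Icc (1/2:ℝ) 1 := ⟨hx.1, hx.2.le⟩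
        have hx0 : x ∈ Set.Icc (0:ℝ) 1 := ⟨by linarith [hx.1], hx.2.le⟩
        have hw : 0 ≤ th x - th (1/2) := by linarith [hthle x hx0]
        have he := henergyIcc x hx0
        have hb := hGcub x hx'
        have h1 : p x * p x ≤ B2 * (th x - th (1/2))^2 := by linarith
        have h2 : |p x| ≤ Real.sqrt B2 * (th x - th (1/2)) := by
          have hs1 : Real.sqrt (p x * p x) ≤ Real.sqrt (B2 * (th x - th (1/2))^2) :=
            Real.sqrt_le_sqrt h1
          rw [Real.sqrt_mul_self_eq_abs] at hs1
          rw [Real.sqrt_mul hB2pos.le, Real.sqrt_sq hw] at hs1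
          exact hs1
        have hpabs : |p x| = c (th x) * |deriv th x| := by
          show |c (th x) * deriv th x| = _
          rw [abs_mul, abs_of_pos (hcpos (th x))]
        have h3 : cm * |deriv th x| ≤ Real.sqrt B2 * (th x - th (1/2)) := by
          calc cm * |deriv th x| ≤ c (th x) * |deriv th x| :=
                mul_le_mul_of_nonneg_right (hcge (th x)) (abs_nonneg _)
            _ = |p x| := hpabs.symm
            _ ≤ _ := h2
        rw [Real.norm_eq_abs, Real.norm_eq_abs, abs_of_nonneg hw, add_zero]
        rw [div_mul_eq_mul_div, le_div_iff₀ hcm]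
        linarith [h3]
        )
    have hcontr := hgron 1 (right_mem_Icc.2 (by norm_num))
    rw [gronwallBound_ε0_δ0] at hcontr
    have hzero1 : th 1 - th (1/2) = 0 := by
      have := norm_le_zero_iff.1 hcontr
      simpa using this
    rw [hth1] at hzero1
    linarith
  -- th' never vanishes on [0,1/2)
  have hnz : ∀ x ∈ Set.Ico (0:ℝ) (1/2), deriv th x ≠ 0 := by
    intro x0 hx0 hzero'
    have hx0' : x0 ∈ Set.Icc (0:ℝ) 1 := ⟨hx0.1, by linarith [hx0.2]⟩
    have hthx0 : th x0 = th (1/2) := hth'z x0 hx0' hzero'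
    obtain ⟨xm, hxm, hmax⟩ := isCompact_Icc.exists_isMaxOn (Set.nonempty_Icc.2 hx0.2.le)
      (hthd.continuous.continuousOn (s := Set.Icc x0 (1/2)))
    have hIccsub : Set.Icc x0 (1/2:ℝ) ⊆ Set.Icc (0:ℝ) 1 :=
      fun y hy => ⟨le_trans hx0.1 hy.1, by linarith [hy.2]⟩
    have hallθt : ∀ y ∈ Set.Icc x0 (1/2:ℝ), th y = th (1/2) := by
      rcases le_or_gt (th xm) (th (1/2)) with hle' | hgt
      · intro y hy
        exact le_antisymm (le_trans (hmax hy) hle') (hthle y (hIccsub hy))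
      · exfalso
        have hxm1 : xm ≠ x0 := by intro hceq; rw [hceq, hthx0] at hgt; exact lt_irrefl _ hgt
        have hxm2 : xm ≠ (1/2:ℝ) := by intro hceq; rw [hceq] at hgt; exact lt_irrefl _ hgt
        have hxmIoo : xm ∈ Set.Ioo x0 (1/2:ℝ) :=
          ⟨lt_of_le_of_ne hxm.1 (Ne.symm hxm1), lt_of_le_of_ne hxm.2 hxm2⟩
        have hloc : IsLocalMax th xm := hmax.isLocalMax (Icc_mem_nhds hxmIoo.1 hxmIoo.2)
        have heq2 := hth'z xm (hIccsub hxm) hloc.deriv_eq_zero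
        rw [heq2] at hgt
        exact lt_irrefl _ hgt
    set x1 := (x0 + 1/2)/2 with hx1def
    have hx1Ioo : x1 ∈ Set.Ioo x0 (1/2:ℝ) :=
      ⟨by rw [hx1def]; linarith [hx0.2], by rw [hx1def]; linarith [hx0.2]⟩
    have hx1Icc : x1 ∈ Set.Icc (0:ℝ) 1 :=
      ⟨by linarith [hx1Ioo.1, hx0.1], by linarith [hx1Ioo.2]⟩
    have hpev : p =ᶠ[𝓝 x1] (fun _ => 0) := by
      filter_upwards [isOpen_Ioo.mem_nhds hx1Ioo] with y hy
      have hder : deriv th y = 0 := by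
        have hev : th =ᶠ[𝓝 y] (fun _ => th (1/2)) := by
          filter_upwards [isOpen_Ioo.mem_nhds hy] with z hz
          exact hallθt z ⟨hz.1.le, hz.2.le⟩
        rw [hev.deriv_eq, deriv_const]
      show c (th y) * deriv th y = 0
      rw [hder, mul_zero]
    have hdp : deriv p x1 = 0 := by rw [hpev.deriv_eq, deriv_const]
    have hodeeq := hode2' x1 hx1Icc
    rw [hdp, mul_zero] at hodeeq
    have hthx1 : th x1 = th (1/2) := hallθt x1 ⟨hx1Ioo.1.le, hx1Ioo.2.le⟩
    rw [hthx1] at hodeeq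
    have hposmul : 0 < h (th (1/2)) * (A / g (th (1/2))) :=
      mul_pos hhθt (div_pos hApos (hgpos _))
    linarith
  have hth'neg : ∀ x ∈ Set.Ico (0:ℝ) (1/2), deriv th x < 0 := by
    obtain ⟨ξ, hξIoo, hξval⟩ := exists_hasDerivAt_eq_slope th (deriv th)
      (by norm_num : (0:ℝ) < 1/2) (hthd.continuous.continuousOn)
      (fun x _ => (hthd x).hasDerivAt)
    have hξneg : deriv th ξ < 0 := by
      rw [hξval, hth0]
      apply div_neg_of_neg_of_pos (by linarith) (by norm_num)
    intro x hx
    rcases lt_trichotomy (deriv th x) 0 with hn | hz | hp'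
    · exact hn
    · exact absurd hz (hnz x hx)
    · exfalso
      have hξI : ξ ∈ Set.Ico (0:ℝ) (1/2) := ⟨hξIoo.1.le, hξIoo.2⟩
      have hsub : Set.uIcc x ξ ⊆ Set.Ico (0:ℝ) (1/2) :=
        (Set.ordConnected_Ico).uIcc_subset hx hξI
      have hmem0 : (0:ℝ) ∈ Set.uIcc (deriv th x) (deriv th ξ) :=
        Set.mem_uIcc.2 (Or.inr ⟨hξneg.le, hp'.le⟩)
      obtain ⟨y, hy, hyval⟩ := intermediate_value_uIcc (hth'c.continuousOn) hmem0
      exact hnz y (hsub hy) hyval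
  have hw0' : (0:ℝ) < θ0 - th (1/2) := by linarith
  -- linear lower bound on G - G(th(1/2))
  have hGposOn : ∀ z, th (1/2) < z → z ≤ θ0 → G (th (1/2)) < G z := fun z h1 _ => hGlt _ _ h1
  obtain ⟨m, hm, hlow⟩ :
      ∃ m : ℝ, 0 < m ∧ ∀ z ∈ Set.Icc (th (1/2)) θ0,
        m * (z - th (1/2)) ≤ G z - G (th (1/2)) := by
    set r := h (th (1/2)) / g (th (1/2)) / 2 with hrdef
    have hr : 0 < r := div_pos (div_pos hhθt (hgpos _)) two_pos
    have hevr : ∀ᶠ z in 𝓝 (th (1/2)), r < h z / g z := by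
      apply (hhg.tendsto (th (1/2))).eventually (eventually_gt_nhds ?_)
      rw [hrdef]; linarith [div_pos hhθt (hgpos (th (1/2)))]
    obtain ⟨δ, hδ0, hδ⟩ := Metric.eventually_nhds_iff.1 hevr
    set δ' := min (δ/2) (θ0 - th (1/2)) with hδ'def
    have hδ'0 : 0 < δ' := lt_min (by linarith) hw0'
    have hδ'le : δ' ≤ δ/2 := min_le_left _ _
    have hδ'le2 : δ' ≤ θ0 - th (1/2) := min_le_right _ _
    have hstep : ∀ z, th (1/2) ≤ z → z ≤ th (1/2) + δ' →
        r * (z - th (1/2)) ≤ G z - G (th (1/2)) := by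
      intro z hz1 hz2
      rw [hGsub]
      have hconst : (∫ _ in th (1/2)..z, r) = (z - th (1/2)) * r := by
        rw [intervalIntegral.integral_const, smul_eq_mul]
      rw [show r * (z - th (1/2)) = (z - th (1/2)) * r by ring, ← hconst]
      apply intervalIntegral.integral_mono_on hz1 (intervalIntegrable_const) (hgint _ _)
      intro s hs
      have hd : dist s (th (1/2)) < δ := by
        rw [Real.dist_eq, abs_of_nonneg (by linarith [hs.1])]
        linarith [hs.2, hz2, hδ'le]
      exact (hδ hd).le
    refine ⟨min r (r * δ' / (θ0 - th (1/2))), lt_min hr (by positivity), ?_⟩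
    intro z hz
    rcases le_or_gt z (th (1/2) + δ') with hcase' | hcase'
    · calc min r (r * δ' / (θ0 - th (1/2))) * (z - th (1/2)) ≤ r * (z - th (1/2)) :=
          mul_le_mul_of_nonneg_right (min_le_left _ _) (by linarith [hz.1])
        _ ≤ _ := hstep z hz.1 hcase'
    · have h1 : G (th (1/2) + δ') - G (th (1/2)) ≤ G z - G (th (1/2)) := by
        have := hGsm.monotone (show th (1/2) + δ' ≤ z from hcase'.le)
        linarith
      have h2 : r * δ' ≤ G (th (1/2) + δ') - G (th (1/2)) := by
        have h2' := hstep (th (1/2) + δ') (by linarith) (le_refl _)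
        rw [show th (1/2) + δ' - th (1/2) = δ' by ring] at h2'
        exact h2'
      have h3 : min r (r * δ' / (θ0 - th (1/2))) * (z - th (1/2))
          ≤ (r * δ' / (θ0 - th (1/2))) * (z - th (1/2)) :=
        mul_le_mul_of_nonneg_right (min_le_right _ _) (by linarith [hz.1])
      have h4 : (r * δ' / (θ0 - th (1/2))) * (z - th (1/2)) ≤ r * δ' := by
        rw [div_mul_eq_mul_div, div_le_iff₀ hw0']
        nlinarith [mul_nonneg (mul_nonneg hr.le hδ'0.le) (sub_nonneg.2 hz.2)]
      linarith
  -- integrability of the two singular integrands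
  have hAg : Continuous (fun w => A / g w) :=
    continuous_const.div hgcont fun w => (hgpos w).ne'
  have hInt1 := aux_int (F := fun _ : ℝ => (1:ℝ)) hθtlt hm hApos hccont hGcont
    continuous_const hlow
  have hInt2 := aux_int (F := fun w => A / g w) hθtlt hm hApos hccont hGcont hAg hlow
  -- energy in square-root form on [1/2, 1]
  have hsqrtEn : ∀ x ∈ Set.Icc (1/2:ℝ) 1,
      c (th x) * deriv th x = Real.sqrt (2*A*(G (th x) - G (th (1/2)))) := by
    intro x hx
    have hx0 : x ∈ Set.Icc (0:ℝ) 1 := ⟨by linarith [hx.1], hx.2⟩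
    have he := henergyIcc x hx0
    have hpnn : 0 ≤ p x := by
      rcases eq_or_lt_of_le hx.1 with he' | hlt'
      · rw [← he', hp12]
      · exact (mul_pos (hcpos (th x)) (hpos x ⟨hlt', hx.2⟩)).le
    calc c (th x) * deriv th x = p x := rfl
      _ = Real.sqrt (p x * p x) := (Real.sqrt_mul_self hpnn).symm
      _ = _ := by rw [he]
  have hths : ∀ x, 1/2 < x → x ≤ 1 → th (1/2) < th x := fun x h1 h2 =>
    hthm (left_mem_Icc.2 (by norm_num)) ⟨by linarith, h2⟩ h1
  -- the reflected solution
  set f2 := fun x : ℝ => th (1 - x) with hf2def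
  have hf2d : Differentiable ℝ f2 := hthd.comp ((differentiable_id).const_sub 1)
  have hf2der : ∀ x, HasDerivAt f2 (-deriv th (1 - x)) x := by
    intro x
    have h1 : HasDerivAt (fun y : ℝ => 1 - y) (-1) x := (hasDerivAt_id x).const_sub 1
    have h2 := ((hthd (1 - x)).hasDerivAt).comp x h1
    rw [mul_neg_one] at h2; exact h2
  have hf2der' : deriv f2 = fun x => -deriv th (1 - x) := funext fun x => (hf2der x).deriv
  have hf2'c : Continuous (deriv f2) := by
    rw [hf2der']; exact (hth'c.comp (by fun_prop)).neg
  have hf212 : f2 (1/2) = th (1/2) := by show th (1 - 1/2) = th (1/2); norm_num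
  have hf21 : f2 1 = θ0 := by show th (1 - 1) = θ0; norm_num [hth0]
  have hanti : StrictAntiOn th (Set.Icc (0:ℝ) (1/2)) := by
    apply strictAntiOn_of_deriv_neg (convex_Icc _ _) hthd.continuous.continuousOn
    intro x hx; rw [interior_Icc] at hx; exact hth'neg x ⟨hx.1.le, hx.2⟩
  have hf2m : MonotoneOn f2 (Set.Icc (1/2:ℝ) 1) := by
    intro x hx y hy hxy
    rcases eq_or_lt_of_le hxy with rfl | hlt'
    · exact le_refl _
    · exact (hanti (⟨by linarith [hy.2], by linarith [hy.1]⟩ : (1-y) ∈ Set.Icc (0:ℝ) (1/2))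
        (⟨by linarith [hx.2], by linarith [hx.1]⟩ : (1-x) ∈ Set.Icc (0:ℝ) (1/2))
        (by linarith)).le
  have hf2s : ∀ x, 1/2 < x → x ≤ 1 → th (1/2) < f2 x := by
    intro x h1 h2
    exact hanti (⟨by linarith, by linarith⟩ : (1-x) ∈ Set.Icc (0:ℝ) (1/2))
      (⟨by norm_num, by norm_num⟩ : (1/2:ℝ) ∈ Set.Icc (0:ℝ) (1/2)) (by linarith)
  have hsqrtEn2 : ∀ x ∈ Set.Icc (1/2:ℝ) 1,
      c (f2 x) * deriv f2 x = Real.sqrt (2*A*(G (f2 x) - G (th (1/2)))) := by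
    intro x hx
    have hy : 1 - x ∈ Set.Icc (0:ℝ) 1 := ⟨by linarith [hx.2], by linarith [hx.1]⟩
    have he := henergyIcc (1 - x) hy
    have hder : deriv f2 x = -deriv th (1 - x) := (hf2der x).deriv
    have hth'np : deriv th (1 - x) ≤ 0 := by
      rcases eq_or_lt_of_le hx.1 with he' | hlt'
      · have hxeq : (1:ℝ) - x = 1/2 := by linarith [he']
        rw [hxeq, hmid]
      · exact (hth'neg (1-x) ⟨by linarith [hx.2], by linarith⟩).le
    have hnn : 0 ≤ c (th (1-x)) * (-deriv th (1-x)) :=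
      mul_nonneg (hcpos _).le (by linarith)
    have hsq : (c (th (1-x)) * (-deriv th (1-x))) * (c (th (1-x)) * (-deriv th (1-x)))
        = 2*A*(G (th (1-x)) - G (th (1/2))) := by
      have hpp : p (1-x) * p (1-x) = 2*A*(G (th (1-x)) - G (th (1/2))) := he
      have hpe : p (1-x) = c (th (1-x)) * deriv th (1-x) := rfl
      rw [hpe] at hpp
      linear_combination hpp
    show c (th (1-x)) * deriv f2 x = _
    rw [hder]
    calc c (th (1-x)) * -deriv th (1-x)
        = Real.sqrt ((c (th (1-x)) * -deriv th (1-x)) * (c (th (1-x)) * -deriv th (1-x))) :=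
          (Real.sqrt_mul_self hnn).symm
      _ = _ := by rw [hsq]
  -- apply the key substitution lemma
  have hkey1 := aux_key (F := fun _ : ℝ => (1:ℝ)) hθtlt hApos hccont hGcont continuous_const
    hGposOn th hthd hth'c rfl hth1 hthm.monotoneOn hths hsqrtEn hInt1
  have hkey2 := aux_key (F := fun w => A / g w) hθtlt hApos hccont hGcont hAg
    hGposOn th hthd hth'c rfl hth1 hthm.monotoneOn hths hsqrtEn hInt2
  have hkey3 := aux_key (F := fun w => A / g w) hθtlt hApos hccont hGcont hAg
    hGposOn f2 hf2d hf2'c hf212 hf21 hf2m hf2s hsqrtEn2 hInt2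
  -- evaluate the right-hand sides
  have hkey1' : (∫ z in th (1/2)..θ0,
      (fun _ : ℝ => (1:ℝ)) z * c z / Real.sqrt (2*A*(G z - G (th (1/2))))) = 1/2 := by
    rw [hkey1]
    simp only [intervalIntegral.integral_const, smul_eq_mul, mul_one]
    norm_num
  have hrefl : (∫ x in (1/2:ℝ)..1, A / g (th (1 - x))) = ∫ x in (0:ℝ)..(1/2), A / g (th x) := by
    have hcs := intervalIntegral.integral_comp_sub_left (a := (1/2:ℝ)) (b := 1)
      (fun y => A / g (th y)) 1
    norm_num at hcs
    exact hcs
  have hkey2' : (∫ z in th (1/2)..θ0,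
      (fun w => A / g w) z * c z / Real.sqrt (2*A*(G z - G (th (1/2)))))
      = ∫ x in (1/2:ℝ)..1, A / g (th x) := hkey2
  have hkey3' : (∫ z in th (1/2)..θ0,
      (fun w => A / g w) z * c z / Real.sqrt (2*A*(G z - G (th (1/2)))))
      = ∫ x in (1/2:ℝ)..1, A / g (th (1 - x)) := hkey3
  have hubsplit : ub = 2 * ∫ z in th (1/2)..θ0,
      (fun w => A / g w) z * c z / Real.sqrt (2*A*(G z - G (th (1/2)))) := by
    rw [hubint,
      ← intervalIntegral.integral_add_adjacent_intervals (hgthint 0 (1/2)) (hgthint (1/2) 1),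
      ← hrefl, ← hkey3', ← hkey2']
    ring
  -- final algebra
  set S := Real.sqrt (2*A) with hSdef
  have hS : 0 < S := Real.sqrt_pos.2 (by linarith)
  have hSS : S * S = 2*A := Real.mul_self_sqrt (by linarith)
  have hI1eq : (∫ z in th (1/2)..θ0,
      (fun _ : ℝ => (1:ℝ)) z * c z / Real.sqrt (2*A*(G z - G (th (1/2)))))
      = S⁻¹ * ∫ z in th (1/2)..θ0, c z / Real.sqrt (G z - G (th (1/2))) := by
    rw [← intervalIntegral.integral_const_mul]
    apply intervalIntegral.integral_congr
    intro z _
    show (1:ℝ) * c z / Real.sqrt (2*A*(G z - G (th (1/2))))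
      = S⁻¹ * (c z / Real.sqrt (G z - G (th (1/2))))
    rw [Real.sqrt_mul (by linarith : (0:ℝ) ≤ 2*A), ← hSdef, one_mul]
    simp only [div_eq_mul_inv, mul_inv]
    ring
  have hI2eq : (∫ z in th (1/2)..θ0,
      (fun w => A / g w) z * c z / Real.sqrt (2*A*(G z - G (th (1/2)))))
      = (A * S⁻¹) * ∫ z in th (1/2)..θ0, c z / (g z * Real.sqrt (G z - G (th (1/2)))) := by
    rw [← intervalIntegral.integral_const_mul]
    apply intervalIntegral.integral_congr
    intro z _
    show (A / g z) * c z / Real.sqrt (2*A*(G z - G (th (1/2))))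
      = (A * S⁻¹) * (c z / (g z * Real.sqrt (G z - G (th (1/2)))))
    rw [Real.sqrt_mul (by linarith : (0:ℝ) ≤ 2*A), ← hSdef]
    simp only [div_eq_mul_inv, mul_inv]
    ring
  have hI1val : (∫ z in th (1/2)..θ0, c z / Real.sqrt (G z - G (th (1/2)))) = S / 2 := by
    rw [hI1eq] at hkey1'
    field_simp at hkey1'
    linarith
  constructor
  · have := hGlt _ _ hθtlt
    rw [hGθ0] at this
    exact this
  · rw [hubsplit, hI2eq, hI1val]
    have hAS : A * S⁻¹ = S / 2 := by
      rw [eq_div_iff (by norm_num : (2:ℝ) ≠ 0)]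
      field_simp
      linarith [hSS]
    rw [hAS]
    ring
end

section
/- Let I ⊆ ℝ be an interval and let (u, p, θ, η) : I → ℝ⁴ be C¹ functions satisfying u′ = p/g(θ), p′ = 0, θ′ = η/c(θ)², and η′ = (c′(θ)/c(θ)³)η² + (h(θ)/g(θ))p on I. Then p is constant on I, and the function x ↦ η(x)²/(2c(θ(x))²) − p(x)·G(θ(x)) is constant on I. -/
open Real Set Filter MeasureTheory

private lemma const_of_ordConnected' {I : Set ℝ} (hI : I.OrdConnected) {f : ℝ → ℝ}
    (hf : ∀ x ∈ I, HasDerivAt f 0 x) :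
    ∀ x ∈ I, ∀ y ∈ I, f x = f y := by
  have key : ∀ a ∈ I, ∀ b ∈ I, a ≤ b → f b = f a := by
    intro a ha b hb hab
    have hsub : Icc a b ⊆ I := hI.out ha hb
    exact constant_of_has_deriv_right_zero
      (fun x hx => (hf x (hsub hx)).continuousAt.continuousWithinAt)
      (fun x hx => (hf x (hsub (Ico_subset_Icc_self hx))).hasDerivWithinAt)
      b (right_mem_Icc.mpr hab)
  intro x hx y hy
  rcases le_total x y with hle | hle
  · exact (key x hx y hy hle).symm
  · exact key y hy x hx hle


/-- For a C¹ solution `(u, p, θ, η)` of the first-order stationary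
system on an interval `I`, the function `p` and the Hamiltonian
`η²/(2c(θ)²) − p·G(θ)` are constant on `I`. -/
theorem stmt_11
    (α1 α2 α3 α4 α5 α6 K1 K3 γ1 γ2 Cbar θ0 : ℝ)
    (hγ1 : γ1 = α3 - α2) (hγ2 : γ2 = α6 - α5) (hγ1pos : 0 < γ1)
    (hK1 : 0 < K1) (hK3 : 0 < K3) (hCbar : 0 < Cbar)
    (g h c G : ℝ → ℝ)
    (hg : ∀ θ : ℝ, g θ = α1 * Real.sin θ ^ 2 * Real.cos θ ^ 2
        + (α5 - α2) / 2 * Real.sin θ ^ 2 + (α3 + α6) / 2 * Real.cos θ ^ 2 + α4 / 2)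
    (hh : ∀ θ : ℝ, h θ = (γ1 + γ2 * Real.cos (2 * θ)) / 2)
    (hc : ∀ θ : ℝ, c θ = Real.sqrt (K1 * Real.cos θ ^ 2 + K3 * Real.sin θ ^ 2))
    (hdamp : ∀ θ : ℝ, Cbar ≤ g θ - h θ ^ 2 / γ1 ∧ g θ - h θ ^ 2 / γ1 ≤ g θ)
    (hθ0 : h θ0 ≠ 0)
    (hG : ∀ θ : ℝ, G θ = ∫ s in θ0..θ, h s / g s)
    (hcase : γ2 = γ1 ∨ γ2 = -γ1)
    (I : Set ℝ) (hI : I.OrdConnected)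
    (u p th η : ℝ → ℝ)
    (hode : ∀ x ∈ I,
      HasDerivAt u (p x / g (th x)) x ∧
      HasDerivAt p 0 x ∧
      HasDerivAt th (η x / c (th x) ^ 2) x ∧
      HasDerivAt η (deriv c (th x) / c (th x) ^ 3 * η x ^ 2
        + h (th x) / g (th x) * p x) x) :
    ∀ x ∈ I, ∀ y ∈ I,
      p x = p y ∧
      η x ^ 2 / (2 * c (th x) ^ 2) - p x * G (th x)
        = η y ^ 2 / (2 * c (th y) ^ 2) - p y * G (th y) := by
  have hgpos : ∀ t : ℝ, 0 < g t := by
    intro t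
    rcases hdamp t with ⟨h1, h2⟩
    have : 0 ≤ h t ^ 2 / γ1 := div_nonneg (sq_nonneg _) hγ1pos.le
    linarith
  have hgne : ∀ t : ℝ, g t ≠ 0 := fun t => (hgpos t).ne'
  have hqpos : ∀ t : ℝ, 0 < K1 * Real.cos t ^ 2 + K3 * Real.sin t ^ 2 := by
    intro t
    rcases le_total K1 K3 with hle | hle
    · nlinarith [Real.sin_sq_add_cos_sq t, sq_nonneg (Real.sin t), sq_nonneg (Real.cos t)]
    · nlinarith [Real.sin_sq_add_cos_sq t, sq_nonneg (Real.sin t), sq_nonneg (Real.cos t)]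
  have hcpos : ∀ t : ℝ, 0 < c t := by
    intro t; rw [hc]; exact Real.sqrt_pos.mpr (hqpos t)
  have hgcont : Continuous g := by
    have hge : g = fun t => α1 * Real.sin t ^ 2 * Real.cos t ^ 2
        + (α5 - α2) / 2 * Real.sin t ^ 2 + (α3 + α6) / 2 * Real.cos t ^ 2 + α4 / 2 :=
      funext hg
    rw [hge]; fun_prop
  have hhcont : Continuous h := by
    have hhe : h = fun t => (γ1 + γ2 * Real.cos (2 * t)) / 2 := funext hh
    rw [hhe]; fun_prop
  have hhgcont : Continuous (fun s => h s / g s) := hhcont.div hgcont hgne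
  have hcdiff : ∀ t : ℝ, DifferentiableAt ℝ c t := by
    intro t
    have hce : c = fun t => Real.sqrt (K1 * Real.cos t ^ 2 + K3 * Real.sin t ^ 2) :=
      funext hc
    rw [hce]
    exact DifferentiableAt.sqrt (by fun_prop) (hqpos t).ne'
  have hGderiv : ∀ t : ℝ, HasDerivAt G (h t / g t) t := by
    intro t
    have hGe : G = fun u => ∫ s in θ0..u, h s / g s := funext hG
    rw [hGe]
    exact intervalIntegral.integral_hasDerivAt_right
      (hhgcont.intervalIntegrable θ0 t)
      (hhgcont.stronglyMeasurableAtFilter _ _)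
      hhgcont.continuousAt
  intro x hx y hy
  refine ⟨const_of_ordConnected' hI (fun z hz => (hode z hz).2.1) x hx y hy, ?_⟩
  apply const_of_ordConnected' hI ?_ x hx y hy
  intro z hz
  obtain ⟨hu, hp, hth, hη⟩ := hode z hz
  have hcz := hcpos (th z)
  have hgz := hgpos (th z)
  have hcth : HasDerivAt (fun x => c (th x)) (deriv c (th z) * (η z / c (th z) ^ 2)) z :=
    ((hcdiff (th z)).hasDerivAt).comp z hth
  have hnum : HasDerivAt (fun x => η x ^ 2)
      ((2 : ℕ) * η z ^ 1 * (deriv c (th z) / c (th z) ^ 3 * η z ^ 2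
        + h (th z) / g (th z) * p z)) z := hη.pow 2
  have hden : HasDerivAt (fun x => 2 * c (th x) ^ 2)
      (2 * ((2 : ℕ) * c (th z) ^ 1 * (deriv c (th z) * (η z / c (th z) ^ 2)))) z :=
    (hcth.pow 2).const_mul 2
  have hdne : 2 * c (th z) ^ 2 ≠ 0 := by positivity
  have h1 := hnum.div hden hdne
  have hGt : HasDerivAt (fun x => G (th x))
      (h (th z) / g (th z) * (η z / c (th z) ^ 2)) z := (hGderiv (th z)).comp z hth
  have h2 := hp.mul hGt
  have h3 := h1.sub h2
  convert h3 using 1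
  case e'_4 => rfl
  case e'_5 => rfl
  case e'_8 => rfl
  push_cast
  field_simp
  ring
end

section
/- There exists a constant C > 0, depending only on the coefficients α1,…,α6, K1, K3, γ1 and on θ0, such that for every ε ∈ (0,1), every ū with 0 < ū ≤ ε, and every stationary solution (u, θ) of the boundary value problem: sup_{x∈[0,1]} |u′(x)| ≤ Cε, sup_{x∈[0,1]} |θ′(x)| ≤ Cε, and sup_{x∈[0,1]} |θ″(x)| ≤ Cε. -/
open Real Set Filter MeasureTheory

/-- A stationary solution of the shear-flow boundary value problem: a pair of C²
functions `(u, θ)` satisfying `(g(θ)u′)′ = 0` and `c(θ)(c(θ)θ′)′ − h(θ)u′ = 0` on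
`[0,1]`, with `u(0) = 0`, `u(1) = ū`, `θ(0) = θ(1) = θ0`. -/
def IsStationarySolution (g h c : ℝ → ℝ) (θ0 ub : ℝ) (u th : ℝ → ℝ) : Prop :=
  ContDiff ℝ 2 u ∧ ContDiff ℝ 2 th ∧
  (∀ x ∈ Set.Icc (0:ℝ) 1, deriv (fun y => g (th y) * deriv u y) x = 0) ∧
  (∀ x ∈ Set.Icc (0:ℝ) 1,
    c (th x) * deriv (fun y => c (th y) * deriv th y) x - h (th x) * deriv u x = 0) ∧
  u 0 = 0 ∧ u 1 = ub ∧ th 0 = θ0 ∧ th 1 = θ0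

set_option maxHeartbeats 1000000

private lemma aux_mul_le_abs {β x : ℝ} (hx0 : 0 ≤ x) (hx1 : x ≤ 1) : β * x ≤ |β| :=
  calc β * x ≤ |β| * x := mul_le_mul_of_nonneg_right (le_abs_self β) hx0
  _ ≤ |β| * 1 := mul_le_mul_of_nonneg_left hx1 (abs_nonneg β)
  _ = |β| := mul_one _

/-- Small stationary solutions are uniformly small: there is a
constant `C > 0` (depending only on the coefficients and `θ0`) such that for all
`0 < ū ≤ ε < 1` and every stationary solution `(u, θ)`, the quantities
`|u′|, |θ′|, |θ″|` are bounded by `Cε` on `[0,1]`. -/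
theorem stmt_18
    (α1 α2 α3 α4 α5 α6 K1 K3 γ1 γ2 Cbar θ0 : ℝ)
    (hγ1 : γ1 = α3 - α2) (hγ2 : γ2 = α6 - α5) (hγ1pos : 0 < γ1)
    (hK1 : 0 < K1) (hK3 : 0 < K3) (hCbar : 0 < Cbar)
    (g h c G : ℝ → ℝ)
    (hg : ∀ θ : ℝ, g θ = α1 * Real.sin θ ^ 2 * Real.cos θ ^ 2
        + (α5 - α2) / 2 * Real.sin θ ^ 2 + (α3 + α6) / 2 * Real.cos θ ^ 2 + α4 / 2)
    (hh : ∀ θ : ℝ, h θ = (γ1 + γ2 * Real.cos (2 * θ)) / 2)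
    (hc : ∀ θ : ℝ, c θ = Real.sqrt (K1 * Real.cos θ ^ 2 + K3 * Real.sin θ ^ 2))
    (hdamp : ∀ θ : ℝ, Cbar ≤ g θ - h θ ^ 2 / γ1 ∧ g θ - h θ ^ 2 / γ1 ≤ g θ)
    (hθ0 : h θ0 ≠ 0)
    (hG : ∀ θ : ℝ, G θ = ∫ s in θ0..θ, h s / g s)
    (hcase : γ2 = γ1 ∨ γ2 = -γ1)
    :
    ∃ C : ℝ, 0 < C ∧ ∀ ε : ℝ, 0 < ε → ε < 1 → ∀ ub : ℝ, 0 < ub → ub ≤ ε →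
      ∀ u th : ℝ → ℝ, IsStationarySolution g h c θ0 ub u th →
        ∀ x ∈ Set.Icc (0:ℝ) 1,
          |deriv u x| ≤ C * ε ∧ |deriv th x| ≤ C * ε ∧
          |deriv (deriv th) x| ≤ C * ε := by
  -- basic positivity and bounds for the coefficient functions
  obtain ⟨m, hm⟩ : ∃ m : ℝ, m = min K1 K3 := ⟨_, rfl⟩
  have hmpos : 0 < m := hm ▸ lt_min hK1 hK3
  obtain ⟨cmin, hcmind⟩ : ∃ z : ℝ, z = Real.sqrt m := ⟨_, rfl⟩
  have hcminpos : 0 < cmin := hcmind ▸ Real.sqrt_pos.2 hmpos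
  have hqlb : ∀ θ : ℝ, m ≤ K1 * Real.cos θ ^ 2 + K3 * Real.sin θ ^ 2 := by
    intro θ
    rw [hm]
    have h1 : min K1 K3 * (Real.sin θ ^ 2 + Real.cos θ ^ 2) = min K1 K3 := by
      rw [Real.sin_sq_add_cos_sq, mul_one]
    linarith only [h1,
      mul_nonneg (sub_nonneg.2 (min_le_left K1 K3)) (sq_nonneg (Real.cos θ)),
      mul_nonneg (sub_nonneg.2 (min_le_right K1 K3)) (sq_nonneg (Real.sin θ))]
  have hqpos : ∀ θ : ℝ, 0 < K1 * Real.cos θ ^ 2 + K3 * Real.sin θ ^ 2 :=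
    fun θ => lt_of_lt_of_le hmpos (hqlb θ)
  have hclow : ∀ θ : ℝ, cmin ≤ c θ := by
    intro θ; rw [hc θ, hcmind]; exact Real.sqrt_le_sqrt (hqlb θ)
  have hcpos : ∀ θ : ℝ, 0 < c θ := fun θ => lt_of_lt_of_le hcminpos (hclow θ)
  have hglb : ∀ θ : ℝ, Cbar ≤ g θ := fun θ => (hdamp θ).1.trans (hdamp θ).2
  have hgpos : ∀ θ : ℝ, 0 < g θ := fun θ => hCbar.trans_le (hglb θ)
  obtain ⟨gM, hgM⟩ : ∃ z : ℝ, z = |α1| + |(α5 - α2) / 2| + |(α3 + α6) / 2| + |α4 / 2| + 1 :=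
    ⟨_, rfl⟩
  have hgMpos : 0 < gM := by rw [hgM]; positivity
  have hgub : ∀ θ : ℝ, g θ ≤ gM := by
    intro θ
    rw [hg θ, hgM]
    have hs0 := sq_nonneg (Real.sin θ)
    have hc0 := sq_nonneg (Real.cos θ)
    have hs1 := Real.sin_sq_le_one θ
    have hc1 := Real.cos_sq_le_one θ
    have hsc1 : Real.sin θ ^ 2 * Real.cos θ ^ 2 ≤ 1 := by
      linarith only [mul_nonneg hs0 (sub_nonneg.2 hc1), hs1]
    have t1 : α1 * (Real.sin θ ^ 2 * Real.cos θ ^ 2) ≤ |α1| :=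
      aux_mul_le_abs (mul_nonneg hs0 hc0) hsc1
    have t2 := aux_mul_le_abs (β := (α5 - α2) / 2) hs0 hs1
    have t3 := aux_mul_le_abs (β := (α3 + α6) / 2) hc0 hc1
    have t4 := le_abs_self (α4 / 2)
    linarith only [t1, t2, t3, t4]
  obtain ⟨hM, hhM⟩ : ∃ z : ℝ, z = γ1 / 2 + |γ2| / 2 + 1 := ⟨_, rfl⟩
  have hMpos : 0 < hM := by rw [hhM]; linarith only [abs_nonneg γ2, hγ1pos]
  have habsh : ∀ θ : ℝ, |h θ| ≤ hM := by
    intro θ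
    rw [hh θ, hhM]
    have h1 : |γ2 * Real.cos (2 * θ)| ≤ |γ2| := by
      rw [abs_mul]
      exact mul_le_of_le_one_right (abs_nonneg γ2) (Real.abs_cos_le_one _)
    have h2 := le_abs_self (γ2 * Real.cos (2 * θ))
    have h3 := neg_abs_le (γ2 * Real.cos (2 * θ))
    rw [abs_le]
    constructor <;> linarith only [h1, h2, h3, hγ1pos]
  -- derivative bound for c
  obtain ⟨L, hLd⟩ : ∃ z : ℝ, z = (K1 + K3) / cmin := ⟨_, rfl⟩
  have hLpos : 0 < L := by rw [hLd]; positivity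
  have hderivc : ∀ θ : ℝ, HasDerivAt c
      (1 / (2 * Real.sqrt (K1 * Real.cos θ ^ 2 + K3 * Real.sin θ ^ 2)) *
        (K1 * (2 * Real.cos θ ^ 1 * (-Real.sin θ)) + K3 * (2 * Real.sin θ ^ 1 * Real.cos θ))) θ := by
    intro θ
    have hds : HasDerivAt (fun t : ℝ => K1 * Real.cos t ^ 2 + K3 * Real.sin t ^ 2)
        (K1 * (2 * Real.cos θ ^ 1 * (-Real.sin θ)) + K3 * (2 * Real.sin θ ^ 1 * Real.cos θ)) θ :=
      (((Real.hasDerivAt_cos θ).pow 2).const_mul K1).add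
        (((Real.hasDerivAt_sin θ).pow 2).const_mul K3)
    have hne : K1 * Real.cos θ ^ 2 + K3 * Real.sin θ ^ 2 ≠ 0 := (hqpos θ).ne'
    have h2 := (Real.hasDerivAt_sqrt hne).comp θ hds
    have hceq : c = (fun x : ℝ => Real.sqrt x) ∘
        (fun t : ℝ => K1 * Real.cos t ^ 2 + K3 * Real.sin t ^ 2) := by
      funext t; simp [hc t, Function.comp]
    rw [hceq]
    exact h2
  have hdcbound : ∀ θ : ℝ, |deriv c θ| ≤ L := by
    intro θ
    rw [(hderivc θ).deriv]
    have hsq : cmin ≤ Real.sqrt (K1 * Real.cos θ ^ 2 + K3 * Real.sin θ ^ 2) := by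
      rw [hcmind]; exact Real.sqrt_le_sqrt (hqlb θ)
    have hsqpos : 0 < Real.sqrt (K1 * Real.cos θ ^ 2 + K3 * Real.sin θ ^ 2) :=
      lt_of_lt_of_le hcminpos hsq
    have hcs : |Real.sin θ * Real.cos θ| ≤ 1 := by
      rw [abs_mul]
      exact mul_le_one₀ (Real.abs_sin_le_one θ) (abs_nonneg _) (Real.abs_cos_le_one θ)
    have e : K1 * (2 * Real.cos θ ^ 1 * (-Real.sin θ)) + K3 * (2 * Real.sin θ ^ 1 * Real.cos θ)
        = (2 * (K3 - K1)) * (Real.sin θ * Real.cos θ) := by ring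
    rw [abs_mul, e, abs_mul]
    have h1 : |2 * (K3 - K1)| * |Real.sin θ * Real.cos θ| ≤ |2 * (K3 - K1)| :=
      mul_le_of_le_one_right (abs_nonneg _) hcs
    have h2 : |2 * (K3 - K1)| ≤ 2 * (K1 + K3) := by
      rw [abs_le]; constructor <;> linarith only [hK1, hK3]
    have h3 : |1 / (2 * Real.sqrt (K1 * Real.cos θ ^ 2 + K3 * Real.sin θ ^ 2))|
        = 1 / (2 * Real.sqrt (K1 * Real.cos θ ^ 2 + K3 * Real.sin θ ^ 2)) :=
      abs_of_pos (by positivity)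
    rw [h3]
    have h4 : 1 / (2 * Real.sqrt (K1 * Real.cos θ ^ 2 + K3 * Real.sin θ ^ 2))
        ≤ 1 / (2 * cmin) := by
      apply one_div_le_one_div_of_le (by positivity)
      linarith
    calc 1 / (2 * Real.sqrt (K1 * Real.cos θ ^ 2 + K3 * Real.sin θ ^ 2)) *
          (|2 * (K3 - K1)| * |Real.sin θ * Real.cos θ|)
        ≤ 1 / (2 * cmin) * (2 * (K1 + K3)) := by
          apply mul_le_mul h4 (h1.trans h2) (by positivity) (by positivity)
      _ = L := by rw [hLd, one_div_mul_eq_div, mul_div_mul_left _ _ (two_ne_zero)]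
  -- smoothness of g and c
  have hgC : ContDiff ℝ 1 g := by
    have hgf : g = fun θ : ℝ => α1 * Real.sin θ ^ 2 * Real.cos θ ^ 2
        + (α5 - α2) / 2 * Real.sin θ ^ 2 + (α3 + α6) / 2 * Real.cos θ ^ 2 + α4 / 2 := funext hg
    rw [hgf]
    exact ((((contDiff_const.mul (Real.contDiff_sin.pow 2)).mul (Real.contDiff_cos.pow 2)).add
      (contDiff_const.mul (Real.contDiff_sin.pow 2))).add
      (contDiff_const.mul (Real.contDiff_cos.pow 2))).add contDiff_const
  have hcC : ContDiff ℝ 1 c := by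
    have hcf : c = fun θ : ℝ => Real.sqrt (K1 * Real.cos θ ^ 2 + K3 * Real.sin θ ^ 2) := funext hc
    rw [hcf, contDiff_iff_contDiffAt]
    intro θ
    exact (Real.contDiffAt_sqrt (hqpos θ).ne').comp θ
      (((contDiff_const.mul (Real.contDiff_cos.pow 2)).add
        (contDiff_const.mul (Real.contDiff_sin.pow 2))).contDiffAt)
  -- the constants
  obtain ⟨C1, hC1⟩ : ∃ z : ℝ, z = gM / Cbar := ⟨_, rfl⟩
  have hC1pos : 0 < C1 := by rw [hC1]; positivity
  obtain ⟨BV, hBVd⟩ : ∃ z : ℝ, z = hM * C1 / cmin := ⟨_, rfl⟩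
  have hBVpos : 0 < BV := by rw [hBVd]; positivity
  obtain ⟨C2, hC2⟩ : ∃ z : ℝ, z = BV / cmin := ⟨_, rfl⟩
  have hC2pos : 0 < C2 := by rw [hC2]; positivity
  obtain ⟨C3, hC3⟩ : ∃ z : ℝ, z = (BV + L * C2 ^ 2) / cmin := ⟨_, rfl⟩
  have hC3pos : 0 < C3 := by rw [hC3]; positivity
  refine ⟨C1 + C2 + C3 + 1, by positivity, ?_⟩
  intro ε hε0 hε1 ub hub0 hubε u th hsol x hx
  obtain ⟨hu2, hth2, hODE1, hODE2, hu0, hu1, hth0, hth1⟩ := hsol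
  have hu' : ContDiff ℝ 1 (deriv u) := by
    have h2 : ContDiff ℝ (1 + 1) u := by norm_num; exact hu2
    exact (contDiff_succ_iff_deriv.mp h2).2.2
  have hth' : ContDiff ℝ 1 (deriv th) := by
    have h2 : ContDiff ℝ (1 + 1) th := by norm_num; exact hth2
    exact (contDiff_succ_iff_deriv.mp h2).2.2
  have hth1C : ContDiff ℝ 1 th := hth2.of_le (by norm_num)
  -- Step 1 : g(th)·u' is constant
  have hFC : ContDiff ℝ 1 (fun y => g (th y) * deriv u y) := (hgC.comp hth1C).mul hu'
  have hFdiff : Differentiable ℝ (fun y => g (th y) * deriv u y) := hFC.differentiable one_ne_zero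
  have hFa : ∀ y ∈ Icc (0:ℝ) 1, g (th y) * deriv u y = g (th 0) * deriv u 0 := by
    have := constant_of_has_deriv_right_zero (f := fun y => g (th y) * deriv u y)
      (a := 0) (b := 1) (hFC.continuous.continuousOn)
      (fun y hy => by
        have h0 := hODE1 y (Ico_subset_Icc_self hy)
        have hd := (hFdiff y).hasDerivAt
        rw [h0] at hd
        exact hd.hasDerivWithinAt)
    exact this
  obtain ⟨aa, haa⟩ : ∃ z : ℝ, z = g (th 0) * deriv u 0 := ⟨_, rfl⟩
  have hderivu : ∀ y ∈ Icc (0:ℝ) 1, deriv u y = aa / g (th y) := by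
    intro y hy
    rw [eq_div_iff (hgpos (th y)).ne', haa]
    have h5 := hFa y hy
    linarith only [h5, mul_comm (deriv u y) (g (th y))]
  -- Step 2 : ub = aa * ∫ (g∘th)⁻¹ ; bound aa
  have hcontdu : Continuous (deriv u) := hu'.continuous
  have hFTC : ∫ y in (0:ℝ)..1, deriv u y = u 1 - u 0 :=
    intervalIntegral.integral_deriv_eq_sub
      (fun y _ => (hu2.differentiable (by norm_num)).differentiableAt)
      (hcontdu.intervalIntegrable 0 1)
  have hcontinv : Continuous (fun y => (g (th y))⁻¹) :=
    (hgC.continuous.comp hth1C.continuous).inv₀ (fun y => (hgpos (th y)).ne')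
  have hEq : ∫ y in (0:ℝ)..1, deriv u y = ∫ y in (0:ℝ)..1, aa * (g (th y))⁻¹ := by
    apply intervalIntegral.integral_congr
    intro y hy
    rw [Set.uIcc_of_le (by norm_num : (0:ℝ) ≤ 1)] at hy
    rw [hderivu y hy, div_eq_mul_inv]
  obtain ⟨I, hI⟩ : ∃ z : ℝ, z = ∫ y in (0:ℝ)..1, (g (th y))⁻¹ := ⟨_, rfl⟩
  have hubeq : ub = aa * I := by
    have h1 : ∫ y in (0:ℝ)..1, aa * (g (th y))⁻¹ = aa * I := by
      rw [hI]; exact intervalIntegral.integral_const_mul aa _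
    rw [← h1, ← hEq, hFTC, hu0, hu1, sub_zero]
  have hIlb : gM⁻¹ ≤ I := by
    have hle : ∀ y ∈ Icc (0:ℝ) 1, gM⁻¹ ≤ (g (th y))⁻¹ := by
      intro y _
      exact inv_anti₀ (hgpos (th y)) (hgub (th y))
    have h6 := intervalIntegral.integral_mono_on (μ := volume) (by norm_num : (0:ℝ) ≤ 1)
      (intervalIntegrable_const) (hcontinv.intervalIntegrable 0 1) hle
    rw [hI]
    simpa using h6
  have hIpos : 0 < I := lt_of_lt_of_le (by positivity) hIlb
  have haapos : 0 < aa := by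
    by_contra hcon
    push_neg at hcon
    linarith only [mul_nonneg (neg_nonneg.2 hcon) hIpos.le, hubeq, hub0]
  have haaub : aa ≤ ub * gM := by
    have h1 : aa * gM⁻¹ ≤ aa * I := mul_le_mul_of_nonneg_left hIlb haapos.le
    have h2 : gM * gM⁻¹ = 1 := mul_inv_cancel₀ hgMpos.ne'
    have h10 : aa * (gM * gM⁻¹) = aa := by rw [h2, mul_one]
    have h11 : ub * gM = aa * I * gM := by rw [hubeq]
    linarith only [mul_le_mul_of_nonneg_left h1 hgMpos.le, h10, h11]
  -- bound on |u'|
  have bound1 : ∀ y ∈ Icc (0:ℝ) 1, |deriv u y| ≤ C1 * ε := by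
    intro y hy
    rw [hderivu y hy, abs_of_nonneg (div_nonneg haapos.le (hgpos (th y)).le)]
    calc aa / g (th y) ≤ aa / Cbar :=
          div_le_div_of_nonneg_left haapos.le hCbar (hglb (th y))
      _ ≤ (ε * gM) / Cbar := by
          apply div_le_div₀ (mul_nonneg hε0.le hgMpos.le) ?_ hCbar le_rfl
          linarith only [haaub, mul_le_mul_of_nonneg_right hubε hgMpos.le]
      _ = C1 * ε := by rw [hC1]; ring
  -- Step 3 : Rolle
  obtain ⟨z, hz, hz0⟩ := exists_deriv_eq_zero (f := th) zero_lt_one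
    (hth2.continuous.continuousOn) (hth0.trans hth1.symm)
  -- Step 4 : bound on V = c(th)·th'
  have hVC : ContDiff ℝ 1 (fun y => c (th y) * deriv th y) := (hcC.comp hth1C).mul hth'
  have hVdiff : Differentiable ℝ (fun y => c (th y) * deriv th y) := hVC.differentiable one_ne_zero
  have hdV : ∀ y ∈ Icc (0:ℝ) 1, deriv (fun p => c (th p) * deriv th p) y
      = h (th y) * deriv u y / c (th y) := by
    intro y hy
    rw [eq_div_iff (hcpos (th y)).ne']
    have h7 := hODE2 y hy
    linarith only [h7, mul_comm (deriv (fun p => c (th p) * deriv th p) y) (c (th y))]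
  have hdVbound : ∀ y ∈ Icc (0:ℝ) 1,
      |deriv (fun p => c (th p) * deriv th p) y| ≤ BV * ε := by
    intro y hy
    rw [hdV y hy, abs_div, abs_mul, abs_of_pos (hcpos (th y))]
    have hnum : |h (th y)| * |deriv u y| ≤ hM * (C1 * ε) :=
      mul_le_mul (habsh (th y)) (bound1 y hy) (abs_nonneg _) hMpos.le
    calc |h (th y)| * |deriv u y| / c (th y) ≤ hM * (C1 * ε) / cmin := by
          apply div_le_div₀ (by positivity) hnum hcminpos (hclow (th y))
      _ = BV * ε := by rw [hBVd]; ring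
  have hVb : ∀ y ∈ Icc (0:ℝ) 1, |c (th y) * deriv th y| ≤ BV * ε := by
    intro y hy
    have hmvt := Convex.norm_image_sub_le_of_norm_deriv_le
      (f := fun p => c (th p) * deriv th p) (s := Icc (0:ℝ) 1)
      (fun p _ => hVdiff p)
      (fun p hp => by rw [Real.norm_eq_abs]; exact hdVbound p hp)
      (convex_Icc 0 1) (Ioo_subset_Icc_self hz) hy
    have hVz : c (th z) * deriv th z = 0 := by rw [hz0, mul_zero]
    have hyz : ‖y - z‖ ≤ 1 := by
      rw [Real.norm_eq_abs, abs_le]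
      constructor <;> [linarith only [hy.1, hz.2]; linarith only [hy.2, hz.1]]
    calc |c (th y) * deriv th y|
        = ‖c (th y) * deriv th y - c (th z) * deriv th z‖ := by
          rw [hVz, sub_zero, Real.norm_eq_abs]
      _ ≤ BV * ε * ‖y - z‖ := hmvt
      _ ≤ BV * ε * 1 := mul_le_mul_of_nonneg_left hyz (by positivity)
      _ = BV * ε := mul_one _
  have bound2 : ∀ y ∈ Icc (0:ℝ) 1, |deriv th y| ≤ C2 * ε := by
    intro y hy
    have heq : |deriv th y| = |c (th y) * deriv th y| / c (th y) := by
      rw [abs_mul, abs_of_pos (hcpos (th y)), mul_div_cancel_left₀ _ (hcpos (th y)).ne']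
    rw [heq]
    calc |c (th y) * deriv th y| / c (th y) ≤ BV * ε / cmin := by
          apply div_le_div₀ (by positivity) (hVb y hy) hcminpos (hclow (th y))
      _ = C2 * ε := by rw [hC2]; ring
  -- Step 5 : bound on th''
  have bound3 : ∀ y ∈ Icc (0:ℝ) 1, |deriv (deriv th) y| ≤ C3 * ε := by
    intro y hy
    have hcthdiff : DifferentiableAt ℝ (fun p => c (th p)) y :=
      ((hcC.comp hth1C).differentiable one_ne_zero) y
    have hdthdiff : DifferentiableAt ℝ (deriv th) y := hth'.differentiable one_ne_zero y
    have hmul : deriv (fun p => c (th p) * deriv th p) y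
        = deriv (fun p => c (th p)) y * deriv th y + c (th y) * deriv (deriv th) y :=
      deriv_mul hcthdiff hdthdiff
    have hcomp : deriv (fun p => c (th p)) y = deriv c (th y) * deriv th y := by
      have h8 := deriv_comp y ((hcC.differentiable one_ne_zero) (th y))
        ((hth1C.differentiable one_ne_zero) y)
      exact h8
    have hsnd : deriv (deriv th) y
        = (deriv (fun p => c (th p) * deriv th p) y
            - deriv c (th y) * deriv th y * deriv th y) / c (th y) := by
      rw [eq_div_iff (hcpos (th y)).ne']
      rw [hcomp] at hmul
      linarith only [hmul, mul_comm (deriv (deriv th) y) (c (th y))]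
    obtain ⟨D, hD⟩ : ∃ z : ℝ, z = deriv (fun p => c (th p) * deriv th p) y
        - deriv c (th y) * deriv th y * deriv th y := ⟨_, rfl⟩
    rw [hsnd, ← hD]
    have hX : |deriv c (th y) * deriv th y * deriv th y| ≤ L * (C2 * ε) * (C2 * ε) := by
      rw [abs_mul, abs_mul]
      exact mul_le_mul (mul_le_mul (hdcbound (th y)) (bound2 y hy) (abs_nonneg _) hLpos.le)
        (bound2 y hy) (abs_nonneg _) (by positivity)
    have htri : |D| ≤ BV * ε + L * (C2 * ε) * (C2 * ε) := by
      rw [hD]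
      exact (abs_sub _ _).trans (add_le_add (hdVbound y hy) hX)
    have hε2 : ε * ε ≤ ε := by
      have := mul_le_mul_of_nonneg_left hε1.le hε0.le
      linarith only [this]
    have htri2 : |D| ≤ (BV + L * C2 ^ 2) * ε := by
      have h9 : L * C2 * C2 * (ε * ε) ≤ L * C2 * C2 * ε :=
        mul_le_mul_of_nonneg_left hε2 (by positivity)
      linarith only [htri, h9]
    rw [abs_div, abs_of_pos (hcpos (th y))]
    calc |D| / c (th y) ≤ (BV + L * C2 ^ 2) * ε / cmin :=
          div_le_div₀ (by positivity) htri2 hcminpos (hclow (th y))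
      _ = C3 * ε := by rw [hC3, div_mul_eq_mul_div]
  refine ⟨(bound1 x hx).trans ?_, (bound2 x hx).trans ?_, (bound3 x hx).trans ?_⟩ <;>
    · apply mul_le_mul_of_nonneg_right ?_ hε0.le
      linarith only [hC1pos, hC2pos, hC3pos]
end
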